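/- arXiv:2112.02283 — 4 statements merged into one kernel-verified Lean document; each statement's English description precedes it below -/
import Mathlib

section
/- For every real Banach space X of finite dimension n ≥ 1 there exists a continuous linear isomorphism I : X → ℓ²ₙ onto the n-dimensional Euclidean space ℓ²ₙ such that ‖I‖ · ‖I⁻¹‖ ≤ √n; in particular, the Banach–Mazur distance satisfies d_BM(X, ℓ²ₙ) ≤ √n. -/
open Metric Set

local notation "⟪" x ", " y "⟫" => @inner ℝ _ _ x y

set_option maxHeartbeats 2000000 in
lemma john_aux {F : Type*} [NormedAddCommGroup F] [InnerProductSpace ℝ F]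
    (u : F) (hu : ‖u‖ = 1) (a b d : ℝ) (ha1 : 1 < a) (had : a < d)
    (hb0 : 0 ≤ b) (hba : b ≤ a) (hcon : a ^ 2 + b ^ 2 * (d ^ 2 - 1) ≤ d ^ 2)
    (v : F) (hv : ‖v‖ ≤ 1) :
    ∃ (l σ : ℝ) (z : F), 0 ≤ l ∧ l ≤ 1 ∧ (σ = 1 ∨ σ = -1) ∧ ‖z‖ ≤ 1 ∧
      a • ⟪u, v⟫ • u + b • (v - ⟪u, v⟫ • u)
        = (l * (σ * d)) • u + (1 - l) • z := by
  have hd1 : (1 : ℝ) < d := lt_trans ha1 had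
  set s : ℝ := ⟪u, v⟫ with hs
  set w : F := v - s • u with hwdef
  have huu : ⟪u, u⟫ = 1 := by
    rw [real_inner_self_eq_norm_sq, hu]; norm_num
  have huw : ⟪u, w⟫ = 0 := by
    simp [hwdef, inner_sub_right, real_inner_smul_right, huu, hu, hs]
  have hnv : s ^ 2 + ‖w‖ ^ 2 = ‖v‖ ^ 2 := by
    have hv' : v = s • u + w := by simp [hwdef]
    have := norm_add_sq_real (s • u) w
    rw [← hv'] at this
    rw [this, real_inner_smul_left, huw, norm_smul, hu]
    simp [mul_pow, sq_abs]
  have hts : |s| ≤ 1 := by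
    calc |s| ≤ ‖u‖ * ‖v‖ := abs_real_inner_le_norm u v
    _ ≤ 1 := by rw [hu]; simpa using hv
  set t : ℝ := |s| with ht
  have ht0 : 0 ≤ t := abs_nonneg s
  set σ : ℝ := if 0 ≤ s then 1 else -1 with hσ
  have hσs : σ * t = s := by
    rw [hσ, ht]
    rcases le_or_gt 0 s with h | h
    · rw [if_pos h, abs_of_nonneg h, one_mul]
    · rw [if_neg (not_le.2 h), abs_of_neg h]; ring
  have hσor : σ = 1 ∨ σ = -1 := by by_cases h : 0 ≤ s <;> simp [hσ, h]
  have hw2 : ‖w‖ ^ 2 ≤ 1 - t ^ 2 := by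
    have h1 : t ^ 2 = s ^ 2 := sq_abs s
    have h2 : ‖v‖ ^ 2 ≤ 1 := by nlinarith [norm_nonneg v]
    linarith [hnv, h1.le, h1.ge]
  have hnorm : ∀ c : ℝ, ‖c • u + b • w‖ ^ 2 = c ^ 2 + b ^ 2 * ‖w‖ ^ 2 := by
    intro c
    rw [norm_add_sq_real, real_inner_smul_left, real_inner_smul_right, huw, norm_smul, norm_smul,
      hu]
    simp [mul_pow, sq_abs]
  have hp : a • s • u + b • (v - s • u) = (a * s) • u + b • w := by
    rw [hwdef]; module
  by_cases hcase : t * d ≤ 1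
  · -- small inner product: the point is already in the unit ball
    refine ⟨0, 1, (a * s) • u + b • w, le_refl 0, by norm_num, Or.inl rfl, ?_, by
      rw [hp]; simp⟩
    have h2 : ‖(a * s) • u + b • w‖ ^ 2 ≤ 1 := by
      rw [hnorm]
      have hs2 : (a * s) ^ 2 = a ^ 2 * t ^ 2 := by rw [mul_pow, ← sq_abs s]
      rw [hs2]
      have hd2 : (0:ℝ) < d ^ 2 := by positivity
      have hcc : 0 ≤ d ^ 2 - a ^ 2 - b ^ 2 * (d ^ 2 - 1) := by linarith
      have htd : 0 ≤ 1 - t ^ 2 * d ^ 2 := by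
        nlinarith [mul_nonneg ht0 (by positivity : (0:ℝ) ≤ d)]
      have hab2 : 0 ≤ a ^ 2 - b ^ 2 := by nlinarith
      have P1 : 0 ≤ (a ^ 2 - b ^ 2) * (1 - t ^ 2 * d ^ 2) := mul_nonneg hab2 htd
      have P2 : 0 ≤ b ^ 2 * (1 - t ^ 2 - ‖w‖ ^ 2) :=
        mul_nonneg (sq_nonneg b) (by linarith)
      have P3 : 0 ≤ (d ^ 2 - a ^ 2 - b ^ 2 * (d ^ 2 - 1)) * (1 - t ^ 2 * d ^ 2) :=
        mul_nonneg hcc htd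
      have P4 : 0 ≤ t ^ 2 * (d ^ 2 - a ^ 2 - b ^ 2 * (d ^ 2 - 1)) :=
        mul_nonneg (sq_nonneg t) hcc
      have idt : d ^ 2 * (1 - (a ^ 2 * t ^ 2 + b ^ 2 * ‖w‖ ^ 2)) =
          (a ^ 2 - b ^ 2) * (1 - t ^ 2 * d ^ 2)
          + (d ^ 2 - a ^ 2 - b ^ 2 * (d ^ 2 - 1)) * (1 - t ^ 2 * d ^ 2)
          + d ^ 2 * (t ^ 2 * (d ^ 2 - a ^ 2 - b ^ 2 * (d ^ 2 - 1)))
          + d ^ 2 * (b ^ 2 * (1 - t ^ 2 - ‖w‖ ^ 2)) := by ring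
      have hnn : 0 ≤ d ^ 2 * (1 - (a ^ 2 * t ^ 2 + b ^ 2 * ‖w‖ ^ 2)) := by
        rw [idt]
        have := add_nonneg (add_nonneg (add_nonneg P1 P3) (mul_nonneg hd2.le P4))
          (mul_nonneg hd2.le P2)
        linarith
      have := (mul_nonneg_iff_of_pos_left hd2).mp hnn
      linarith
    nlinarith [norm_nonneg ((a * s) • u + b • w)]
  · push_neg at hcase
    have hden : (0 : ℝ) < d ^ 2 - 1 := by nlinarith
    set l : ℝ := (a * t * d - 1) / (d ^ 2 - 1) with hl
    have hld : l * (d ^ 2 - 1) = a * t * d - 1 := div_mul_cancel₀ _ (ne_of_gt hden)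
    have hl0 : 0 ≤ l := by
      apply div_nonneg _ (le_of_lt hden)
      nlinarith
    have hl1 : l < 1 := by
      rw [hl, div_lt_one hden]
      nlinarith
    have hl1' : (0:ℝ) < 1 - l := by linarith
    refine ⟨l, σ, (1 - l)⁻¹ • ((a * s) • u + b • w - (l * (σ * d)) • u), hl0, le_of_lt hl1,
      hσor, ?_, ?_⟩
    · rw [norm_smul, Real.norm_eq_abs, abs_of_nonneg (inv_nonneg.2 (le_of_lt hl1')),
        inv_mul_le_iff₀ hl1', mul_one]
      have hrw : (a * s) • u + b • w - (l * (σ * d)) • u = (a * s - l * (σ * d)) • u + b • w := by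
        module
      rw [hrw]
      have hsq : (a * s - l * (σ * d)) ^ 2 = (a * t - l * d) ^ 2 := by
        have h : a * s - l * (σ * d) = σ * (a * t - l * d) := by
          rw [← hσs]
          rcases hσor with h | h <;> rw [h] <;> ring
        rw [h, mul_pow]
        rcases hσor with h | h <;> rw [h] <;> ring
      have key : ((a * t) ^ 2 + b ^ 2 * ‖w‖ ^ 2 - 1) * (d ^ 2 - 1) ≤ (a * t * d - 1) ^ 2 := by
        have P1 : 0 ≤ (d ^ 2 - a ^ 2 - b ^ 2 * (d ^ 2 - 1)) * (1 - t ^ 2) := by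
          apply mul_nonneg
          · linarith
          · nlinarith
        have P2 : 0 ≤ b ^ 2 * (1 - t ^ 2 - ‖w‖ ^ 2) * (d ^ 2 - 1) := by
          apply mul_nonneg _ (le_of_lt hden)
          nlinarith
        nlinarith [P1, P2, sq_nonneg (a - t * d)]
      have e2 : ((a * t) ^ 2 + b ^ 2 * ‖w‖ ^ 2 - 1) ≤ l * (a * t * d - 1) := by
        have e1 : (a * t * d - 1) ^ 2 = (l * (a * t * d - 1)) * (d ^ 2 - 1) := by
          linear_combination ((1 : ℝ) - a * t * d) * hld
        rw [e1] at key
        exact le_of_mul_le_mul_right key hden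
      have hld2 : l * l * (d ^ 2 - 1) = l * (a * t * d - 1) := by
        rw [mul_assoc, hld]
      have hfin : (a * t - l * d) ^ 2 + b ^ 2 * ‖w‖ ^ 2 ≤ (1 - l) ^ 2 := by
        nlinarith [hld, hld2, e2]
      have h2 : ‖(a * s - l * (σ * d)) • u + b • w‖ ^ 2 ≤ (1 - l) ^ 2 := by
        rw [hnorm, hsq]; exact hfin
      nlinarith [norm_nonneg ((a * s - l * (σ * d)) • u + b • w), hl1']
    · rw [hp, smul_inv_smul₀ (ne_of_gt hl1')]
      module

lemma john_detA {n : ℕ} (hn : 0 < n) (u : EuclideanSpace ℝ (Fin n)) (hu : ‖u‖ = 1) (a b : ℝ) :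
    LinearMap.det
      (((b • ContinuousLinearMap.id ℝ (EuclideanSpace ℝ (Fin n))
        + (a - b) • ((innerSL ℝ u).smulRight u)) :
          EuclideanSpace ℝ (Fin n) →L[ℝ] EuclideanSpace ℝ (Fin n)) :
        EuclideanSpace ℝ (Fin n) →ₗ[ℝ] EuclideanSpace ℝ (Fin n)) = a * b ^ (n - 1) := by
  haveI : NeZero n := ⟨hn.ne'⟩
  have hv : Orthonormal ℝ (Set.restrict ({0} : Set (Fin n)) (fun _ : Fin n => u)) := by
    constructor
    · intro i; exact hu
    · intro i j hij
      exact absurd (Subtype.ext (by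
        have hi := i.2; have hj := j.2
        simp only [Set.mem_singleton_iff] at hi hj
        rw [hi, hj])) hij
  obtain ⟨B, hB⟩ := hv.exists_orthonormalBasis_extension_of_card_eq
    (by simp)
  have hB0 : B 0 = u := hB 0 rfl
  have hiB : ∀ i j : Fin n, ⟪B i, B j⟫ = if i = j then (1:ℝ) else 0 := fun i j => by
    rcases eq_or_ne i j with h | h
    · subst h
      rw [if_pos rfl, real_inner_self_eq_norm_sq, B.orthonormal.1 i]
      norm_num
    · simp [h, B.orthonormal.2 h]
  set A : EuclideanSpace ℝ (Fin n) →L[ℝ] EuclideanSpace ℝ (Fin n) :=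
    b • ContinuousLinearMap.id ℝ (EuclideanSpace ℝ (Fin n)) + (a - b) • ((innerSL ℝ u).smulRight u)
    with hA
  have hAB : ∀ j : Fin n, A (B j) = (if j = 0 then a else b) • B j := by
    intro j
    have : ⟪u, B j⟫ = if j = 0 then (1:ℝ) else 0 := by
      rw [← hB0]
      rw [hiB 0 j]
      simp [eq_comm]
    simp only [hA, ContinuousLinearMap.add_apply, ContinuousLinearMap.smul_apply,
      ContinuousLinearMap.id_apply, ContinuousLinearMap.smulRight_apply, innerSL_apply_apply]
    rw [this]
    rcases eq_or_ne j 0 with h | h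
    · subst h; rw [if_pos rfl, if_pos rfl, hB0]; module
    · rw [if_neg h, if_neg h]; simp
  rw [← LinearMap.det_toMatrix B.toBasis]
  have hM : LinearMap.toMatrix B.toBasis B.toBasis
        (A : EuclideanSpace ℝ (Fin n) →ₗ[ℝ] EuclideanSpace ℝ (Fin n))
      = Matrix.diagonal (fun i : Fin n => if i = 0 then a else b) := by
    ext i j
    rw [LinearMap.toMatrix_apply]
    simp only [OrthonormalBasis.coe_toBasis, ContinuousLinearMap.coe_coe]
    rw [hAB j, map_smul, ← OrthonormalBasis.coe_toBasis B, Module.Basis.repr_self,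
      Finsupp.smul_single, smul_eq_mul, mul_one, Finsupp.single_apply]
    rcases eq_or_ne i j with h | h
    · subst h; rw [Matrix.diagonal_apply_eq, if_pos rfl]
    · rw [Matrix.diagonal_apply_ne _ h, if_neg (Ne.symm h)]
  rw [hM, Matrix.det_diagonal]
  rw [← Finset.mul_prod_erase Finset.univ _ (Finset.mem_univ (0 : Fin n)), if_pos rfl]
  congr 1
  rw [Finset.prod_congr rfl (fun i hi => if_neg (Finset.mem_erase.1 hi).1), Finset.prod_const,
    Finset.card_erase_of_mem (Finset.mem_univ _), Finset.card_univ, Fintype.card_fin]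

lemma john_amgm {n : ℕ} (hn : 2 ≤ n) {D : ℝ} (hD : (n : ℝ) < D) :
    1 < (D / n) * (D * ((n : ℝ) - 1) / (n * (D - 1))) ^ (n - 1) := by
  have hn1 : (1 : ℝ) ≤ (n : ℝ) - 1 := by
    have : (2 : ℝ) ≤ n := by exact_mod_cast hn
    linarith
  have hnpos : (0 : ℝ) < n := by linarith
  have hD1 : (1 : ℝ) < D := by linarith
  set x : ℝ := (D - 1) / ((n : ℝ) - 1) with hx
  have hx1 : 1 < x := by
    rw [hx, lt_div_iff₀ (by linarith)]
    linarith
  have hx0 : (0 : ℝ) < x := lt_trans one_pos hx1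
  -- strict concavity of log gives log (D/n) > ((n-1)/n) * log x
  have hkey : ((n : ℝ) - 1) / n * Real.log x < Real.log (D / n) := by
    have hw1 : (0 : ℝ) < ((n : ℝ) - 1) / n := by positivity
    have hw2 : (0 : ℝ) < 1 / (n : ℝ) := by positivity
    have hsum : ((n : ℝ) - 1) / n + 1 / n = 1 := by field_simp; ring
    have hmem1 : x ∈ Set.Ioi (0:ℝ) := hx0
    have hmem2 : (1:ℝ) ∈ Set.Ioi (0:ℝ) := Set.mem_Ioi.2 one_pos
    have := strictConcaveOn_log_Ioi.2 hmem1 hmem2 (ne_of_gt hx1) hw1 hw2 hsum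
    simp only [smul_eq_mul, Real.log_one, mul_zero, add_zero, mul_one] at this
    have hcomb : ((n : ℝ) - 1) / n * x + 1 / (n : ℝ) = D / n := by
      rw [hx]
      field_simp
      ring
    rw [hcomb] at this
    exact this
  have hpow : x ^ (n - 1) < (D / n) ^ n := by
    have hlog : Real.log (x ^ (n - 1)) < Real.log ((D / n) ^ n) := by
      rw [Real.log_pow, Real.log_pow]
      have hc1 : ((n - 1 : ℕ) : ℝ) = (n : ℝ) - 1 :=
        Nat.cast_pred (by omega)
      rw [hc1]
      calc ((n:ℝ) - 1) * Real.log x = n * (((n:ℝ) - 1) / n * Real.log x) := by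
            field_simp
        _ < n * Real.log (D / n) := by
            apply mul_lt_mul_of_pos_left hkey hnpos
    have h1 : (0:ℝ) < x ^ (n - 1) := by positivity
    have h2 : (0:ℝ) < (D / n) ^ n := by positivity
    exact (Real.log_lt_log_iff h1 h2).1 hlog
  have hxe : D * ((n : ℝ) - 1) / (n * (D - 1)) = (D / n) / x := by
    rw [hx]
    field_simp
    try ring
  have h1 : (0:ℝ) < x ^ (n - 1) := by positivity
  rw [hxe, div_pow, ← mul_div_assoc, lt_div_iff₀ h1, one_mul,
    mul_pow_sub_one (by omega : n ≠ 0)]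
  exact hpow

open Module in
lemma john_dim_one (X : Type*) [NormedAddCommGroup X] [NormedSpace ℝ X]
    [FiniteDimensional ℝ X] (hdim : Module.finrank ℝ X = 1) :
    ∃ I : X ≃L[ℝ] EuclideanSpace ℝ (Fin 1),
      ‖(I : X →L[ℝ] EuclideanSpace ℝ (Fin 1))‖ *
        ‖(I.symm : EuclideanSpace ℝ (Fin 1) →L[ℝ] X)‖ ≤ 1 := by
  have e : X ≃L[ℝ] EuclideanSpace ℝ (Fin 1) :=
    ContinuousLinearEquiv.ofFinrankEq (by rw [hdim, finrank_euclideanSpace]; simp)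
  haveI : Nontrivial X := nontrivial_of_finrank_pos (by omega : 0 < finrank ℝ X)
  obtain ⟨x₀, hx₀⟩ := exists_ne (0 : X)
  have hex₀ : e x₀ ≠ 0 := fun h => hx₀ (by simpa using congrArg e.symm h)
  have hn₀ : (0:ℝ) < ‖x₀‖ := norm_pos_iff.2 hx₀
  have hne₀ : (0:ℝ) < ‖e x₀‖ := norm_pos_iff.2 hex₀
  set c : ℝ := ‖e x₀‖ / ‖x₀‖ with hc
  have hcpos : 0 < c := div_pos hne₀ hn₀
  have key : ∀ x : X, ‖e x‖ = c * ‖x‖ := by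
    intro x
    obtain ⟨t, ht⟩ := (finrank_eq_one_iff_of_nonzero' x₀ hx₀).1 hdim x
    rw [← ht, map_smul, norm_smul, norm_smul, hc]
    field_simp
  refine ⟨e, ?_⟩
  have h1 : ‖(e : X →L[ℝ] EuclideanSpace ℝ (Fin 1))‖ ≤ c :=
    ContinuousLinearMap.opNorm_le_bound _ hcpos.le fun x => le_of_eq (key x)
  have h2 : ‖(e.symm : EuclideanSpace ℝ (Fin 1) →L[ℝ] X)‖ ≤ c⁻¹ := by
    apply ContinuousLinearMap.opNorm_le_bound _ (inv_nonneg.2 hcpos.le)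
    intro y
    have h := key (e.symm y)
    rw [e.apply_symm_apply] at h
    rw [h]
    field_simp
    exact le_rfl
  calc ‖(e : X →L[ℝ] EuclideanSpace ℝ (Fin 1))‖ *
        ‖(e.symm : EuclideanSpace ℝ (Fin 1) →L[ℝ] X)‖
      ≤ c * c⁻¹ := mul_le_mul h1 h2 (norm_nonneg _) hcpos.le
    _ = 1 := mul_inv_cancel₀ hcpos.ne'

set_option maxHeartbeats 2000000 in
/-- John's theorem: every `n`-dimensional real Banach space (`n ≥ 1`) admits a continuous
linear isomorphism `I` onto the Euclidean space `ℓ²ₙ` with `‖I‖ · ‖I⁻¹‖ ≤ √n`; in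
particular the Banach–Mazur distance to `ℓ²ₙ` is at most `√n`. -/
theorem john_theorem (X : Type*) [NormedAddCommGroup X] [NormedSpace ℝ X]
    [FiniteDimensional ℝ X] (n : ℕ) (hn : 1 ≤ n) (hdim : Module.finrank ℝ X = n) :
    ∃ I : X ≃L[ℝ] EuclideanSpace ℝ (Fin n),
      ‖(I : X →L[ℝ] EuclideanSpace ℝ (Fin n))‖ *
        ‖(I.symm : EuclideanSpace ℝ (Fin n) →L[ℝ] X)‖ ≤ Real.sqrt n := by
  classical
  rcases eq_or_lt_of_le hn with h1 | h2
  · -- n = 1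
    obtain ⟨I, hI⟩ := john_dim_one X (by omega)
    subst h1
    exact ⟨I, by simpa using hI⟩
  · -- 2 ≤ n
    have hn2 : 2 ≤ n := h2
    haveI : NeZero n := ⟨by omega⟩
    have e : X ≃L[ℝ] EuclideanSpace ℝ (Fin n) :=
      ContinuousLinearEquiv.ofFinrankEq (by rw [hdim, finrank_euclideanSpace]; simp)
    have hfr : Module.finrank ℝ (EuclideanSpace ℝ (Fin n)) = n := by
      rw [finrank_euclideanSpace]; simp
    -- the determinant functional
    set D : (EuclideanSpace ℝ (Fin n) →L[ℝ] X) → ℝ :=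
      fun T => ((e : X →L[ℝ] EuclideanSpace ℝ (Fin n)).comp T).det with hD
    have hDcont : Continuous D :=
      ContinuousLinearMap.continuous_det.comp
        ((ContinuousLinearMap.compL ℝ (EuclideanSpace ℝ (Fin n)) X (EuclideanSpace ℝ (Fin n))
          (e : X →L[ℝ] EuclideanSpace ℝ (Fin n))).continuous)
    set S : Set (EuclideanSpace ℝ (Fin n) →L[ℝ] X) := closedBall 0 1 with hS
    have hSc : IsCompact S := isCompact_closedBall _ _
    have hSne : S.Nonempty := ⟨0, mem_closedBall_self zero_le_one⟩
    obtain ⟨T₀, hT₀S, hmax⟩ :=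
      hSc.exists_isMaxOn hSne ((continuous_abs.comp hDcont).continuousOn)
    have hmax' : ∀ T ∈ S, |D T| ≤ |D T₀| := fun T hT => hmax hT
    have hT0norm : ‖T₀‖ ≤ 1 := by rwa [← mem_closedBall_zero_iff]
    -- a nondegenerate element of S
    have hesne : (e.symm : EuclideanSpace ℝ (Fin n) →L[ℝ] X) ≠ 0 := by
      intro h
      have hv : (EuclideanSpace.single (0 : Fin n) (1:ℝ)) ≠ 0 := by
        intro hv0
        have := congrArg (fun f => f (0 : Fin n)) hv0
        simp [EuclideanSpace.single_apply] at this
      apply hv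
      have h0 : e.symm (EuclideanSpace.single (0 : Fin n) (1:ℝ)) = 0 := by
        rw [show e.symm (EuclideanSpace.single (0 : Fin n) (1:ℝ))
            = (e.symm : EuclideanSpace ℝ (Fin n) →L[ℝ] X)
              (EuclideanSpace.single (0 : Fin n) (1:ℝ)) from rfl, h]
        simp
      have := congrArg e h0
      simpa using this
    have hesn : (0:ℝ) < ‖(e.symm : EuclideanSpace ℝ (Fin n) →L[ℝ] X)‖ := by
      rw [norm_pos_iff]; exact hesne
    set c : ℝ := ‖(e.symm : EuclideanSpace ℝ (Fin n) →L[ℝ] X)‖⁻¹ with hc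
    have hcpos : 0 < c := inv_pos.2 hesn
    have hTcS : c • (e.symm : EuclideanSpace ℝ (Fin n) →L[ℝ] X) ∈ S := by
      rw [hS, mem_closedBall_zero_iff]
      calc ‖c • (e.symm : EuclideanSpace ℝ (Fin n) →L[ℝ] X)‖
          ≤ ‖c‖ * ‖(e.symm : EuclideanSpace ℝ (Fin n) →L[ℝ] X)‖ :=
            ContinuousLinearMap.opNorm_smul_le c _
        _ = 1 := by
            rw [Real.norm_eq_abs, abs_of_pos hcpos, hc, inv_mul_cancel₀ hesn.ne']
    have hDc : D (c • (e.symm : EuclideanSpace ℝ (Fin n) →L[ℝ] X)) = c ^ n := by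
      simp only [hD]
      have hcomp : (e : X →L[ℝ] EuclideanSpace ℝ (Fin n)).comp
          (c • (e.symm : EuclideanSpace ℝ (Fin n) →L[ℝ] X))
          = c • ContinuousLinearMap.id ℝ (EuclideanSpace ℝ (Fin n)) := by
        ext v
        simp
      rw [hcomp]
      show LinearMap.det _ = _
      rw [ContinuousLinearMap.coe_smul, ContinuousLinearMap.coe_id, LinearMap.det_smul, hfr]
      simp
    have hD₀pos : 0 < |D T₀| := by
      have h1 : |D (c • (e.symm : EuclideanSpace ℝ (Fin n) →L[ℝ] X))| = c ^ n := by
        rw [hDc, abs_of_pos (pow_pos hcpos n)]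
      have h2 := hmax' _ hTcS
      rw [h1] at h2
      exact lt_of_lt_of_le (pow_pos hcpos n) h2
    -- T₀ is invertible
    have hdet0 : ((e : X →L[ℝ] EuclideanSpace ℝ (Fin n)).comp T₀).det ≠ 0 := by
      intro h
      simp only [hD, h, abs_zero] at hD₀pos
      exact lt_irrefl 0 hD₀pos
    set Feq : EuclideanSpace ℝ (Fin n) ≃L[ℝ] EuclideanSpace ℝ (Fin n) :=
      ((e : X →L[ℝ] EuclideanSpace ℝ (Fin n)).comp T₀).toContinuousLinearEquivOfDetNeZero hdet0
      with hFeq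
    set Teq : EuclideanSpace ℝ (Fin n) ≃L[ℝ] X := Feq.trans e.symm with hTeq
    have hTeqc : ∀ v, Teq v = T₀ v := by
      intro v
      rw [hTeq]
      show e.symm (Feq v) = T₀ v
      rw [hFeq, ContinuousLinearMap.toContinuousLinearEquivOfDetNeZero_apply]
      simp
    -- the key bound
    have key : ∀ x : X, ‖x‖ ≤ 1 → ‖Teq.symm x‖ ≤ Real.sqrt n := by
      intro x hx
      by_contra hcon
      push_neg at hcon
      set d : ℝ := ‖Teq.symm x‖ with hd
      have hdsq : (n:ℝ) < d ^ 2 := by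
        have h1 : Real.sqrt n ^ 2 = (n:ℝ) := Real.sq_sqrt (Nat.cast_nonneg n)
        have h2 : Real.sqrt n ^ 2 < d ^ 2 :=
          pow_lt_pow_left₀ hcon (Real.sqrt_nonneg n) two_ne_zero
        linarith
      have hnR : (2:ℝ) ≤ (n:ℝ) := by exact_mod_cast hn2
      have hd0 : 0 < d := (Real.sqrt_nonneg n).trans_lt hcon
      have hd1 : 1 < d := by nlinarith
      obtain ⟨u, hu⟩ : ∃ u : EuclideanSpace ℝ (Fin n), u = d⁻¹ • Teq.symm x := ⟨_, rfl⟩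
      have hu1 : ‖u‖ = 1 := by
        rw [hu, norm_smul, Real.norm_eq_abs, abs_of_pos (inv_pos.2 hd0), ← hd,
          inv_mul_cancel₀ hd0.ne']
      have hdux : Teq (d • u) = x := by
        rw [hu, smul_inv_smul₀ hd0.ne', ContinuousLinearEquiv.apply_symm_apply]
      -- parameters of the stretched ellipsoid
      set a : ℝ := Real.sqrt (d ^ 2 / n) with ha
      set b : ℝ := Real.sqrt (d ^ 2 * ((n:ℝ) - 1) / (n * (d ^ 2 - 1))) with hb
      have hnpos : (0:ℝ) < n := by linarith
      have ha2 : a ^ 2 = d ^ 2 / n := Real.sq_sqrt (by positivity)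
      have hb2 : b ^ 2 = d ^ 2 * ((n:ℝ) - 1) / (n * (d ^ 2 - 1)) := by
        apply Real.sq_sqrt
        apply div_nonneg
        · nlinarith
        · nlinarith
      have ha0 : 0 ≤ a := Real.sqrt_nonneg _
      have hb0 : 0 ≤ b := Real.sqrt_nonneg _
      have ha1 : 1 < a := by
        have h1 : (1:ℝ) < d ^ 2 / n := by
          rw [lt_div_iff₀ hnpos]; linarith
        nlinarith
      have had : a < d := by
        have h1 : a ^ 2 < d ^ 2 := by
          rw [ha2, div_lt_iff₀ hnpos]; nlinarith
        nlinarith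
      have hba : b ≤ a := by
        have h1 : b ^ 2 ≤ a ^ 2 := by
          rw [ha2, hb2, div_le_div_iff₀ (by nlinarith) hnpos]
          have h3 : ((n:ℝ) - 1) ≤ d ^ 2 - 1 := by linarith
          nlinarith [mul_le_mul_of_nonneg_left h3 (by positivity : (0:ℝ) ≤ d ^ 2 * n)]
        nlinarith
      have hconstr : a ^ 2 + b ^ 2 * (d ^ 2 - 1) ≤ d ^ 2 := by
        rw [ha2, hb2]
        have hden : (n:ℝ) * (d ^ 2 - 1) ≠ 0 := by nlinarith
        have : d ^ 2 * ((n:ℝ) - 1) / (n * (d ^ 2 - 1)) * (d ^ 2 - 1)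
            = d ^ 2 * ((n:ℝ) - 1) / n := by
          rw [div_mul_eq_mul_div, mul_div_mul_right _ _ (by nlinarith : (0:ℝ) < d ^ 2 - 1).ne']
        rw [this]
        rw [← add_div, div_le_iff₀ hnpos]
        ring_nf
        nlinarith
      have hdetA1 : 1 < a * b ^ (n - 1) := by
        have hamgm := john_amgm hn2 hdsq
        have hsq : (a * b ^ (n - 1)) ^ 2
            = (d ^ 2 / n) * (d ^ 2 * ((n:ℝ) - 1) / (n * (d ^ 2 - 1))) ^ (n - 1) := by
          rw [mul_pow, ← ha2, ← hb2]
          ring_nf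
        nlinarith [mul_nonneg ha0 (pow_nonneg hb0 (n-1))]
      -- the stretching map
      set A : EuclideanSpace ℝ (Fin n) →L[ℝ] EuclideanSpace ℝ (Fin n) :=
        b • ContinuousLinearMap.id ℝ (EuclideanSpace ℝ (Fin n))
          + (a - b) • ((innerSL ℝ u).smulRight u) with hA
      have hdetA : LinearMap.det
          ((A : EuclideanSpace ℝ (Fin n) →L[ℝ] EuclideanSpace ℝ (Fin n)) :
            EuclideanSpace ℝ (Fin n) →ₗ[ℝ] EuclideanSpace ℝ (Fin n)) = a * b ^ (n - 1) :=
        john_detA (by omega) u hu1 a b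
      -- T₀ ∘ A is in S
      have hT₁S : T₀.comp A ∈ S := by
        rw [hS, mem_closedBall_zero_iff]
        apply ContinuousLinearMap.opNorm_le_bound _ zero_le_one
        intro v
        rw [one_mul]
        have main : ∀ v' : EuclideanSpace ℝ (Fin n), ‖v'‖ ≤ 1 → ‖T₀ (A v')‖ ≤ 1 := by
          intro v' hv'
          obtain ⟨l, σ, z, hl0, hl1, hσor, hz, heq⟩ :=
            john_aux u hu1 a b d ha1 had hb0 hba hconstr v' hv'
          have hAv : A v' = (l * (σ * d)) • u + (1 - l) • z := by
            rw [← heq, hA]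
            simp only [ContinuousLinearMap.add_apply, ContinuousLinearMap.smul_apply,
              ContinuousLinearMap.id_apply, ContinuousLinearMap.smulRight_apply,
              innerSL_apply_apply]
            module
          have hT₀du : T₀ (d • u) = x := by rw [← hTeqc, hdux]
          have hdT₀u : d • T₀ u = x := by rw [← map_smul]; exact hT₀du
          have hTAv : T₀ (A v') = (l * σ) • x + (1 - l) • T₀ z := by
            rw [hAv, map_add, map_smul, map_smul, ← hdT₀u]
            module
          rw [hTAv]
          calc ‖(l * σ) • x + (1 - l) • T₀ z‖
              ≤ ‖(l * σ) • x‖ + ‖(1 - l) • T₀ z‖ := norm_add_le _ _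
            _ = |l * σ| * ‖x‖ + |1 - l| * ‖T₀ z‖ := by
                rw [norm_smul, norm_smul, Real.norm_eq_abs, Real.norm_eq_abs]
            _ ≤ l * 1 + (1 - l) * 1 := by
                apply add_le_add
                · have hσa : |σ| = 1 := by rcases hσor with h | h <;> rw [h] <;> norm_num
                  rw [abs_mul, hσa, mul_one, abs_of_nonneg hl0]
                  exact mul_le_mul_of_nonneg_left hx hl0
                · rw [abs_of_nonneg (by linarith)]
                  apply mul_le_mul_of_nonneg_left _ (by linarith)
                  calc ‖T₀ z‖ ≤ ‖T₀‖ * ‖z‖ := T₀.le_opNorm z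
                    _ ≤ 1 * 1 := mul_le_mul hT0norm hz (norm_nonneg z) zero_le_one
                    _ = 1 := one_mul 1
            _ = 1 := by ring
        rcases eq_or_ne v 0 with rfl | hv0
        · simp
        · have hnv : (0:ℝ) < ‖v‖ := norm_pos_iff.2 hv0
          have hv' : ‖(‖v‖⁻¹ • v : EuclideanSpace ℝ (Fin n))‖ ≤ 1 := by
            rw [norm_smul, Real.norm_eq_abs, abs_of_pos (inv_pos.2 hnv),
              inv_mul_cancel₀ hnv.ne']
          have := main (‖v‖⁻¹ • v) hv'
          rw [map_smul, map_smul, norm_smul, Real.norm_eq_abs,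
            abs_of_pos (inv_pos.2 hnv), inv_mul_le_iff₀ hnv, mul_one] at this
          rw [ContinuousLinearMap.comp_apply]
          exact this
      -- the determinant of T₀ ∘ A is too big: contradiction
      have hDT₁ : |D (T₀.comp A)| = |D T₀| * (a * b ^ (n - 1)) := by
        simp only [hD]
        have hdc : ((e : X →L[ℝ] EuclideanSpace ℝ (Fin n)).comp (T₀.comp A)).det
            = ((e : X →L[ℝ] EuclideanSpace ℝ (Fin n)).comp T₀).det
              * LinearMap.det
                ((A : EuclideanSpace ℝ (Fin n) →L[ℝ] EuclideanSpace ℝ (Fin n)) :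
                  EuclideanSpace ℝ (Fin n) →ₗ[ℝ] EuclideanSpace ℝ (Fin n)) := by
          show LinearMap.det _ = _
          rw [← ContinuousLinearMap.comp_assoc, ContinuousLinearMap.toLinearMap_comp,
            LinearMap.det_comp]
        rw [hdc, hdetA, abs_mul, abs_of_pos (lt_trans one_pos hdetA1)]
      have hcontr := hmax' _ hT₁S
      rw [hDT₁] at hcontr
      nlinarith [hD₀pos, hdetA1, hcontr]
    -- assemble the final result
    refine ⟨Teq.symm, ?_⟩
    have hnorm1 : ‖(Teq.symm : X →L[ℝ] EuclideanSpace ℝ (Fin n))‖ ≤ Real.sqrt n := by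
      apply ContinuousLinearMap.opNorm_le_bound _ (Real.sqrt_nonneg n)
      intro x
      simp only [ContinuousLinearEquiv.coe_coe]
      rcases eq_or_ne x 0 with rfl | hx0
      · simp [Real.sqrt_nonneg]
      · have hnx : (0:ℝ) < ‖x‖ := norm_pos_iff.2 hx0
        have h1 : ‖(‖x‖⁻¹ • x : X)‖ ≤ 1 := by
          rw [norm_smul, Real.norm_eq_abs, abs_of_pos (inv_pos.2 hnx),
            inv_mul_cancel₀ hnx.ne']
        have h2 := key (‖x‖⁻¹ • x) h1
        rw [map_smul, norm_smul, Real.norm_eq_abs, abs_of_pos (inv_pos.2 hnx),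
          inv_mul_le_iff₀ hnx, mul_comm] at h2
        exact h2
    have hnorm2 : ‖((Teq.symm).symm : EuclideanSpace ℝ (Fin n) →L[ℝ] X)‖ ≤ 1 := by
      rw [ContinuousLinearEquiv.symm_symm]
      apply ContinuousLinearMap.opNorm_le_bound _ zero_le_one
      intro v
      simp only [ContinuousLinearEquiv.coe_coe]
      rw [hTeqc]
      calc ‖T₀ v‖ ≤ ‖T₀‖ * ‖v‖ := T₀.le_opNorm v
        _ ≤ 1 * ‖v‖ := mul_le_mul_of_nonneg_right hT0norm (norm_nonneg v)
    calc ‖(Teq.symm : X →L[ℝ] EuclideanSpace ℝ (Fin n))‖ *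
          ‖((Teq.symm).symm : EuclideanSpace ℝ (Fin n) →L[ℝ] X)‖
        ≤ Real.sqrt n * 1 :=
          mul_le_mul hnorm1 hnorm2 (norm_nonneg _) (Real.sqrt_nonneg n)
      _ = Real.sqrt n := mul_one _
end

section
/- Let 𝔾 be a Gurarii space and let G : 𝔾 → 𝔾 be a Gurarii operator. Then G[B_𝔾(1)] = B_𝔾(1), where B_𝔾(1) is the open unit ball of 𝔾; consequently ‖G‖ = 1 and the openness norm satisfies ‖G^←‖ = 1. -/
open Metric Set

/-- An `ε`-isometric embedding between real normed spaces. -/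
def IsEpsIsometry {X Y : Type*} [NormedAddCommGroup X] [NormedSpace ℝ X]
    [NormedAddCommGroup Y] [NormedSpace ℝ Y] (ε : ℝ) (T : X →L[ℝ] Y) : Prop :=
  Function.Injective T ∧
    ∀ x : X, x ≠ 0 → (1 - ε) * ‖x‖ < ‖T x‖ ∧ ‖T x‖ < (1 + ε) * ‖x‖

/-- A Gurarii space: a separable real Banach space with the finite-dimensional
extension property. -/
def IsGurariiSpace (𝕏 : Type*) [NormedAddCommGroup 𝕏] [NormedSpace ℝ 𝕏] : Prop :=
  CompleteSpace 𝕏 ∧ TopologicalSpace.SeparableSpace 𝕏 ∧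
  ∀ (B : Type) [NormedAddCommGroup B] [NormedSpace ℝ B] [FiniteDimensional ℝ B]
    (A : Submodule ℝ B) (f : A →ₗᵢ[ℝ] 𝕏) (ε : ℝ), 0 < ε →
    ∃ g : B →L[ℝ] 𝕏, IsEpsIsometry ε g ∧ ∀ a : A, g a = f a

/-- A Gurarii operator between real Banach spaces. -/
def IsGurariiOp {X Y : Type*} [NormedAddCommGroup X] [NormedSpace ℝ X]
    [NormedAddCommGroup Y] [NormedSpace ℝ Y] (G : X →L[ℝ] Y) : Prop :=
  ‖G‖ ≤ 1 ∧
  ∀ (ε : ℝ), 0 < ε →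
  ∀ (A B : Type) [NormedAddCommGroup A] [NormedSpace ℝ A] [FiniteDimensional ℝ A]
    [NormedAddCommGroup B] [NormedSpace ℝ B] [FiniteDimensional ℝ B]
    (T : A →L[ℝ] B), ‖T‖ ≤ 1 →
  ∀ (A₀ : Submodule ℝ A) (B₀ : Submodule ℝ B) (hT : ∀ a ∈ A₀, T a ∈ B₀)
    (i₀ : A₀ →ₗᵢ[ℝ] X) (j₀ : B₀ →ₗᵢ[ℝ] Y),
    (∀ a : A₀, G (i₀ a) = j₀ ⟨T a, hT a a.2⟩) →
    ∃ (i : A →L[ℝ] X) (j : B →L[ℝ] Y),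
      IsEpsIsometry ε i ∧ IsEpsIsometry ε j ∧
      (∀ a : A₀, i a = i₀ a) ∧ (∀ b : B₀, j b = j₀ b) ∧
      (∀ a : A, G (i a) = j (T a))

/-- The set of nonexpansive operators on `𝕏`, regarded as a set of functions so that
the subspace topology it inherits from the product topology on `𝕏 → 𝕏` is exactly
the strong operator topology. -/
def BallOpSet (𝕏 : Type*) [NormedAddCommGroup 𝕏] [NormedSpace ℝ 𝕏] : Set (𝕏 → 𝕏) :=
  {f | ∃ T : 𝕏 →L[ℝ] 𝕏, ‖T‖ ≤ 1 ∧ f = ⇑T}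

/-- The set of Gurarii operators inside `BallOpSet 𝕏`. -/
def GurariiOpSet (𝕏 : Type*) [NormedAddCommGroup 𝕏] [NormedSpace ℝ 𝕏] :
    Set (BallOpSet 𝕏) :=
  {f | ∃ T : 𝕏 →L[ℝ] 𝕏, IsGurariiOp T ∧ (f : 𝕏 → 𝕏) = ⇑T}

/-- The openness norm of an operator `T : X → Y`:
`‖T^←‖ = inf({r ≥ 0 : T[X] ∩ B_Y(1) ⊆ T[B_X(r)]} ∪ {∞})`, valued in `ℝ≥0∞`
(the infimum of the empty set being `∞`). -/
noncomputable def opennessNorm {X Y : Type*} [NormedAddCommGroup X] [NormedSpace ℝ X]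
    [NormedAddCommGroup Y] [NormedSpace ℝ Y] (T : X →L[ℝ] Y) : ENNReal :=
  sInf {c : ENNReal | ∃ r : ℝ, 0 ≤ r ∧ c = ENNReal.ofReal r ∧
    Set.range T ∩ Metric.ball 0 1 ⊆ T '' Metric.ball (0 : X) r}

/-- A Gurarii operator `G` on a Gurarii space `𝕏` maps the open unit ball onto the open
unit ball; consequently `‖G‖ = 1` and the openness norm `‖G^←‖` equals `1`. -/
theorem gurarii_op_image_ball (𝕏 : Type*) [NormedAddCommGroup 𝕏] [NormedSpace ℝ 𝕏]
    (h𝕏 : IsGurariiSpace 𝕏) (G : 𝕏 →L[ℝ] 𝕏) (hG : IsGurariiOp G) :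
    G '' Metric.ball 0 1 = Metric.ball 0 1 ∧ ‖G‖ = 1 ∧ opennessNorm G = 1 := by
  -- 𝕏 is nontrivial
  have hx₀ : ∃ x₀ : 𝕏, ‖x₀‖ = 1 := by
    obtain ⟨-, -, hext⟩ := h𝕏
    have fzero : ((⊥ : Submodule ℝ ℝ) →ₗᵢ[ℝ] 𝕏) := by
      refine ⟨0, fun x => ?_⟩
      obtain ⟨x, hx⟩ := x
      rw [Submodule.mem_bot] at hx
      subst hx
      simp
    obtain ⟨g, hg, -⟩ := hext ℝ ⊥ fzero (1/2) (by norm_num)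
    have h1 := (hg.2 1 one_ne_zero).1
    have hne : g 1 ≠ 0 := by
      intro h
      rw [h, norm_zero] at h1
      norm_num at h1
    refine ⟨‖g 1‖⁻¹ • g 1, ?_⟩
    rw [norm_smul, norm_inv, norm_norm, inv_mul_cancel₀ (norm_ne_zero_iff.mpr hne)]
  obtain ⟨x₀, hx₀⟩ := hx₀
  -- surjectivity onto the open ball
  have key : ∀ y : 𝕏, ‖y‖ < 1 → ∃ x : 𝕏, ‖x‖ < 1 ∧ G x = y := by
    intro y hy
    rcases eq_or_ne y 0 with rfl | hy0
    · exact ⟨0, by simp, by simp⟩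
    have hy_pos : 0 < ‖y‖ := norm_pos_iff.mpr hy0
    set u : 𝕏 := ‖y‖⁻¹ • y with hu
    have hnu : ‖u‖ = 1 := by
      rw [hu, norm_smul, norm_inv, norm_norm, inv_mul_cancel₀ (ne_of_gt hy_pos)]
    have hyne : ‖y‖ ≠ 0 := ne_of_gt hy_pos
    have hε : 0 < (1 - ‖y‖) / (2 * ‖y‖) := div_pos (by linarith) (by linarith)
    let i₀ : (⊥ : Submodule ℝ ℝ) →ₗᵢ[ℝ] 𝕏 := by
      refine ⟨0, fun x => ?_⟩
      obtain ⟨x, hx⟩ := x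
      rw [Submodule.mem_bot] at hx
      subst hx
      simp
    let j₀ : (⊤ : Submodule ℝ ℝ) →ₗᵢ[ℝ] 𝕏 := by
      refine ⟨(LinearMap.toSpanSingleton ℝ 𝕏 u).comp (⊤ : Submodule ℝ ℝ).subtype, fun x => ?_⟩
      simp [LinearMap.toSpanSingleton_apply, norm_smul, hnu]
    obtain ⟨i, j, hi, hj, hiA, hjB, hcomm⟩ := hG.2 ((1 - ‖y‖) / (2 * ‖y‖)) hε ℝ ℝ (ContinuousLinearMap.id ℝ ℝ)
      ContinuousLinearMap.norm_id_le ⊥ ⊤ (fun a _ => Submodule.mem_top) i₀ j₀ (fun a => by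
        obtain ⟨a, ha⟩ := a
        rw [Submodule.mem_bot] at ha
        subst ha
        simp [i₀, j₀]
        exact (zero_smul ℝ u).symm)
    have hvne : (‖y‖ : ℝ) ≠ 0 := hyne
    have hnv : ‖(‖y‖ : ℝ)‖ = ‖y‖ := Real.norm_of_nonneg (norm_nonneg y)
    refine ⟨i ‖y‖, ?_, ?_⟩
    · have h2 := (hi.2 ‖y‖ hvne).2
      rw [hnv] at h2
      have heq : (1 + (1 - ‖y‖) / (2 * ‖y‖)) * ‖y‖ = (1 + ‖y‖) / 2 := by
        field_simp
        ring
      rw [heq] at h2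
      linarith
    · have h3 := hcomm ‖y‖
      rw [ContinuousLinearMap.id_apply] at h3
      have h4 := hjB ⟨‖y‖, Submodule.mem_top⟩
      rw [h3]
      have h5 : (j₀ ⟨‖y‖, Submodule.mem_top⟩ : 𝕏) = y := by
        simp only [j₀, LinearIsometry.coe_mk, LinearMap.coe_comp, Function.comp_apply,
          Submodule.coe_subtype, LinearMap.toSpanSingleton_apply]
        show (‖y‖ : ℝ) • u = y
        rw [hu, smul_smul, mul_inv_cancel₀ (ne_of_gt hy_pos), one_smul]
      rw [h5] at h4
      exact h4
  constructor
  · ext y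
    simp only [mem_image, mem_ball, dist_zero_right]
    constructor
    · rintro ⟨x, hx, rfl⟩
      calc ‖G x‖ ≤ ‖G‖ * ‖x‖ := G.le_opNorm x
        _ ≤ 1 * ‖x‖ := by nlinarith [norm_nonneg x, hG.1]
        _ < 1 := by simpa using hx
    · intro hy
      obtain ⟨x, hx, hGx⟩ := key y hy
      exact ⟨x, hx, hGx⟩
  have hnorm : ‖G‖ = 1 := by
    refine le_antisymm hG.1 (le_of_forall_lt fun c hc => ?_)
    rcases lt_or_ge c 0 with h | h
    · exact h.trans_le (norm_nonneg G)
    · set s := (c + 1) / 2 with hs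
      have hs0 : 0 ≤ s := by positivity
      have hcs : c < s := by linarith
      have hs1 : s < 1 := by linarith
      obtain ⟨x, hx, hGx⟩ := key (s • x₀) (by rw [norm_smul, hx₀, Real.norm_of_nonneg hs0]; simpa)
      have : s = ‖G x‖ := by rw [hGx, norm_smul, hx₀, Real.norm_of_nonneg hs0]; simp
      calc c < s := hcs
        _ = ‖G x‖ := this
        _ ≤ ‖G‖ * ‖x‖ := G.le_opNorm x
        _ ≤ ‖G‖ * 1 := by nlinarith [norm_nonneg G, hx]
        _ = ‖G‖ := mul_one _
  refine ⟨hnorm, ?_⟩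
  · apply le_antisymm
    · apply sInf_le
      refine ⟨1, zero_le_one, by simp, fun z hz => ?_⟩
      obtain ⟨-, hz2⟩ := hz
      obtain ⟨x, hx, hGx⟩ := key z (by simpa using hz2)
      exact ⟨x, by simpa using hx, hGx⟩
    · refine le_sInf fun c hc => ?_
      obtain ⟨r, hr0, rfl, hsub⟩ := hc
      rw [ENNReal.one_le_ofReal]
      by_contra hr1
      push_neg at hr1
      set s := (r + 1) / 2 with hs
      have hs0 : 0 ≤ s := by positivity
      have hrs : r < s := by linarith
      have hs1 : s < 1 := by linarith
      set y := s • x₀ with hy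
      have hny : ‖y‖ = s := by rw [hy, norm_smul, hx₀, Real.norm_of_nonneg hs0]; simp
      obtain ⟨x, hx, hGx⟩ := key y (by rw [hny]; exact hs1)
      have hymem : y ∈ Set.range G ∩ Metric.ball 0 1 := by
        refine ⟨⟨x, hGx⟩, by simpa [hny] using hs1⟩
      obtain ⟨x', hx', hGx'⟩ := hsub hymem
      rw [mem_ball, dist_zero_right] at hx'
      have : ‖y‖ ≤ ‖x'‖ := by
        rw [← hGx']
        calc ‖G x'‖ ≤ ‖G‖ * ‖x'‖ := G.le_opNorm x'
          _ ≤ 1 * ‖x'‖ := by nlinarith [norm_nonneg x', hG.1]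
          _ = ‖x'‖ := one_mul _
      rw [hny] at this
      linarith
end

section
/- Every Gurarii operator G : X → Y between separable real Banach spaces is universal: for every bounded linear operator T : A → B between separable real Banach spaces with ‖T‖ ≤ ‖G‖, there exist isometric embeddings i : A → X and j : B → Y such that G ∘ i = j ∘ T. -/
open Metric Set

open Filter Topology


noncomputable section AmalSection

variable {V W : Type*} [NormedAddCommGroup V] [NormedSpace ℝ V]
  [NormedAddCommGroup W] [NormedSpace ℝ W]
  (S : Submodule ℝ V) (φ : ↥S →ₗ[ℝ] W) (ε : ℝ)

/-- The quantity whose infimum is the amalgam norm. -/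
def amalFn (p : V × W) (s : ↥S) : ℝ := ‖p.1 - (s : V)‖ + ‖p.2 + φ s‖ + ε * ‖(s : V)‖

/-- Amalgam norm on `V × W`. -/
def amalN (p : V × W) : ℝ := ⨅ s : ↥S, amalFn S φ ε p s

variable {S φ ε}

lemma amalFn_nonneg (hε : 0 ≤ ε) (p : V × W) (s : ↥S) : 0 ≤ amalFn S φ ε p s := by
  unfold amalFn; positivity

lemma amal_bdd (hε : 0 ≤ ε) (p : V × W) :
    BddBelow (Set.range fun s : ↥S => amalFn S φ ε p s) :=
  ⟨0, by rintro x ⟨s, rfl⟩; exact amalFn_nonneg hε p s⟩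

lemma amalN_le (hε : 0 ≤ ε) (p : V × W) (s : ↥S) : amalN S φ ε p ≤ amalFn S φ ε p s :=
  ciInf_le (amal_bdd hε p) s

lemma le_amalN {c : ℝ} (p : V × W) (h : ∀ s : ↥S, c ≤ amalFn S φ ε p s) :
    c ≤ amalN S φ ε p :=
  le_ciInf h

lemma amalN_nonneg (hε : 0 ≤ ε) (p : V × W) : 0 ≤ amalN S φ ε p :=
  le_amalN p (amalFn_nonneg hε p)

lemma amalN_zero (hε : 0 ≤ ε) : amalN S φ ε (0 : V × W) = 0 := by
  refine le_antisymm ?_ (amalN_nonneg hε 0)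
  have := amalN_le (S := S) (φ := φ) hε 0 0
  simpa [amalFn] using this

lemma amalN_add_le (hε : 0 ≤ ε) (p q : V × W) :
    amalN S φ ε (p + q) ≤ amalN S φ ε p + amalN S φ ε q := by
  refine le_ciInf_add_ciInf ?_
  intro s t
  refine le_trans (amalN_le hε (p + q) (s + t)) ?_
  unfold amalFn
  have h1 : ‖(p + q).1 - ((s + t : ↥S) : V)‖ ≤ ‖p.1 - s‖ + ‖q.1 - t‖ := by
    rw [show (p + q).1 - ((s + t : ↥S) : V) = (p.1 - s) + (q.1 - t) by
      push_cast [Prod.fst_add]; abel]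
    exact norm_add_le _ _
  have h2 : ‖(p + q).2 + φ (s + t)‖ ≤ ‖p.2 + φ s‖ + ‖q.2 + φ t‖ := by
    rw [show (p + q).2 + φ (s + t) = (p.2 + φ s) + (q.2 + φ t) by
      rw [map_add, Prod.snd_add]; abel]
    exact norm_add_le _ _
  have h3 : ε * ‖((s + t : ↥S) : V)‖ ≤ ε * ‖(s : V)‖ + ε * ‖(t : V)‖ := by
    rw [← mul_add]
    exact mul_le_mul_of_nonneg_left (by push_cast; exact norm_add_le _ _) hε
  linarith

lemma amalN_neg (hε : 0 ≤ ε) (p : V × W) : amalN S φ ε (-p) = amalN S φ ε p := by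
  have key : ∀ q : V × W, amalN S φ ε (-q) ≤ amalN S φ ε q := by
    intro q
    refine le_amalN q fun s => le_trans (amalN_le hε (-q) (-s)) ?_
    unfold amalFn
    rw [map_neg]
    have e1 : ‖(-q).1 - ((-s : ↥S) : V)‖ = ‖q.1 - s‖ := by
      rw [show (-q).1 - ((-s : ↥S) : V) = -(q.1 - s) by push_cast [Prod.fst_neg]; abel,
        norm_neg]
    have e2 : ‖(-q).2 + -(φ s)‖ = ‖q.2 + φ s‖ := by
      rw [show (-q).2 + -(φ s) = -(q.2 + φ s) by rw [Prod.snd_neg]; abel, norm_neg]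
    have e3 : ‖((-s : ↥S) : V)‖ = ‖(s : V)‖ := by push_cast; rw [norm_neg]
    rw [e1, e2, e3]
  exact le_antisymm (key p) (by simpa using key (-p))

lemma amalFn_smul (c : ℝ) (p : V × W) (s : ↥S) :
    amalFn S φ ε (c • p) (c • s) = |c| * amalFn S φ ε p s := by
  unfold amalFn
  have e1 : (c • p).1 - ((c • s : ↥S) : V) = c • (p.1 - s) := by
    push_cast [Prod.smul_fst]; rw [smul_sub]
  have e2 : (c • p).2 + φ (c • s) = c • (p.2 + φ s) := by
    rw [map_smul, Prod.smul_snd, smul_add]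
  have e3 : ((c • s : ↥S) : V) = c • (s : V) := rfl
  rw [e1, e2, e3, norm_smul, norm_smul, norm_smul, Real.norm_eq_abs]
  ring

lemma amalN_smul (hε : 0 ≤ ε) (c : ℝ) (p : V × W) :
    amalN S φ ε (c • p) = |c| * amalN S φ ε p := by
  have key : ∀ (c : ℝ) (p : V × W), amalN S φ ε (c • p) ≤ |c| * amalN S φ ε p := by
    intro c p
    unfold amalN
    rw [Real.mul_iInf_of_nonneg (abs_nonneg c)]
    refine le_ciInf fun s => ?_
    rw [← amalFn_smul]
    exact amalN_le hε _ _
  rcases eq_or_ne c 0 with rfl | hc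
  · simp [amalN_zero hε]
  refine le_antisymm (key c p) ?_
  have h2 := key c⁻¹ (c • p)
  rw [inv_smul_smul₀ hc] at h2
  have habs : 0 < |c| := abs_pos.mpr hc
  rw [abs_inv] at h2
  calc |c| * amalN S φ ε p ≤ |c| * (|c|⁻¹ * amalN S φ ε (c • p)) :=
        mul_le_mul_of_nonneg_left h2 (le_of_lt habs)
    _ = amalN S φ ε (c • p) := by field_simp

section Bounds

variable (hε : 0 < ε) (hε1 : ε ≤ 1)
  (hl : ∀ s : ↥S, (1 - ε) * ‖(s : V)‖ ≤ ‖φ s‖)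
  (hu : ∀ s : ↥S, ‖φ s‖ ≤ (1 + ε) * ‖(s : V)‖)

include hε hε1 in
lemma eps_fst_le_amalN (p : V × W) : ε * ‖p.1‖ ≤ amalN S φ ε p := by
  refine le_amalN p fun s => ?_
  unfold amalFn
  have h1 : ‖p.1‖ ≤ ‖p.1 - s‖ + ‖(s : V)‖ := by
    simpa using norm_add_le (p.1 - s) (s : V)
  have h2 : ε * ‖p.1 - s‖ ≤ ‖p.1 - s‖ := by nlinarith [norm_nonneg (p.1 - (s:V))]
  nlinarith [norm_nonneg (p.2 + φ s), norm_nonneg (p.1 - (s:V)), norm_nonneg (s:V)]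

include hε hl in
lemma amalN_inl (v : V) : amalN S φ ε (v, 0) = ‖v‖ := by
  refine le_antisymm ?_ (le_amalN _ fun s => ?_)
  · have := amalN_le (S := S) (φ := φ) (le_of_lt hε) (v, (0 : W)) 0
    simpa [amalFn] using this
  · unfold amalFn
    have h1 : ‖v‖ ≤ ‖v - s‖ + ‖(s : V)‖ := by simpa using norm_add_le (v - s) (s : V)
    have h2 := hl s
    have h3 : ‖(0 : W) + φ s‖ = ‖φ s‖ := by rw [zero_add]
    simp only [h3]
    nlinarith [norm_nonneg (s : V)]

include hε hu in
lemma amalN_inr (w : W) : amalN S φ ε (0, w) = ‖w‖ := by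
  refine le_antisymm ?_ (le_amalN _ fun s => ?_)
  · have := amalN_le (S := S) (φ := φ) (le_of_lt hε) ((0 : V), w) 0
    simpa [amalFn] using this
  · unfold amalFn
    have h1 : ‖w‖ ≤ ‖w + φ s‖ + ‖φ s‖ := by
      simpa using norm_add_le (w + φ s) (-(φ s))
    have h2 := hu s
    have h3 : ‖(0 : V) - (s : V)‖ = ‖(s : V)‖ := by rw [zero_sub, norm_neg]
    simp only [h3]
    nlinarith [norm_nonneg (s : V)]

include hε in
lemma amalN_glue (s : ↥S) : amalN S φ ε ((s : V), -(φ s)) ≤ ε * ‖(s : V)‖ := by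
  have := amalN_le (S := S) (φ := φ) (le_of_lt hε) ((s : V), -(φ s)) s
  simpa [amalFn] using this

include hε hε1 hu in
lemma amalN_eq_zero (p : V × W) (h : amalN S φ ε p = 0) : p = 0 := by
  have h1 := eps_fst_le_amalN (S := S) (φ := φ) hε hε1 p
  rw [h] at h1
  have h2 : p.1 = 0 := by
    have hn := norm_nonneg p.1
    have : ‖p.1‖ = 0 := le_antisymm (by nlinarith) (norm_nonneg _)
    exact norm_eq_zero.mp this
  have h3 : amalN S φ ε (0, p.2) = 0 := by
    have : ((0 : V), p.2) = p := by rw [← h2]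
    rw [this, h]
  rw [amalN_inr hε hu] at h3
  have : p.2 = 0 := norm_eq_zero.mp h3
  exact Prod.ext h2 this

end Bounds

end AmalSection

noncomputable section AmalType

variable {V W : Type*} [NormedAddCommGroup V] [NormedSpace ℝ V]
  [NormedAddCommGroup W] [NormedSpace ℝ W]

/-- Type synonym carrying the amalgam norm. -/
def Amal (S : Submodule ℝ V) (φ : ↥S →ₗ[ℝ] W) (ε : ℝ) : Type _ := V × W

variable (S : Submodule ℝ V) (φ : ↥S →ₗ[ℝ] W) (ε : ℝ)

instance : AddCommGroup (Amal S φ ε) := inferInstanceAs (AddCommGroup (V × W))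
instance : Module ℝ (Amal S φ ε) := inferInstanceAs (Module ℝ (V × W))

/-- The canonical linear equivalence `V × W ≃ Amal S φ ε`. -/
def toAmal : (V × W) ≃ₗ[ℝ] Amal S φ ε :=
  { toFun := fun p => (p : Amal S φ ε), invFun := fun p => (p : V × W),
    map_add' := fun _ _ => rfl, map_smul' := fun _ _ => rfl,
    left_inv := fun _ => rfl, right_inv := fun _ => rfl }

variable {S φ ε}

variable (hε : 0 < ε) (hε1 : ε ≤ 1)
  (hl : ∀ s : ↥S, (1 - ε) * ‖(s : V)‖ ≤ ‖φ s‖)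
  (hu : ∀ s : ↥S, ‖φ s‖ ≤ (1 + ε) * ‖(s : V)‖)

include hε hε1 hu in
/-- Normed group structure on the amalgam. -/
@[reducible]
def amalNAG : NormedAddCommGroup (Amal S φ ε) :=
  AddGroupNorm.toNormedAddCommGroup
    { toFun := fun p => amalN S φ ε ((toAmal S φ ε).symm p)
      map_zero' := amalN_zero hε.le
      add_le' := fun p q => amalN_add_le hε.le _ _
      neg' := fun p => amalN_neg hε.le _
      eq_zero_of_map_eq_zero' := fun p hp => by
        have := amalN_eq_zero hε hε1 hu _ hp
        exact ((toAmal S φ ε).symm.map_eq_zero_iff).mp this }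

/-- Norm on the amalgam computes `amalN`. -/
lemma amal_norm_def (p : V × W) :
    @norm _ (amalNAG hε hε1 hu).toNorm (toAmal S φ ε p) = amalN S φ ε p := rfl

include hε hε1 hu in
@[reducible]
def amalNS : @NormedSpace ℝ (Amal S φ ε) _ (amalNAG hε hε1 hu).toSeminormedAddCommGroup := by
  letI := amalNAG hε hε1 hu
  exact
  { norm_smul_le := fun c p => by
      have : ‖c • p‖ = ‖c‖ * ‖p‖ := by
        show amalN S φ ε ((toAmal S φ ε).symm (c • p)) = _
        rw [map_smul, amalN_smul hε.le, Real.norm_eq_abs]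
        rfl
      exact this.le }


end AmalType


noncomputable section Transfer

/-- A Type-0 model space. -/
def ModelSpace (n : ℕ) : Type := Fin n → ℝ

instance (n : ℕ) : AddCommGroup (ModelSpace n) := inferInstanceAs (AddCommGroup (Fin n → ℝ))
instance (n : ℕ) : Module ℝ (ModelSpace n) := inferInstanceAs (Module ℝ (Fin n → ℝ))
instance (n : ℕ) : Module.Finite ℝ (ModelSpace n) :=
  inferInstanceAs (Module.Finite ℝ (Fin n → ℝ))

variable {X Y : Type*} [NormedAddCommGroup X] [NormedSpace ℝ X]
  [NormedAddCommGroup Y] [NormedSpace ℝ Y]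

/-- Universe-polymorphic version of the Gurarii operator extension property. -/
theorem IsGurariiOp.ext_prop {G : X →L[ℝ] Y} (hG : IsGurariiOp G)
    (ε : ℝ) (hε : 0 < ε)
    (A : Type*) (B : Type*) [NormedAddCommGroup A] [NormedSpace ℝ A] [FiniteDimensional ℝ A]
    [NormedAddCommGroup B] [NormedSpace ℝ B] [FiniteDimensional ℝ B]
    (T : A →L[ℝ] B) (hT1 : ‖T‖ ≤ 1)
    (A₀ : Submodule ℝ A) (B₀ : Submodule ℝ B) (hT : ∀ a ∈ A₀, T a ∈ B₀)
    (i₀ : A₀ →ₗᵢ[ℝ] X) (j₀ : B₀ →ₗᵢ[ℝ] Y)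
    (hc : ∀ a : A₀, G (i₀ a) = j₀ ⟨T a, hT a a.2⟩) :
    ∃ (i : A →L[ℝ] X) (j : B →L[ℝ] Y),
      IsEpsIsometry ε i ∧ IsEpsIsometry ε j ∧
      (∀ a : A₀, i a = i₀ a) ∧ (∀ b : B₀, j b = j₀ b) ∧
      (∀ a : A, G (i a) = j (T a)) := by
  classical
  -- models
  set n := Module.finrank ℝ A
  set m := Module.finrank ℝ B
  let eA0 : A ≃ₗ[ℝ] (Fin n → ℝ) := (Module.finBasis ℝ A).equivFun
  let eB0 : B ≃ₗ[ℝ] (Fin m → ℝ) := (Module.finBasis ℝ B).equivFun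
  let idA : (Fin n → ℝ) ≃ₗ[ℝ] ModelSpace n :=
    { toFun := fun p => p, invFun := fun p => p,
      map_add' := fun _ _ => rfl, map_smul' := fun _ _ => rfl,
      left_inv := fun _ => rfl, right_inv := fun _ => rfl }
  let idB : (Fin m → ℝ) ≃ₗ[ℝ] ModelSpace m :=
    { toFun := fun p => p, invFun := fun p => p,
      map_add' := fun _ _ => rfl, map_smul' := fun _ _ => rfl,
      left_inv := fun _ => rfl, right_inv := fun _ => rfl }
  let eA : A ≃ₗ[ℝ] ModelSpace n := eA0.trans idA
  let eB : B ≃ₗ[ℝ] ModelSpace m := eB0.trans idB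
  letI : NormedAddCommGroup (ModelSpace n) :=
    NormedAddCommGroup.induced (ModelSpace n) A (eA.symm.toLinearMap) eA.symm.injective
  letI : NormedSpace ℝ (ModelSpace n) := NormedSpace.induced ℝ (ModelSpace n) A eA.symm.toLinearMap
  letI : NormedAddCommGroup (ModelSpace m) :=
    NormedAddCommGroup.induced (ModelSpace m) B (eB.symm.toLinearMap) eB.symm.injective
  letI : NormedSpace ℝ (ModelSpace m) := NormedSpace.induced ℝ (ModelSpace m) B eB.symm.toLinearMap
  have nA : ∀ a : A, ‖eA a‖ = ‖a‖ := fun a => by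
    show ‖eA.symm (eA a)‖ = ‖a‖
    rw [eA.symm_apply_apply]
  have nB : ∀ b : B, ‖eB b‖ = ‖b‖ := fun b => by
    show ‖eB.symm (eB b)‖ = ‖b‖
    rw [eB.symm_apply_apply]
  have nA' : ∀ x : ModelSpace n, ‖x‖ = ‖eA.symm x‖ := fun x => rfl
  have nB' : ∀ x : ModelSpace m, ‖x‖ = ‖eB.symm x‖ := fun x => rfl
  -- transported operator
  let T'l : ModelSpace n →ₗ[ℝ] ModelSpace m :=
    eB.toLinearMap ∘ₗ T.toLinearMap ∘ₗ eA.symm.toLinearMap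
  have hT'bound : ∀ x : ModelSpace n, ‖T'l x‖ ≤ 1 * ‖x‖ := by
    intro x
    show ‖eB (T (eA.symm x))‖ ≤ 1 * ‖x‖
    rw [nB, one_mul, nA']
    calc ‖T (eA.symm x)‖ ≤ ‖T‖ * ‖eA.symm x‖ := T.le_opNorm _
      _ ≤ 1 * ‖eA.symm x‖ := by
          exact mul_le_mul_of_nonneg_right hT1 (norm_nonneg _)
      _ = ‖eA.symm x‖ := one_mul _
  let T' : ModelSpace n →L[ℝ] ModelSpace m := T'l.mkContinuous 1 hT'bound
  have hT'1 : ‖T'‖ ≤ 1 := LinearMap.mkContinuous_norm_le _ zero_le_one _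
  have hT'app : ∀ a : A, T' (eA a) = eB (T a) := by
    intro a
    show eB (T (eA.symm (eA a))) = eB (T a)
    rw [eA.symm_apply_apply]
  -- transported submodules
  let A₀' : Submodule ℝ (ModelSpace n) := A₀.map eA.toLinearMap
  let B₀' : Submodule ℝ (ModelSpace m) := B₀.map eB.toLinearMap
  have hTT : ∀ x ∈ A₀', T' x ∈ B₀' := by
    rintro x ⟨a, ha, rfl⟩
    exact ⟨T a, hT a ha, (hT'app a).symm⟩
  -- transported isometries
  let eA₀ : ↥A₀ ≃ₗ[ℝ] ↥A₀' := A₀.equivMapOfInjective eA.toLinearMap eA.injective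
  let eB₀ : ↥B₀ ≃ₗ[ℝ] ↥B₀' := B₀.equivMapOfInjective eB.toLinearMap eB.injective
  have eA₀_coe : ∀ a : ↥A₀, ((eA₀ a : ModelSpace n) : ModelSpace n) = eA (a : A) := fun a => rfl
  let i₀' : A₀' →ₗᵢ[ℝ] X :=
    { toLinearMap := i₀.toLinearMap ∘ₗ (eA₀.symm.toLinearMap)
      norm_map' := by
        intro x
        show ‖i₀ (eA₀.symm x)‖ = ‖x‖
        rw [i₀.norm_map]
        have h2 : eA ((eA₀.symm x : ↥A₀) : A) = (x : ModelSpace n) :=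
          congrArg Subtype.val (eA₀.apply_symm_apply x)
        calc ‖(eA₀.symm x : ↥A₀)‖ = ‖((eA₀.symm x : ↥A₀) : A)‖ := rfl
          _ = ‖eA (((eA₀.symm x : ↥A₀)) : A)‖ := (nA _).symm
          _ = ‖(x : ModelSpace n)‖ := by rw [h2]
          _ = ‖x‖ := rfl }
  let j₀' : B₀' →ₗᵢ[ℝ] Y :=
    { toLinearMap := j₀.toLinearMap ∘ₗ (eB₀.symm.toLinearMap)
      norm_map' := by
        intro x
        show ‖j₀ (eB₀.symm x)‖ = ‖x‖
        rw [j₀.norm_map]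
        have h2 : eB ((eB₀.symm x : ↥B₀) : B) = (x : ModelSpace m) :=
          congrArg Subtype.val (eB₀.apply_symm_apply x)
        calc ‖(eB₀.symm x : ↥B₀)‖ = ‖((eB₀.symm x : ↥B₀) : B)‖ := rfl
          _ = ‖eB (((eB₀.symm x : ↥B₀)) : B)‖ := (nB _).symm
          _ = ‖(x : ModelSpace m)‖ := by rw [h2]
          _ = ‖x‖ := rfl }
  have hc' : ∀ a : A₀', G (i₀' a) = j₀' ⟨T' a, hTT a a.2⟩ := by
    intro a
    show G (i₀ (eA₀.symm a)) = j₀' ⟨T' a, hTT a a.2⟩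
    rw [hc (eA₀.symm a)]
    show j₀ _ = j₀ (eB₀.symm ⟨T' a, hTT a a.2⟩)
    congr 1
    apply Subtype.ext
    show T ((eA₀.symm a : ↥A₀) : A) = ((eB₀.symm ⟨T' a, hTT a a.2⟩ : ↥B₀) : B)
    apply eB.injective
    have h1 : eB (((eB₀.symm ⟨T' a, hTT a a.2⟩ : ↥B₀) : B)) = T' a := by
      have := eB₀.apply_symm_apply (⟨T' a, hTT a a.2⟩ : ↥B₀')
      exact congrArg Subtype.val this
    rw [h1, ← hT'app]
    congr 1
    have := eA₀.apply_symm_apply (⟨(a : ModelSpace n), a.2⟩ : ↥A₀')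
    have h2 : eA ((eA₀.symm a : ↥A₀) : A) = (a : ModelSpace n) := by
      have := eA₀.apply_symm_apply a
      exact congrArg Subtype.val this
    rw [h2]
  -- apply the Gurarii property
  obtain ⟨i', j', hi', hj', hia, hjb, hcom⟩ :=
    hG.2 ε hε (ModelSpace n) (ModelSpace m) T' hT'1 A₀' B₀' hTT i₀' j₀' hc'
  -- transport back
  let ceA : A →L[ℝ] ModelSpace n := LinearMap.toContinuousLinearMap eA.toLinearMap
  let ceB : B →L[ℝ] ModelSpace m := LinearMap.toContinuousLinearMap eB.toLinearMap
  refine ⟨i'.comp ceA, j'.comp ceB, ?_, ?_, ?_, ?_, ?_⟩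
  · constructor
    · intro a b hab
      exact eA.injective (hi'.1 hab)
    · intro a ha
      have h1 := hi'.2 (eA a) (by simpa using eA.map_ne_zero_iff.mpr ha)
      rw [nA] at h1
      exact h1
  · constructor
    · intro a b hab
      exact eB.injective (hj'.1 hab)
    · intro b hb
      have h1 := hj'.2 (eB b) (by simpa using eB.map_ne_zero_iff.mpr hb)
      rw [nB] at h1
      exact h1
  · intro a
    show i' (eA (a : A)) = i₀ a
    have : i' (eA (a : A)) = i₀' (eA₀ a) := hia (eA₀ a)
    rw [this]
    show i₀ (eA₀.symm (eA₀ a)) = i₀ a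
    rw [eA₀.symm_apply_apply]
  · intro b
    show j' (eB (b : B)) = j₀ b
    have : j' (eB (b : B)) = j₀' (eB₀ b) := hjb (eB₀ b)
    rw [this]
    show j₀ (eB₀.symm (eB₀ b)) = j₀ b
    rw [eB₀.symm_apply_apply]
  · intro a
    show G (i' (eA a)) = j' (eB (T a))
    rw [hcom (eA a), hT'app]

end Transfer

/-- Non-strict approximate isometry. -/
def ApproxIso {V W : Type*} [NormedAddCommGroup V] [NormedSpace ℝ V]
    [NormedAddCommGroup W] [NormedSpace ℝ W] (ε : ℝ) (f : V →L[ℝ] W) : Prop :=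
  ∀ v : V, (1 - ε) * ‖v‖ ≤ ‖f v‖ ∧ ‖f v‖ ≤ (1 + ε) * ‖v‖

lemma IsEpsIsometry.approxIso {V W : Type*} [NormedAddCommGroup V] [NormedSpace ℝ V]
    [NormedAddCommGroup W] [NormedSpace ℝ W] {ε : ℝ} {f : V →L[ℝ] W}
    (h : IsEpsIsometry ε f) : ApproxIso ε f := by
  intro v
  rcases eq_or_ne v 0 with rfl | hv
  · simp
  · exact ⟨(h.2 v hv).1.le, (h.2 v hv).2.le⟩

noncomputable section StepSection

variable {X Y A B : Type*}
  [NormedAddCommGroup X] [NormedSpace ℝ X]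
  [NormedAddCommGroup Y] [NormedSpace ℝ Y]
  [NormedAddCommGroup A] [NormedSpace ℝ A]
  [NormedAddCommGroup B] [NormedSpace ℝ B]

set_option maxHeartbeats 1600000 in
theorem gurarii_step {G : X →L[ℝ] Y} (hG : IsGurariiOp G)
    (T : A →L[ℝ] B) (hT1 : ‖T‖ ≤ 1)
    (P P' : Submodule ℝ A) (Q Q' : Submodule ℝ B)
    [FiniteDimensional ℝ ↥P'] [FiniteDimensional ℝ ↥Q']
    (hPP' : P ≤ P') (hQQ' : Q ≤ Q')
    (hTPQ : ∀ a ∈ P, T a ∈ Q) (hTP'Q' : ∀ a ∈ P', T a ∈ Q')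
    (f : ↥P →L[ℝ] X) (g : ↥Q →L[ℝ] Y) (ε ε' : ℝ)
    (hε : 0 < ε) (hε1 : ε ≤ 1) (hε' : 0 < ε') (hε'1 : ε' ≤ 1)
    (hf : ApproxIso ε f) (hg : ApproxIso ε g)
    (hfg : ∀ p : ↥P, G (f p) = g ⟨T p, hTPQ p p.2⟩) :
    ∃ (f' : ↥P' →L[ℝ] X) (g' : ↥Q' →L[ℝ] Y),
      ApproxIso ε' f' ∧ ApproxIso ε' g' ∧
      (∀ p : ↥P', G (f' p) = g' ⟨T p, hTP'Q' p p.2⟩) ∧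
      (∀ p : ↥P, ‖f' (Submodule.inclusion hPP' p) - f p‖ ≤ 2 * ε * ‖(p : A)‖) ∧
      (∀ q : ↥Q, ‖g' (Submodule.inclusion hQQ' q) - g q‖ ≤ 2 * ε * ‖(q : B)‖) := by
  classical
  haveI : FiniteDimensional ℝ ↥P := Submodule.finiteDimensional_of_le hPP'
  haveI : FiniteDimensional ℝ ↥Q := Submodule.finiteDimensional_of_le hQQ'
  -- the S-side data
  set V : Type _ := ↥P' with hV
  set S : Submodule ℝ ↥P' := P.comap P'.subtype with hS
  let u : ↥S →ₗ[ℝ] ↥P :=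
    { toFun := fun s => ⟨((s : ↥P') : A), s.2⟩
      map_add' := fun _ _ => rfl
      map_smul' := fun _ _ => rfl }
  let F : Submodule ℝ X := LinearMap.range f.toLinearMap
  let φ : ↥S →ₗ[ℝ] ↥F := f.toLinearMap.rangeRestrict.comp u
  have φ_coe : ∀ s : ↥S, ((φ s : X)) = f (u s) := fun s => rfl
  have u_norm : ∀ s : ↥S, ‖u s‖ = ‖(s : ↥P')‖ := fun s => rfl
  have hl : ∀ s : ↥S, (1 - ε) * ‖(s : ↥P')‖ ≤ ‖φ s‖ := by
    intro s
    have := (hf (u s)).1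
    rw [u_norm] at this
    exact this
  have hu : ∀ s : ↥S, ‖φ s‖ ≤ (1 + ε) * ‖(s : ↥P')‖ := by
    intro s
    have := (hf (u s)).2
    rw [u_norm] at this
    exact this
  -- the B-side data
  set S₂ : Submodule ℝ ↥Q' := Q.comap Q'.subtype with hS₂
  let u₂ : ↥S₂ →ₗ[ℝ] ↥Q :=
    { toFun := fun s => ⟨((s : ↥Q') : B), s.2⟩
      map_add' := fun _ _ => rfl
      map_smul' := fun _ _ => rfl }
  let F₂ : Submodule ℝ Y := LinearMap.range g.toLinearMap
  let φ₂ : ↥S₂ →ₗ[ℝ] ↥F₂ := g.toLinearMap.rangeRestrict.comp u₂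
  have φ₂_coe : ∀ s : ↥S₂, ((φ₂ s : Y)) = g (u₂ s) := fun s => rfl
  have u₂_norm : ∀ s : ↥S₂, ‖u₂ s‖ = ‖(s : ↥Q')‖ := fun s => rfl
  have hl₂ : ∀ s : ↥S₂, (1 - ε) * ‖(s : ↥Q')‖ ≤ ‖φ₂ s‖ := by
    intro s
    have := (hg (u₂ s)).1
    rw [u₂_norm] at this
    exact this
  have hu₂ : ∀ s : ↥S₂, ‖φ₂ s‖ ≤ (1 + ε) * ‖(s : ↥Q')‖ := by
    intro s
    have := (hg (u₂ s)).2
    rw [u₂_norm] at this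
    exact this
  -- the amalgams
  letI nag1 : NormedAddCommGroup (Amal S φ ε) := amalNAG hε hε1 hu
  letI ns1 : NormedSpace ℝ (Amal S φ ε) := amalNS hε hε1 hu
  letI nag2 : NormedAddCommGroup (Amal S₂ φ₂ ε) := amalNAG hε hε1 hu₂
  letI ns2 : NormedSpace ℝ (Amal S₂ φ₂ ε) := amalNS hε hε1 hu₂
  haveI : Module.Finite ℝ (Amal S φ ε) := inferInstanceAs (Module.Finite ℝ (↥P' × ↥F))
  haveI : Module.Finite ℝ (Amal S₂ φ₂ ε) := inferInstanceAs (Module.Finite ℝ (↥Q' × ↥F₂))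
  -- the operator between the amalgams
  let Tr : ↥P' →ₗ[ℝ] ↥Q' := T.toLinearMap.restrict hTP'Q'
  have hGF : ∀ x ∈ F, G x ∈ F₂ := by
    rintro x ⟨p, rfl⟩
    exact ⟨⟨T p, hTPQ p p.2⟩, (hfg p).symm⟩
  let Gr : ↥F →ₗ[ℝ] ↥F₂ := G.toLinearMap.restrict hGF
  let That_l : Amal S φ ε →ₗ[ℝ] Amal S₂ φ₂ ε :=
    (toAmal S₂ φ₂ ε).toLinearMap ∘ₗ (Tr.prodMap Gr) ∘ₗ (toAmal S φ ε).symm.toLinearMap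
  have key : ∀ q : ↥P' × ↥F, amalN S₂ φ₂ ε (Tr q.1, Gr q.2) ≤ amalN S φ ε q := by
    intro q
    refine le_amalN q fun s => ?_
    have hsS₂ : Tr (s : ↥P') ∈ S₂ := by
      show ((Tr (s : ↥P') : ↥Q') : B) ∈ Q
      show T ((s : ↥P') : A) ∈ Q
      exact hTPQ _ s.2
    set σ : ↥S₂ := ⟨Tr (s : ↥P'), hsS₂⟩
    refine le_trans (amalN_le hε.le (Tr q.1, Gr q.2) σ) ?_
    unfold amalFn
    have e1 : ‖(Tr q.1 : ↥Q') - ((σ : ↥S₂) : ↥Q')‖ ≤ ‖q.1 - (s : ↥P')‖ := by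
      show ‖T (q.1 : A) - T ((s : ↥P') : A)‖ ≤ ‖((q.1 : ↥P') : A) - ((s : ↥P') : A)‖
      rw [← map_sub]
      calc ‖T ((q.1 : A) - ((s : ↥P') : A))‖ ≤ ‖T‖ * ‖(q.1 : A) - ((s : ↥P') : A)‖ :=
            T.le_opNorm _
        _ ≤ 1 * ‖(q.1 : A) - ((s : ↥P') : A)‖ :=
            mul_le_mul_of_nonneg_right hT1 (norm_nonneg _)
        _ = _ := one_mul _
    have e2 : ‖(Gr q.2 : ↥F₂) + φ₂ σ‖ ≤ ‖(q.2 : ↥F) + φ s‖ := by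
      show ‖G (q.2 : X) + (φ₂ σ : Y)‖ ≤ ‖(q.2 : X) + (φ s : X)‖
      have : (φ₂ σ : Y) = G (φ s : X) := by
        rw [φ₂_coe, φ_coe]
        have : u₂ σ = (⟨T ((u s : ↥P) : A), hTPQ _ (u s).2⟩ : ↥Q) := rfl
        rw [this, ← hfg (u s)]
      rw [this, ← map_add]
      calc ‖G ((q.2 : X) + (φ s : X))‖ ≤ ‖G‖ * ‖(q.2 : X) + (φ s : X)‖ := G.le_opNorm _
        _ ≤ 1 * ‖(q.2 : X) + (φ s : X)‖ := mul_le_mul_of_nonneg_right hG.1 (norm_nonneg _)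
        _ = _ := one_mul _
    have e3 : ε * ‖((σ : ↥S₂) : ↥Q')‖ ≤ ε * ‖(s : ↥P')‖ := by
      refine mul_le_mul_of_nonneg_left ?_ hε.le
      show ‖T ((s : ↥P') : A)‖ ≤ ‖((s : ↥P') : A)‖
      calc ‖T ((s : ↥P') : A)‖ ≤ ‖T‖ * ‖((s : ↥P') : A)‖ := T.le_opNorm _
        _ ≤ 1 * ‖((s : ↥P') : A)‖ := mul_le_mul_of_nonneg_right hT1 (norm_nonneg _)
        _ = _ := one_mul _
    show ‖(Tr q.1 : ↥Q') - ((σ : ↥S₂) : ↥Q')‖ + ‖(Gr q.2 : ↥F₂) + φ₂ σ‖ + ε * ‖((σ : ↥S₂) : ↥Q')‖ ≤ _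
    exact add_le_add (add_le_add e1 e2) e3
  have That_bound : ∀ p : Amal S φ ε, ‖That_l p‖ ≤ 1 * ‖p‖ := by
    intro p
    rw [one_mul]
    obtain ⟨q, rfl⟩ := (toAmal S φ ε).surjective p
    have h1 : ‖That_l (toAmal S φ ε q)‖ = amalN S₂ φ₂ ε (Tr q.1, Gr q.2) := by
      show ‖(toAmal S₂ φ₂ ε) ((Tr.prodMap Gr) ((toAmal S φ ε).symm (toAmal S φ ε q)))‖ = _
      rw [(toAmal S φ ε).symm_apply_apply]
      exact amal_norm_def hε hε1 hu₂ _
    rw [h1, amal_norm_def hε hε1 hu]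
    exact key q
  let That : Amal S φ ε →L[ℝ] Amal S₂ φ₂ ε := That_l.mkContinuous 1 That_bound
  have hThat1 : ‖That‖ ≤ 1 := LinearMap.mkContinuous_norm_le _ zero_le_one _
  -- the distinguished subspaces
  let inrA : ↥F →ₗ[ℝ] Amal S φ ε := (toAmal S φ ε).toLinearMap ∘ₗ LinearMap.inr ℝ ↥P' ↥F
  let inrB : ↥F₂ →ₗ[ℝ] Amal S₂ φ₂ ε := (toAmal S₂ φ₂ ε).toLinearMap ∘ₗ LinearMap.inr ℝ ↥Q' ↥F₂
  let A0 : Submodule ℝ (Amal S φ ε) := LinearMap.range inrA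
  let B0 : Submodule ℝ (Amal S₂ φ₂ ε) := LinearMap.range inrB
  have norm_inrA : ∀ w : ↥F, ‖inrA w‖ = ‖(w : X)‖ := by
    intro w
    show ‖toAmal S φ ε ((0 : ↥P'), w)‖ = _
    rw [amal_norm_def hε hε1 hu, amalN_inr hε hu]
    rfl
  have norm_inrB : ∀ w : ↥F₂, ‖inrB w‖ = ‖(w : Y)‖ := by
    intro w
    show ‖toAmal S₂ φ₂ ε ((0 : ↥Q'), w)‖ = _
    rw [amal_norm_def hε hε1 hu₂, amalN_inr hε hu₂]
    rfl
  let i₀ : ↥A0 →ₗᵢ[ℝ] X :=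
    { toLinearMap := F.subtype ∘ₗ (LinearMap.snd ℝ ↥P' ↥F) ∘ₗ
        (toAmal S φ ε).symm.toLinearMap ∘ₗ A0.subtype
      norm_map' := by
        rintro ⟨x, w, rfl⟩
        show ‖((((toAmal S φ ε).symm (inrA w)).2 : ↥F) : X)‖ = ‖inrA w‖
        have : (toAmal S φ ε).symm (inrA w) = ((0 : ↥P'), w) := by
          show (toAmal S φ ε).symm (toAmal S φ ε ((0 : ↥P'), w)) = _
          exact (toAmal S φ ε).symm_apply_apply _
        rw [this, norm_inrA] }
  let j₀ : ↥B0 →ₗᵢ[ℝ] Y :=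
    { toLinearMap := F₂.subtype ∘ₗ (LinearMap.snd ℝ ↥Q' ↥F₂) ∘ₗ
        (toAmal S₂ φ₂ ε).symm.toLinearMap ∘ₗ B0.subtype
      norm_map' := by
        rintro ⟨x, w, rfl⟩
        show ‖((((toAmal S₂ φ₂ ε).symm (inrB w)).2 : ↥F₂) : Y)‖ = ‖inrB w‖
        have : (toAmal S₂ φ₂ ε).symm (inrB w) = ((0 : ↥Q'), w) := by
          show (toAmal S₂ φ₂ ε).symm (toAmal S₂ φ₂ ε ((0 : ↥Q'), w)) = _
          exact (toAmal S₂ φ₂ ε).symm_apply_apply _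
        rw [this, norm_inrB] }
  have hThat0 : ∀ x ∈ A0, That x ∈ B0 := by
    rintro x ⟨w, rfl⟩
    refine ⟨Gr w, ?_⟩
    show toAmal S₂ φ₂ ε ((0 : ↥Q'), Gr w) =
      (toAmal S₂ φ₂ ε) ((Tr.prodMap Gr) ((toAmal S φ ε).symm (inrA w)))
    have : (toAmal S φ ε).symm (inrA w) = ((0 : ↥P'), w) :=
      (toAmal S φ ε).symm_apply_apply _
    rw [this]
    congr 1
    exact Prod.ext (by simp) rfl
  have hcompat : ∀ x : ↥A0, G (i₀ x) = j₀ ⟨That x, hThat0 x x.2⟩ := by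
    rintro ⟨x, w, rfl⟩
    have hx : (toAmal S φ ε).symm (inrA w) = ((0 : ↥P'), w) :=
      (toAmal S φ ε).symm_apply_apply _
    show G ((((toAmal S φ ε).symm (inrA w)).2 : ↥F) : X) =
      ((((toAmal S₂ φ₂ ε).symm (That (inrA w))).2 : ↥F₂) : Y)
    have hTx : That (inrA w) = inrB (Gr w) := by
      show (toAmal S₂ φ₂ ε) ((Tr.prodMap Gr) ((toAmal S φ ε).symm (inrA w))) = _
      rw [hx]
      show toAmal S₂ φ₂ ε (Tr 0, Gr w) = toAmal S₂ φ₂ ε ((0 : ↥Q'), Gr w)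
      rw [map_zero]
    rw [hx, hTx]
    have hy : (toAmal S₂ φ₂ ε).symm (inrB (Gr w)) = ((0 : ↥Q'), Gr w) :=
      (toAmal S₂ φ₂ ε).symm_apply_apply _
    rw [hy]
    rfl
  -- apply the Gurarii property
  obtain ⟨ih, jh, hih, hjh, hia, hjb, hcom⟩ :=
    hG.ext_prop ε' hε' (Amal S φ ε) (Amal S₂ φ₂ ε) That hThat1 A0 B0 hThat0 i₀ j₀ hcompat
  -- the new maps
  let inlA_l : ↥P' →ₗ[ℝ] Amal S φ ε := (toAmal S φ ε).toLinearMap ∘ₗ LinearMap.inl ℝ ↥P' ↥F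
  have norm_inlA : ∀ v : ↥P', ‖inlA_l v‖ = ‖v‖ := by
    intro v
    show ‖toAmal S φ ε (v, (0 : ↥F))‖ = ‖v‖
    rw [amal_norm_def hε hε1 hu, amalN_inl hε hl]
  let inlA : ↥P' →L[ℝ] Amal S φ ε := inlA_l.mkContinuous 1 (fun v => by rw [norm_inlA, one_mul])
  let inlB_l : ↥Q' →ₗ[ℝ] Amal S₂ φ₂ ε := (toAmal S₂ φ₂ ε).toLinearMap ∘ₗ LinearMap.inl ℝ ↥Q' ↥F₂
  have norm_inlB : ∀ v : ↥Q', ‖inlB_l v‖ = ‖v‖ := by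
    intro v
    show ‖toAmal S₂ φ₂ ε (v, (0 : ↥F₂))‖ = ‖v‖
    rw [amal_norm_def hε hε1 hu₂, amalN_inl hε hl₂]
  let inlB : ↥Q' →L[ℝ] Amal S₂ φ₂ ε := inlB_l.mkContinuous 1 (fun v => by rw [norm_inlB, one_mul])
  refine ⟨ih.comp inlA, jh.comp inlB, ?_, ?_, ?_, ?_, ?_⟩
  · -- ApproxIso ε' f'
    intro v
    rcases eq_or_ne v 0 with rfl | hv
    · simp
    · have hz : inlA v ≠ 0 := by
        intro h
        apply hv
        have : inlA_l v = 0 := h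
        have h2 : ((v, (0 : ↥F)) : ↥P' × ↥F) = 0 := by
          apply (toAmal S φ ε).injective
          rw [map_zero]; exact this
        exact (Prod.ext_iff.mp h2).1
      have := hih.2 (inlA v) hz
      have hnorm : ‖inlA v‖ = ‖v‖ := norm_inlA v
      rw [hnorm] at this
      exact ⟨this.1.le, this.2.le⟩
  · -- ApproxIso ε' g'
    intro v
    rcases eq_or_ne v 0 with rfl | hv
    · simp
    · have hz : inlB v ≠ 0 := by
        intro h
        apply hv
        have : inlB_l v = 0 := h
        have h2 : ((v, (0 : ↥F₂)) : ↥Q' × ↥F₂) = 0 := by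
          apply (toAmal S₂ φ₂ ε).injective
          rw [map_zero]; exact this
        exact (Prod.ext_iff.mp h2).1
      have := hjh.2 (inlB v) hz
      have hnorm : ‖inlB v‖ = ‖v‖ := norm_inlB v
      rw [hnorm] at this
      exact ⟨this.1.le, this.2.le⟩
  · -- commutation
    intro p
    show G (ih (inlA p)) = jh (inlB ⟨T p, hTP'Q' p p.2⟩)
    rw [hcom (inlA p)]
    congr 1
    show (toAmal S₂ φ₂ ε) ((Tr.prodMap Gr) ((toAmal S φ ε).symm (inlA p))) = _
    have : (toAmal S φ ε).symm (inlA p) = (p, (0 : ↥F)) :=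
      (toAmal S φ ε).symm_apply_apply _
    rw [this]
    show toAmal S₂ φ₂ ε (Tr p, Gr 0) = toAmal S₂ φ₂ ε ((⟨T p, hTP'Q' p p.2⟩ : ↥Q'), (0 : ↥F₂))
    rw [map_zero]
    rfl
  · -- closeness on P
    intro p
    set v : ↥P' := Submodule.inclusion hPP' p with hv
    have hvp : ((v : A)) = (p : A) := rfl
    have hsmem : v ∈ S := by
      show ((v : ↥P') : A) ∈ P
      rw [hvp]; exact p.2
    set s : ↥S := ⟨v, hsmem⟩ with hs
    have hus : u s = p := by
      apply Subtype.ext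
      rfl
    have hfp : f p = ih (inrA (φ s)) := by
      have h1 : ih (inrA (φ s)) = i₀ ⟨inrA (φ s), ⟨φ s, rfl⟩⟩ := hia ⟨inrA (φ s), ⟨φ s, rfl⟩⟩
      rw [h1]
      show f p = ((((toAmal S φ ε).symm (inrA (φ s))).2 : ↥F) : X)
      have : (toAmal S φ ε).symm (inrA (φ s)) = ((0 : ↥P'), φ s) :=
        (toAmal S φ ε).symm_apply_apply _
      rw [this]
      show f p = f (u s)
      rw [hus]
    have hdiff : ih (inlA v) - f p = ih (toAmal S φ ε (v, -(φ s))) := by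
      rw [hfp, ← map_sub]
      congr 1
      show toAmal S φ ε (v, (0:↥F)) - toAmal S φ ε ((0:↥P'), φ s) = _
      rw [← map_sub]
      congr 1
      exact Prod.ext (by simp) (by simp)
    show ‖ih (inlA v) - f p‖ ≤ 2 * ε * ‖(p : A)‖
    rw [hdiff]
    have hbound : ‖toAmal S φ ε (v, -(φ s))‖ ≤ ε * ‖(p : A)‖ := by
      rw [amal_norm_def hε hε1 hu]
      have := amalN_glue (S := S) (φ := φ) hε s
      have hcoe : ((s : ↥P'), -(φ s)) = (v, -(φ s)) := rfl
      rw [hcoe] at this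
      exact this
    have hih_bound : ‖ih (toAmal S φ ε (v, -(φ s)))‖ ≤ (1 + ε') * ‖toAmal S φ ε (v, -(φ s))‖ := by
      rcases eq_or_ne (toAmal S φ ε (v, -(φ s))) 0 with hz | hz
      · rw [hz]; simp
      · exact (hih.2 _ hz).2.le
    calc ‖ih (toAmal S φ ε (v, -(φ s)))‖ ≤ (1 + ε') * ‖toAmal S φ ε (v, -(φ s))‖ := hih_bound
      _ ≤ (1 + ε') * (ε * ‖(p : A)‖) := by
          refine mul_le_mul_of_nonneg_left hbound (by linarith)
      _ ≤ 2 * ε * ‖(p : A)‖ := by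
          nlinarith [mul_nonneg hε.le (norm_nonneg (p : A)), hε'1, hε.le]
  · -- closeness on Q
    intro p
    set v : ↥Q' := Submodule.inclusion hQQ' p with hv
    have hvp : ((v : B)) = (p : B) := rfl
    have hsmem : v ∈ S₂ := by
      show ((v : ↥Q') : B) ∈ Q
      rw [hvp]; exact p.2
    set s : ↥S₂ := ⟨v, hsmem⟩ with hs
    have hus : u₂ s = p := by
      apply Subtype.ext
      rfl
    have hfp : g p = jh (inrB (φ₂ s)) := by
      have h1 : jh (inrB (φ₂ s)) = j₀ ⟨inrB (φ₂ s), ⟨φ₂ s, rfl⟩⟩ := hjb ⟨inrB (φ₂ s), ⟨φ₂ s, rfl⟩⟩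
      rw [h1]
      show g p = ((((toAmal S₂ φ₂ ε).symm (inrB (φ₂ s))).2 : ↥F₂) : Y)
      have : (toAmal S₂ φ₂ ε).symm (inrB (φ₂ s)) = ((0 : ↥Q'), φ₂ s) :=
        (toAmal S₂ φ₂ ε).symm_apply_apply _
      rw [this]
      show g p = g (u₂ s)
      rw [hus]
    have hdiff : jh (inlB v) - g p = jh (toAmal S₂ φ₂ ε (v, -(φ₂ s))) := by
      rw [hfp, ← map_sub]
      congr 1
      show toAmal S₂ φ₂ ε (v, (0:↥F₂)) - toAmal S₂ φ₂ ε ((0:↥Q'), φ₂ s) = _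
      rw [← map_sub]
      congr 1
      exact Prod.ext (by simp) (by simp)
    show ‖jh (inlB v) - g p‖ ≤ 2 * ε * ‖(p : B)‖
    rw [hdiff]
    have hbound : ‖toAmal S₂ φ₂ ε (v, -(φ₂ s))‖ ≤ ε * ‖(p : B)‖ := by
      rw [amal_norm_def hε hε1 hu₂]
      have := amalN_glue (S := S₂) (φ := φ₂) hε s
      have hcoe : ((s : ↥Q'), -(φ₂ s)) = (v, -(φ₂ s)) := rfl
      rw [hcoe] at this
      exact this
    have hjh_bound : ‖jh (toAmal S₂ φ₂ ε (v, -(φ₂ s)))‖ ≤ (1 + ε') * ‖toAmal S₂ φ₂ ε (v, -(φ₂ s))‖ := by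
      rcases eq_or_ne (toAmal S₂ φ₂ ε (v, -(φ₂ s))) 0 with hz | hz
      · rw [hz]; simp
      · exact (hjh.2 _ hz).2.le
    calc ‖jh (toAmal S₂ φ₂ ε (v, -(φ₂ s)))‖ ≤ (1 + ε') * ‖toAmal S₂ φ₂ ε (v, -(φ₂ s))‖ := hjh_bound
      _ ≤ (1 + ε') * (ε * ‖(p : B)‖) := by
          refine mul_le_mul_of_nonneg_left hbound (by linarith)
      _ ≤ 2 * ε * ‖(p : B)‖ := by
          nlinarith [mul_nonneg hε.le (norm_nonneg (p : B)), hε'1, hε.le]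

end StepSection

noncomputable section LimitSection

open Filter Topology

variable {A X : Type*} [NormedAddCommGroup A] [NormedSpace ℝ A]
  [NormedAddCommGroup X] [NormedSpace ℝ X] [CompleteSpace X]

open scoped Classical in
/-- Approximating sequence. -/
def seqApprox (P : ℕ → Submodule ℝ A) (f : ∀ n, ↥(P n) →L[ℝ] X) (x : A) (n : ℕ) : X :=
  if h : x ∈ P n then f n ⟨x, h⟩ else 0

lemma seqApprox_of_mem {P : ℕ → Submodule ℝ A} {f : ∀ n, ↥(P n) →L[ℝ] X}
    {x : A} {n : ℕ} (h : x ∈ P n) : seqApprox P f x n = f n ⟨x, h⟩ := by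
  simp only [seqApprox, dif_pos h]

set_option maxHeartbeats 1600000 in
theorem chain_limit (P : ℕ → Submodule ℝ A) (hmono : Monotone P)
    (hdense : Dense {x : A | ∃ n, x ∈ P n})
    (f : ∀ n, ↥(P n) →L[ℝ] X)
    (hf : ∀ n, ApproxIso ((2:ℝ)⁻¹ ^ n) (f n))
    (hclose : ∀ (n : ℕ) (x : A) (hx : x ∈ P n) (hx' : x ∈ P (n+1)),
      ‖f (n+1) ⟨x, hx'⟩ - f n ⟨x, hx⟩‖ ≤ 2 * (2:ℝ)⁻¹ ^ n * ‖x‖) :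
    ∃ i : A →ₗᵢ[ℝ] X, ∀ (x : A), (∃ n, x ∈ P n) →
      Tendsto (seqApprox P f x) atTop (𝓝 (i x)) := by
  classical
  set εn : ℕ → ℝ := fun n => (2:ℝ)⁻¹ ^ n with hεn
  have hεpos : ∀ n, 0 < εn n := fun n => by positivity
  set sx : A → ℕ → X := seqApprox P f with hsx
  have sx_of_mem : ∀ (x : A) (n : ℕ) (h : x ∈ P n), sx x n = f n ⟨x, h⟩ := by
    intro x n h
    simp only [hsx, seqApprox, dif_pos h]
  have hconsec : ∀ (x : A) (n : ℕ), x ∈ P n →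
      ‖sx x (n+1) - sx x n‖ ≤ 2 * εn n * ‖x‖ := by
    intro x n h
    have h' : x ∈ P (n+1) := hmono (Nat.le_succ n) h
    rw [sx_of_mem x n h, sx_of_mem x (n+1) h']
    exact hclose n x h h'
  have hcauchy : ∀ x : A, (∃ N, x ∈ P N) → ∃ l, Tendsto (sx x) atTop (𝓝 l) := by
    rintro x ⟨N, hN⟩
    have hmem : ∀ k, x ∈ P (k + N) := fun k => hmono (Nat.le_add_left N k) hN
    have ht : CauchySeq (fun k => sx x (k + N)) := by
      refine cauchySeq_of_le_geometric (2:ℝ)⁻¹ (2 * εn N * ‖x‖) (by norm_num) ?_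
      intro k
      rw [dist_eq_norm']
      have : (k + 1 + N) = (k + N) + 1 := by omega
      rw [this]
      refine le_trans (hconsec x (k + N) (hmem k)) ?_
      have : εn (k + N) = εn N * (2:ℝ)⁻¹ ^ k := by
        simp only [hεn, ← pow_add]
        ring_nf
      rw [this]
      ring_nf
      apply le_of_eq
      ring
    obtain ⟨l, hl⟩ := cauchySeq_tendsto_of_complete ht
    exact ⟨l, (Filter.tendsto_add_atTop_iff_nat N).mp hl⟩
  let lfun : A → X := fun x =>
    if hx : ∃ N, x ∈ P N then (hcauchy x hx).choose else 0
  have tendsto_l : ∀ (x : A) (hx : ∃ N, x ∈ P N), Tendsto (sx x) atTop (𝓝 (lfun x)) := by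
    intro x hx
    simp only [lfun, dif_pos hx]
    exact (hcauchy x hx).choose_spec
  set DS : Submodule ℝ A := ⨆ n, P n with hDS
  have memDS : ∀ x : A, x ∈ DS ↔ ∃ n, x ∈ P n := fun x =>
    Submodule.mem_iSup_of_directed P hmono.directed_le
  -- the limit is linear and isometric on DS
  have lin_add : ∀ x y : A, (∃ n, x ∈ P n) → (∃ n, y ∈ P n) →
      lfun (x + y) = lfun x + lfun y := by
    rintro x y ⟨Nx, hNx⟩ ⟨Ny, hNy⟩
    have hxy : ∃ n, x + y ∈ P n :=
      ⟨max Nx Ny, (P (max Nx Ny)).add_mem (hmono (le_max_left _ _) hNx)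
        (hmono (le_max_right _ _) hNy)⟩
    have h1 : Tendsto (sx (x + y)) atTop (𝓝 (lfun (x+y))) := tendsto_l _ hxy
    have h2 : Tendsto (fun n => sx x n + sx y n) atTop (𝓝 (lfun x + lfun y)) :=
      (tendsto_l x ⟨Nx, hNx⟩).add (tendsto_l y ⟨Ny, hNy⟩)
    have heq : ∀ᶠ n in atTop, sx (x + y) n = sx x n + sx y n := by
      filter_upwards [eventually_ge_atTop (max Nx Ny)] with n hn
      have hx : x ∈ P n := hmono (le_trans (le_max_left _ _) hn) hNx
      have hy : y ∈ P n := hmono (le_trans (le_max_right _ _) hn) hNy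
      have hxy : x + y ∈ P n := (P n).add_mem hx hy
      rw [sx_of_mem _ _ hx, sx_of_mem _ _ hy, sx_of_mem _ _ hxy]
      have hss : (⟨x + y, hxy⟩ : ↥(P n)) = ⟨x, hx⟩ + ⟨y, hy⟩ := rfl
      rw [hss, map_add]
    exact tendsto_nhds_unique (h1.congr' (heq.mono fun n h => h)) h2
  have lin_smul : ∀ (c : ℝ) (x : A), (∃ n, x ∈ P n) → lfun (c • x) = c • lfun x := by
    rintro c x ⟨Nx, hNx⟩
    have hcx : ∃ n, c • x ∈ P n := ⟨Nx, (P Nx).smul_mem c hNx⟩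
    have h1 : Tendsto (sx (c • x)) atTop (𝓝 (lfun (c • x))) := tendsto_l _ hcx
    have h2 : Tendsto (fun n => c • sx x n) atTop (𝓝 (c • lfun x)) :=
      (tendsto_l x ⟨Nx, hNx⟩).const_smul c
    have heq : ∀ᶠ n in atTop, sx (c • x) n = c • sx x n := by
      filter_upwards [eventually_ge_atTop Nx] with n hn
      have hx : x ∈ P n := hmono hn hNx
      have hcx : c • x ∈ P n := (P n).smul_mem c hx
      rw [sx_of_mem _ _ hx, sx_of_mem _ _ hcx]
      have hss : (⟨c • x, hcx⟩ : ↥(P n)) = c • ⟨x, hx⟩ := rfl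
      rw [hss, map_smul]
    exact tendsto_nhds_unique (h1.congr' (heq.mono fun n h => h)) h2
  have lnorm : ∀ x : A, (∃ n, x ∈ P n) → ‖lfun x‖ = ‖x‖ := by
    rintro x ⟨Nx, hNx⟩
    have h1 : Tendsto (fun n => ‖sx x n‖) atTop (𝓝 ‖lfun x‖) :=
      (tendsto_l x ⟨Nx, hNx⟩).norm
    have h2 : Tendsto (fun n => ‖sx x n‖) atTop (𝓝 ‖x‖) := by
      have hsq : ∀ n ≥ Nx, |‖sx x n‖ - ‖x‖| ≤ εn n * ‖x‖ := by
        intro n hn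
        have hx : x ∈ P n := hmono hn hNx
        rw [sx_of_mem _ _ hx]
        have hb := hf n ⟨x, hx⟩
        have hxn : ‖(⟨x, hx⟩ : ↥(P n))‖ = ‖x‖ := rfl
        rw [hxn] at hb
        have hεe : εn n = (2:ℝ)⁻¹ ^ n := rfl
        rw [hεe, abs_le]
        constructor
        · linarith [hb.1]
        · linarith [hb.2]
      have htend : Tendsto (fun n => εn n * ‖x‖) atTop (𝓝 0) := by
        have h0 : Tendsto εn atTop (𝓝 0) := by
          simpa [hεn, ← inv_pow] using tendsto_pow_atTop_nhds_zero_of_lt_one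
            (by norm_num : (0:ℝ) ≤ (2:ℝ)⁻¹) (by norm_num : (2:ℝ)⁻¹ < 1)
        have := h0.mul_const ‖x‖
        simpa [hεn, inv_pow] using this
      have hsub : Tendsto (fun n => ‖sx x n‖ - ‖x‖) atTop (𝓝 0) := by
        apply squeeze_zero_norm' ?_ htend
        filter_upwards [eventually_ge_atTop Nx] with n hn
        simpa [Real.norm_eq_abs] using hsq n hn
      have := hsub.add_const ‖x‖
      simpa using this
    exact tendsto_nhds_unique h1 h2
  -- package as a linear isometry on DS
  let llin : ↥DS →ₗ[ℝ] X :=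
    { toFun := fun d => lfun d
      map_add' := fun d e => by
        have hd := (memDS d).mp d.2
        have he := (memDS e).mp e.2
        show lfun ((d : A) + (e : A)) = lfun d + lfun e
        exact lin_add _ _ hd he
      map_smul' := fun c d => by
        have hd := (memDS d).mp d.2
        show lfun (c • (d : A)) = c • lfun d
        exact lin_smul c _ hd }
  let li : ↥DS →ₗᵢ[ℝ] X :=
    { toLinearMap := llin
      norm_map' := fun d => by
        have hd := (memDS d).mp d.2
        show ‖lfun (d : A)‖ = ‖(d : A)‖
        exact lnorm _ hd }
  have hsetDS : (DS : Set A) = {x : A | ∃ n, x ∈ P n} := by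
    ext x; exact memDS x
  have hdr : DenseRange ⇑(DS.subtypeL : ↥DS →L[ℝ] A) := by
    have hr : Set.range ⇑(DS.subtypeL : ↥DS →L[ℝ] A) = (DS : Set A) := Subtype.range_coe
    unfold DenseRange
    rw [hr, hsetDS]
    exact hdense
  have hui : IsUniformInducing ⇑(DS.subtypeL : ↥DS →L[ℝ] A) :=
    Isometry.isUniformInducing (isometry_subtype_coe)
  let iext : A →L[ℝ] X := (li.toContinuousLinearMap).extend DS.subtypeL
  have hext : ∀ d : ↥DS, iext (d : A) = lfun (d : A) := fun d =>
    ContinuousLinearMap.extend_eq _ hdr hui d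
  have hnorm : ∀ a : A, ‖iext a‖ = ‖a‖ := by
    have hcl : IsClosed {a : A | ‖iext a‖ = ‖a‖} :=
      isClosed_eq (continuous_norm.comp iext.continuous) continuous_norm
    have hsub : {x : A | ∃ n, x ∈ P n} ⊆ {a : A | ‖iext a‖ = ‖a‖} := by
      intro x hx
      have hxDS : x ∈ DS := (memDS x).mpr hx
      have h1 : iext x = lfun x := hext ⟨x, hxDS⟩
      show ‖iext x‖ = ‖x‖
      rw [h1, lnorm x hx]
    intro a
    have h2 := hcl.closure_subset_iff.mpr hsub
    have h3 : closure {x : A | ∃ n, x ∈ P n} = Set.univ := hdense.closure_eq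
    exact h2 (by rw [h3]; trivial)
  refine ⟨⟨iext.toLinearMap, hnorm⟩, ?_⟩
  intro x hx
  have hxDS : x ∈ DS := (memDS x).mpr hx
  show Tendsto (sx x) atTop (𝓝 (iext x))
  have h1 : iext x = lfun x := hext ⟨x, hxDS⟩
  rw [h1]
  exact tendsto_l x hx

end LimitSection

open Filter Topology in
set_option maxHeartbeats 1600000 in
theorem gurarii_op_universal' {X Y : Type*}
    [NormedAddCommGroup X] [NormedSpace ℝ X] [CompleteSpace X]
    [TopologicalSpace.SeparableSpace X]
    [NormedAddCommGroup Y] [NormedSpace ℝ Y] [CompleteSpace Y]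
    [TopologicalSpace.SeparableSpace Y]
    (G : X →L[ℝ] Y) (hG : IsGurariiOp G)
    (A B : Type*) [NormedAddCommGroup A] [NormedSpace ℝ A] [CompleteSpace A]
    [TopologicalSpace.SeparableSpace A]
    [NormedAddCommGroup B] [NormedSpace ℝ B] [CompleteSpace B]
    [TopologicalSpace.SeparableSpace B]
    (T : A →L[ℝ] B) (hT : ‖T‖ ≤ ‖G‖) :
    ∃ (i : A →ₗᵢ[ℝ] X) (j : B →ₗᵢ[ℝ] Y), ∀ a : A, G (i a) = j (T a) := by
  classical
  have hT1 : ‖T‖ ≤ 1 := hT.trans hG.1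
  haveI : Nonempty A := ⟨0⟩
  haveI : Nonempty B := ⟨0⟩
  set u : ℕ → A := TopologicalSpace.denseSeq A with hu_def
  set vb : ℕ → B := TopologicalSpace.denseSeq B with hvb_def
  have hu : DenseRange u := TopologicalSpace.denseRange_denseSeq A
  have hvb : DenseRange vb := TopologicalSpace.denseRange_denseSeq B
  set P : ℕ → Submodule ℝ A := fun n => Submodule.span ℝ (u '' Set.Iio n) with hP_def
  set Q : ℕ → Submodule ℝ B :=
    fun n => Submodule.span ℝ (vb '' Set.Iio n) ⊔ (P n).map (T : A →ₗ[ℝ] B) with hQ_def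
  have hPmono : Monotone P := fun m n h =>
    Submodule.span_mono (Set.image_mono (Set.Iio_subset_Iio h))
  have hQmono : Monotone Q := fun m n h =>
    sup_le_sup (Submodule.span_mono (Set.image_mono (Set.Iio_subset_Iio h)))
      (Submodule.map_mono (hPmono h))
  have hPfd : ∀ n, FiniteDimensional ℝ ↥(P n) := fun n =>
    FiniteDimensional.span_of_finite ℝ ((Set.finite_Iio n).image u)
  have hQfd : ∀ n, FiniteDimensional ℝ ↥(Q n) := fun n => by
    haveI := hPfd n
    haveI : FiniteDimensional ℝ ↥(Submodule.span ℝ (vb '' Set.Iio n)) :=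
      FiniteDimensional.span_of_finite ℝ ((Set.finite_Iio n).image vb)
    haveI : FiniteDimensional ℝ ↥((P n).map (T : A →ₗ[ℝ] B)) :=
      Module.Finite.map _ _
    exact Submodule.finiteDimensional_sup _ _
  have hTPQ : ∀ n, ∀ a ∈ P n, T a ∈ Q n := fun n a ha =>
    Submodule.mem_sup_right (Submodule.mem_map_of_mem ha)
  have hdenseP : Dense {x : A | ∃ n, x ∈ P n} := by
    refine hu.mono ?_
    rintro x ⟨k, rfl⟩
    exact ⟨k + 1, Submodule.subset_span ⟨k, Nat.lt_succ_self k, rfl⟩⟩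
  have hdenseQ : Dense {x : B | ∃ n, x ∈ Q n} := by
    refine hvb.mono ?_
    rintro x ⟨k, rfl⟩
    exact ⟨k + 1, Submodule.mem_sup_left (Submodule.subset_span ⟨k, Nat.lt_succ_self k, rfl⟩)⟩
  -- the chain of approximations
  let Ch : ℕ → Type _ := fun n =>
    {fg : (↥(P n) →L[ℝ] X) × (↥(Q n) →L[ℝ] Y) //
      ApproxIso ((2:ℝ)⁻¹ ^ n) fg.1 ∧ ApproxIso ((2:ℝ)⁻¹ ^ n) fg.2 ∧
      ∀ p : ↥(P n), G (fg.1 p) = fg.2 ⟨T p, hTPQ n p p.2⟩}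
  have c0 : Ch 0 := by
    refine ⟨(0, 0), ?_, ?_, ?_⟩
    · intro p; simp
    · intro p; simp
    · intro p; simp
  have step : ∀ n (c : Ch n), ∃ c' : Ch (n + 1),
      (∀ p : ↥(P n), ‖c'.1.1 (Submodule.inclusion (hPmono (Nat.le_succ n)) p) - c.1.1 p‖ ≤
        2 * (2:ℝ)⁻¹ ^ n * ‖(p : A)‖) ∧
      (∀ q : ↥(Q n), ‖c'.1.2 (Submodule.inclusion (hQmono (Nat.le_succ n)) q) - c.1.2 q‖ ≤
        2 * (2:ℝ)⁻¹ ^ n * ‖(q : B)‖) := by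
    intro n c
    haveI := hPfd (n + 1)
    haveI := hQfd (n + 1)
    have hεn : (0:ℝ) < (2:ℝ)⁻¹ ^ n := by positivity
    have hεn1 : (2:ℝ)⁻¹ ^ n ≤ 1 := pow_le_one₀ (by norm_num) (by norm_num)
    have hεn' : (0:ℝ) < (2:ℝ)⁻¹ ^ (n+1) := by positivity
    have hεn1' : (2:ℝ)⁻¹ ^ (n+1) ≤ 1 := pow_le_one₀ (by norm_num) (by norm_num)
    obtain ⟨f', g', hf', hg', hcom', hcl1, hcl2⟩ :=
      gurarii_step hG T hT1 (P n) (P (n+1)) (Q n) (Q (n+1))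
        (hPmono (Nat.le_succ n)) (hQmono (Nat.le_succ n))
        (hTPQ n) (hTPQ (n+1)) c.1.1 c.1.2
        ((2:ℝ)⁻¹ ^ n) ((2:ℝ)⁻¹ ^ (n+1)) hεn hεn1 hεn' hεn1'
        c.2.1 c.2.2.1 c.2.2.2
    exact ⟨⟨(f', g'), hf', hg', hcom'⟩, hcl1, hcl2⟩
  let seq : ∀ n, Ch n := fun n => Nat.rec c0 (fun k c => (step k c).choose) n
  have hseq : ∀ n, seq (n + 1) = (step n (seq n)).choose := fun n => rfl
  let f : ∀ n, ↥(P n) →L[ℝ] X := fun n => (seq n).1.1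
  let g : ∀ n, ↥(Q n) →L[ℝ] Y := fun n => (seq n).1.2
  have hf : ∀ n, ApproxIso ((2:ℝ)⁻¹ ^ n) (f n) := fun n => (seq n).2.1
  have hg : ∀ n, ApproxIso ((2:ℝ)⁻¹ ^ n) (g n) := fun n => (seq n).2.2.1
  have hcom : ∀ n (p : ↥(P n)), G (f n p) = g n ⟨T p, hTPQ n p p.2⟩ := fun n => (seq n).2.2.2
  have hclosef : ∀ (n : ℕ) (x : A) (hx : x ∈ P n) (hx' : x ∈ P (n+1)),
      ‖f (n+1) ⟨x, hx'⟩ - f n ⟨x, hx⟩‖ ≤ 2 * (2:ℝ)⁻¹ ^ n * ‖x‖ := by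
    intro n x hx hx'
    have hspec := (step n (seq n)).choose_spec
    rw [← hseq n] at hspec
    have h1 := hspec.1 ⟨x, hx⟩
    have h2 : (⟨x, hx'⟩ : ↥(P (n+1))) =
        Submodule.inclusion (hPmono (Nat.le_succ n)) ⟨x, hx⟩ := rfl
    rw [h2]
    exact h1
  have hcloseg : ∀ (n : ℕ) (x : B) (hx : x ∈ Q n) (hx' : x ∈ Q (n+1)),
      ‖g (n+1) ⟨x, hx'⟩ - g n ⟨x, hx⟩‖ ≤ 2 * (2:ℝ)⁻¹ ^ n * ‖x‖ := by
    intro n x hx hx'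
    have hspec := (step n (seq n)).choose_spec
    rw [← hseq n] at hspec
    have h1 := hspec.2 ⟨x, hx⟩
    have h2 : (⟨x, hx'⟩ : ↥(Q (n+1))) =
        Submodule.inclusion (hQmono (Nat.le_succ n)) ⟨x, hx⟩ := rfl
    rw [h2]
    exact h1
  obtain ⟨iA, htendA⟩ := chain_limit P hPmono hdenseP f hf hclosef
  obtain ⟨iB, htendB⟩ := chain_limit Q hQmono hdenseQ g hg hcloseg
  refine ⟨iA, iB, ?_⟩
  have hcl : IsClosed {a : A | G (iA a) = iB (T a)} := by
    apply isClosed_eq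
    · exact G.continuous.comp iA.continuous
    · exact iB.continuous.comp T.continuous
  have hsub : {x : A | ∃ n, x ∈ P n} ⊆ {a : A | G (iA a) = iB (T a)} := by
    rintro x ⟨n0, hx0⟩
    have h1 : Tendsto (fun n => G (seqApprox P f x n)) atTop (𝓝 (G (iA x))) :=
      (G.continuous.tendsto _).comp (htendA x ⟨n0, hx0⟩)
    have h2 : Tendsto (seqApprox Q g (T x)) atTop (𝓝 (iB (T x))) :=
      htendB (T x) ⟨n0, hTPQ n0 x hx0⟩
    have heq : ∀ᶠ n in atTop, G (seqApprox P f x n) = seqApprox Q g (T x) n := by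
      filter_upwards [eventually_ge_atTop n0] with n hn
      have hx : x ∈ P n := hPmono hn hx0
      have hTx : T x ∈ Q n := hTPQ n x hx
      rw [seqApprox_of_mem hx, seqApprox_of_mem hTx]
      exact hcom n ⟨x, hx⟩
    exact tendsto_nhds_unique (h1.congr' heq) h2
  intro a
  have h2 := hcl.closure_subset_iff.mpr hsub
  have h3 : closure {x : A | ∃ n, x ∈ P n} = Set.univ := hdenseP.closure_eq
  exact h2 (by rw [h3]; trivial)

/-- Every Gurarii operator between separable real Banach spaces is universal: every
bounded operator `T : A → B` between separable real Banach spaces with `‖T‖ ≤ ‖G‖`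
factors through `G` via isometric embeddings. -/
theorem gurarii_op_universal {X Y : Type*}
    [NormedAddCommGroup X] [NormedSpace ℝ X] [CompleteSpace X]
    [TopologicalSpace.SeparableSpace X]
    [NormedAddCommGroup Y] [NormedSpace ℝ Y] [CompleteSpace Y]
    [TopologicalSpace.SeparableSpace Y]
    (G : X →L[ℝ] Y) (hG : IsGurariiOp G)
    (A B : Type*) [NormedAddCommGroup A] [NormedSpace ℝ A] [CompleteSpace A]
    [TopologicalSpace.SeparableSpace A]
    [NormedAddCommGroup B] [NormedSpace ℝ B] [CompleteSpace B]
    [TopologicalSpace.SeparableSpace B]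
    (T : A →L[ℝ] B) (hT : ‖T‖ ≤ ‖G‖) :
    ∃ (i : A →ₗᵢ[ℝ] X) (j : B →ₗᵢ[ℝ] Y), ∀ a : A, G (i a) = j (T a) := by
  exact gurarii_op_universal' G hG A B T hT
end

section
/- Let 𝔾 be a Gurarii space and let Ω : 𝔾 → 𝔾 be a Gurarii operator. Then the set of all Gurarii operators from 𝔾 to 𝔾 coincides with the orbit {I ∘ Ω ∘ J : I, J are bijective linear isometries of 𝔾} of Ω under the two-sided action of the isometry group of 𝔾. -/
open Metric Set

namespace GurariiProof

/-- A bundled "abstract norm" on a real vector space, given as a plain function. -/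
structure IsNorm {V : Type*} [AddCommGroup V] [Module ℝ V] (N : V → ℝ) : Prop where
  zero : N 0 = 0
  add_le : ∀ x y, N (x + y) ≤ N x + N y
  smul : ∀ (c : ℝ) (x), N (c • x) = |c| * N x
  eq_zero : ∀ x, N x = 0 → x = 0
  nonneg : ∀ x, 0 ≤ N x

/-- A universe-0 copy of `Fin n → ℝ`, carrying no norm instances, so that custom
norms can be installed locally. -/
def NCopy (n : ℕ) : Type := Fin n → ℝ

noncomputable instance (n : ℕ) : AddCommGroup (NCopy n) := inferInstanceAs (AddCommGroup (Fin n → ℝ))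
noncomputable instance (n : ℕ) : Module ℝ (NCopy n) := inferInstanceAs (Module ℝ (Fin n → ℝ))
instance (n : ℕ) : Module.Finite ℝ (NCopy n) := inferInstanceAs (Module.Finite ℝ (Fin n → ℝ))

noncomputable def NCopy.lequiv (n : ℕ) : NCopy n ≃ₗ[ℝ] (Fin n → ℝ) := LinearEquiv.refl ℝ (Fin n → ℝ)

/-- Applying the Gurarii-operator property to finite-dimensional real vector spaces
in an arbitrary universe, with norms given as plain functions. -/
theorem gurarii_op_apply {𝕏 : Type*} [NormedAddCommGroup 𝕏] [NormedSpace ℝ 𝕏]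
    {W : 𝕏 →L[ℝ] 𝕏} (hW : IsGurariiOp W)
    {V₁ V₂ : Type*} [AddCommGroup V₁] [Module ℝ V₁] [Module.Finite ℝ V₁]
    [AddCommGroup V₂] [Module ℝ V₂] [Module.Finite ℝ V₂]
    {N₁ : V₁ → ℝ} {N₂ : V₂ → ℝ} (hN₁ : IsNorm N₁) (hN₂ : IsNorm N₂)
    (T : V₁ →ₗ[ℝ] V₂) (hT : ∀ p, N₂ (T p) ≤ N₁ p)
    (A₀ : Submodule ℝ V₁) (B₀ : Submodule ℝ V₂) (hT₀ : ∀ p ∈ A₀, T p ∈ B₀)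
    (i₀ : A₀ →ₗ[ℝ] 𝕏) (hi₀ : ∀ a : A₀, ‖i₀ a‖ = N₁ a)
    (j₀ : B₀ →ₗ[ℝ] 𝕏) (hj₀ : ∀ b : B₀, ‖j₀ b‖ = N₂ b)
    (hcomm : ∀ a : A₀, W (i₀ a) = j₀ ⟨T a, hT₀ a a.2⟩)
    {δ : ℝ} (hδ : 0 < δ) :
    ∃ (i : V₁ →ₗ[ℝ] 𝕏) (j : V₂ →ₗ[ℝ] 𝕏),
      (∀ p, (1 - δ) * N₁ p ≤ ‖i p‖ ∧ ‖i p‖ ≤ (1 + δ) * N₁ p) ∧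
      (∀ q, (1 - δ) * N₂ q ≤ ‖j q‖ ∧ ‖j q‖ ≤ (1 + δ) * N₂ q) ∧
      (∀ a : A₀, i a = i₀ a) ∧ (∀ b : B₀, j b = j₀ b) ∧
      (∀ p, W (i p) = j (T p)) := by
  classical
  haveI : FiniteDimensional ℝ V₁ := ‹Module.Finite ℝ V₁›
  haveI : FiniteDimensional ℝ V₂ := ‹Module.Finite ℝ V₂›
  set n₁ := Module.finrank ℝ V₁ with hn₁
  set n₂ := Module.finrank ℝ V₂ with hn₂
  let φ₁ : NCopy n₁ ≃ₗ[ℝ] V₁ := (NCopy.lequiv n₁).trans (Module.finBasis ℝ V₁).equivFun.symm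
  let φ₂ : NCopy n₂ ≃ₗ[ℝ] V₂ := (NCopy.lequiv n₂).trans (Module.finBasis ℝ V₂).equivFun.symm
  letI : NormedAddCommGroup (NCopy n₁) := AddGroupNorm.toNormedAddCommGroup
    { toFun := fun x => N₁ (φ₁ x)
      map_zero' := by simpa using hN₁.zero
      add_le' := fun x y => by simpa using hN₁.add_le (φ₁ x) (φ₁ y)
      neg' := fun x => by
        have := hN₁.smul (-1) (φ₁ x); simp only [abs_neg, abs_one, one_mul, neg_smul,
          one_smul] at this
        simpa using this
      eq_zero_of_map_eq_zero' := fun x h => by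
        have := hN₁.eq_zero _ h
        exact (map_eq_zero_iff φ₁ φ₁.injective).mp this }
  letI : NormedSpace ℝ (NCopy n₁) := ⟨fun c x => by
    show N₁ (φ₁ (c • x)) ≤ ‖c‖ * N₁ (φ₁ x)
    rw [map_smul, hN₁.smul, Real.norm_eq_abs]⟩
  letI : NormedAddCommGroup (NCopy n₂) := AddGroupNorm.toNormedAddCommGroup
    { toFun := fun x => N₂ (φ₂ x)
      map_zero' := by simpa using hN₂.zero
      add_le' := fun x y => by simpa using hN₂.add_le (φ₂ x) (φ₂ y)
      neg' := fun x => by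
        have := hN₂.smul (-1) (φ₂ x); simp only [abs_neg, abs_one, one_mul, neg_smul,
          one_smul] at this
        simpa using this
      eq_zero_of_map_eq_zero' := fun x h => by
        have := hN₂.eq_zero _ h
        exact (map_eq_zero_iff φ₂ φ₂.injective).mp this }
  letI : NormedSpace ℝ (NCopy n₂) := ⟨fun c x => by
    show N₂ (φ₂ (c • x)) ≤ ‖c‖ * N₂ (φ₂ x)
    rw [map_smul, hN₂.smul, Real.norm_eq_abs]⟩
  have hnorm₁ : ∀ x : NCopy n₁, ‖x‖ = N₁ (φ₁ x) := fun _ => rfl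
  have hnorm₂ : ∀ x : NCopy n₂, ‖x‖ = N₂ (φ₂ x) := fun _ => rfl
  let T' : NCopy n₁ →ₗ[ℝ] NCopy n₂ :=
    (φ₂.symm.toLinearMap.comp T).comp φ₁.toLinearMap
  let T'' : NCopy n₁ →L[ℝ] NCopy n₂ := LinearMap.toContinuousLinearMap T'
  have hT'app : ∀ x, T'' x = φ₂.symm (T (φ₁ x)) := fun x => rfl
  have hT'' : ‖T''‖ ≤ 1 := by
    refine ContinuousLinearMap.opNorm_le_bound _ zero_le_one fun x => ?_
    rw [hT'app, hnorm₂, hnorm₁, φ₂.apply_symm_apply, one_mul]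
    exact hT _
  -- transported submodules
  let A₀' : Submodule ℝ (NCopy n₁) := A₀.map (φ₁.symm : V₁ →ₗ[ℝ] NCopy n₁)
  let B₀' : Submodule ℝ (NCopy n₂) := B₀.map (φ₂.symm : V₂ →ₗ[ℝ] NCopy n₂)
  let eA : A₀ ≃ₗ[ℝ] A₀' := φ₁.symm.submoduleMap A₀
  let eB : B₀ ≃ₗ[ℝ] B₀' := φ₂.symm.submoduleMap B₀
  have heA : ∀ a : A₀, (eA a : NCopy n₁) = φ₁.symm a := fun a => rfl
  have heA' : ∀ a : A₀', (φ₁ a : V₁) = ((eA.symm a : A₀) : V₁) := by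
    intro a
    have : eA (eA.symm a) = a := eA.apply_symm_apply a
    have h2 := heA (eA.symm a)
    rw [this] at h2
    rw [h2, φ₁.apply_symm_apply]
  have heB : ∀ b : B₀, (eB b : NCopy n₂) = φ₂.symm b := fun b => rfl
  have heB' : ∀ b : B₀', (φ₂ b : V₂) = ((eB.symm b : B₀) : V₂) := by
    intro b
    have : eB (eB.symm b) = b := eB.apply_symm_apply b
    have h2 := heB (eB.symm b)
    rw [this] at h2
    rw [h2, φ₂.apply_symm_apply]
  let i₀' : A₀' →ₗᵢ[ℝ] 𝕏 :=
    { toLinearMap := i₀.comp (eA.symm : A₀' →ₗ[ℝ] A₀)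
      norm_map' := fun a => by
        show ‖i₀ (eA.symm a)‖ = ‖(a : NCopy n₁)‖
        rw [hi₀, hnorm₁, heA' a] }
  let j₀' : B₀' →ₗᵢ[ℝ] 𝕏 :=
    { toLinearMap := j₀.comp (eB.symm : B₀' →ₗ[ℝ] B₀)
      norm_map' := fun b => by
        show ‖j₀ (eB.symm b)‖ = ‖(b : NCopy n₂)‖
        rw [hj₀, hnorm₂, heB' b] }
  have hT₀' : ∀ p ∈ A₀', T'' p ∈ B₀' := by
    rintro p ⟨q, hq, rfl⟩
    refine ⟨T q, hT₀ q hq, ?_⟩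
    rw [hT'app]
    simp only [LinearEquiv.coe_coe]
    rw [φ₁.apply_symm_apply]
  have hcomm' : ∀ a : A₀', W (i₀' a) = j₀' ⟨T'' a, hT₀' a a.2⟩ := by
    intro a
    show W (i₀ (eA.symm a)) = j₀ (eB.symm ⟨T'' (a : NCopy n₁), hT₀' a a.2⟩)
    rw [hcomm (eA.symm a)]
    congr 1
    apply Subtype.ext
    have : (φ₂ (T'' (a : NCopy n₁)) : V₂) = T (φ₁ (a : NCopy n₁)) := by
      rw [hT'app, φ₂.apply_symm_apply]
    have h2 := heB' ⟨T'' (a : NCopy n₁), hT₀' a a.2⟩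
    rw [← h2]
    show (T ((eA.symm a : A₀) : V₁)) = φ₂ (T'' (a : NCopy n₁))
    rw [this, heA' a]
  obtain ⟨i', j', hi', hj', hiext, hjext, hcomm2⟩ :=
    hW.2 δ hδ (NCopy n₁) (NCopy n₂) T'' hT'' A₀' B₀' hT₀' i₀' j₀' hcomm'
  refine ⟨i'.toLinearMap.comp (φ₁.symm : V₁ →ₗ[ℝ] NCopy n₁),
    j'.toLinearMap.comp (φ₂.symm : V₂ →ₗ[ℝ] NCopy n₂), ?_, ?_, ?_, ?_, ?_⟩
  · intro p
    show (1 - δ) * N₁ p ≤ ‖i' (φ₁.symm p)‖ ∧ ‖i' (φ₁.symm p)‖ ≤ (1 + δ) * N₁ p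
    by_cases hp : p = 0
    · subst hp
      simp [hN₁.zero]
    · have hne : φ₁.symm p ≠ 0 := fun h => hp (by simpa using (map_eq_zero_iff φ₁.symm φ₁.symm.injective).mp h)
      have := hi'.2 _ hne
      rw [hnorm₁, φ₁.apply_symm_apply] at this
      exact ⟨this.1.le, this.2.le⟩
  · intro q
    show (1 - δ) * N₂ q ≤ ‖j' (φ₂.symm q)‖ ∧ ‖j' (φ₂.symm q)‖ ≤ (1 + δ) * N₂ q
    by_cases hq : q = 0
    · subst hq
      simp [hN₂.zero]
    · have hne : φ₂.symm q ≠ 0 := fun h => hq (by simpa using (map_eq_zero_iff φ₂.symm φ₂.symm.injective).mp h)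
      have := hj'.2 _ hne
      rw [hnorm₂, φ₂.apply_symm_apply] at this
      exact ⟨this.1.le, this.2.le⟩
  · intro a
    show i' (φ₁.symm (a : V₁)) = i₀ a
    have hmem : φ₁.symm (a : V₁) ∈ A₀' := ⟨a, a.2, rfl⟩
    have := hiext ⟨φ₁.symm (a : V₁), hmem⟩
    rw [this]
    show i₀ (eA.symm ⟨φ₁.symm (a : V₁), hmem⟩) = i₀ a
    have hEA : eA a = ⟨φ₁.symm (a : V₁), hmem⟩ := Subtype.ext (heA a)
    rw [← hEA, eA.symm_apply_apply]
  · intro b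
    show j' (φ₂.symm (b : V₂)) = j₀ b
    have hmem : φ₂.symm (b : V₂) ∈ B₀' := ⟨b, b.2, rfl⟩
    have := hjext ⟨φ₂.symm (b : V₂), hmem⟩
    rw [this]
    show j₀ (eB.symm ⟨φ₂.symm (b : V₂), hmem⟩) = j₀ b
    have hEB : eB b = ⟨φ₂.symm (b : V₂), hmem⟩ := Subtype.ext (heB b)
    rw [← hEB, eB.symm_apply_apply]
  · intro p
    show W (i' (φ₁.symm p)) = j' (φ₂.symm (T p))
    rw [hcomm2 (φ₁.symm p)]
    congr 1
    rw [hT'app, φ₁.apply_symm_apply]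


/-! ### Part B: the pushout norm -/

variable {𝕏 : Type*} [NormedAddCommGroup 𝕏] [NormedSpace ℝ 𝕏]

/-- Non-strict `ε`-embedding bounds. -/
def EmbB (ε : ℝ) {A : Submodule ℝ 𝕏} (u : A →ₗ[ℝ] 𝕏) : Prop :=
  ∀ a : A, (1 - ε) * ‖(a : 𝕏)‖ ≤ ‖u a‖ ∧ ‖u a‖ ≤ (1 + ε) * ‖(a : 𝕏)‖

theorem EmbB.injective {ε : ℝ} (hε : ε < 1) {A : Submodule ℝ 𝕏} {u : A →ₗ[ℝ] 𝕏}
    (hu : EmbB ε u) : Function.Injective u := by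
  rw [← LinearMap.ker_eq_bot, Submodule.eq_bot_iff]
  intro a ha
  have h := (hu a).1
  rw [LinearMap.mem_ker] at ha
  rw [ha, norm_zero] at h
  have : ‖(a : 𝕏)‖ = 0 := by nlinarith [norm_nonneg (a : 𝕏)]
  exact Subtype.ext (norm_eq_zero.mp this)

section Push

variable {Ahat A' A : Submodule ℝ 𝕏}

/-- One term of the pushout-norm infimum. -/
def pushT (ε : ℝ) (u : A →ₗ[ℝ] 𝕏) (p : Ahat × A') (a : A) : ℝ :=
  ‖(p.1 : 𝕏) - (a : 𝕏)‖ + ‖u a + (p.2 : 𝕏)‖ + 2 * ε * ‖(a : 𝕏)‖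

/-- The pushout norm on `Ahat × A'`. -/
noncomputable def pushN (ε : ℝ) (u : A →ₗ[ℝ] 𝕏) (p : Ahat × A') : ℝ :=
  ⨅ a : A, pushT ε u p a

variable {ε : ℝ} {u : A →ₗ[ℝ] 𝕏}

theorem pushT_nonneg (hε : 0 < ε) (p : Ahat × A') (a : A) : 0 ≤ pushT ε u p a := by
  unfold pushT
  positivity

theorem pushN_le (hε : 0 < ε) (p : Ahat × A') (a : A) : pushN ε u p ≤ pushT ε u p a :=
  ciInf_le ⟨0, by rintro x ⟨b, rfl⟩; exact pushT_nonneg hε p b⟩ a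

theorem le_pushN (hε : 0 < ε) (p : Ahat × A') {c : ℝ} (h : ∀ a : A, c ≤ pushT ε u p a) :
    c ≤ pushN ε u p :=
  le_ciInf h

theorem pushN_nonneg (hε : 0 < ε) (p : Ahat × A') : 0 ≤ pushN ε u p :=
  le_pushN hε p fun a => pushT_nonneg hε p a

theorem exists_pushT_lt (hε : 0 < ε) (p : Ahat × A') {c : ℝ} (h : pushN ε u p < c) :
    ∃ a : A, pushT ε u p a < c :=
  exists_lt_of_ciInf_lt h

theorem pushN_fst (hε : 0 < ε) (hε2 : ε ≤ 1 / 2) (hu : EmbB ε u) (b : Ahat) :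
    pushN ε u (b, (0 : A')) = ‖(b : 𝕏)‖ := by
  apply le_antisymm
  · have := pushN_le (u := u) hε (b, (0 : A')) 0
    simpa [pushT] using this
  · refine le_pushN hε _ fun a => ?_
    have h1 := (hu a).1
    have h2 : ‖(b : 𝕏)‖ ≤ ‖(b : 𝕏) - (a : 𝕏)‖ + ‖(a : 𝕏)‖ := by
      simpa using norm_add_le ((b : 𝕏) - a) a
    have h0 := norm_nonneg ((a : 𝕏))
    simp only [pushT, Submodule.coe_zero, add_zero]
    nlinarith [mul_nonneg hε.le h0]
  
theorem pushN_snd (hε : 0 < ε) (hε2 : ε ≤ 1 / 2) (hu : EmbB ε u) (x : A') :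
    pushN ε u ((0 : Ahat), x) = ‖(x : 𝕏)‖ := by
  apply le_antisymm
  · have := pushN_le (u := u) hε ((0 : Ahat), x) 0
    simpa [pushT] using this
  · refine le_pushN hε _ fun a => ?_
    have h1 := (hu a).2
    have h2 : ‖(x : 𝕏)‖ ≤ ‖u a‖ + ‖u a + (x : 𝕏)‖ := by
      simpa using norm_add_le (-(u a)) (u a + x)
    have h0 := norm_nonneg ((a : 𝕏))
    simp only [pushT, Submodule.coe_zero, zero_sub, norm_neg]
    nlinarith [mul_nonneg hε.le h0]

theorem pushN_glue (hε : 0 < ε) (hA : A ≤ Ahat) (huA' : ∀ a : A, u a ∈ A') (a : A) :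
    pushN ε u ((⟨(a : 𝕏), hA a.2⟩ : Ahat), -(⟨u a, huA' a⟩ : A')) ≤ 2 * ε * ‖(a : 𝕏)‖ := by
  have := pushN_le (u := u) hε ((⟨(a : 𝕏), hA a.2⟩ : Ahat), -(⟨u a, huA' a⟩ : A')) a
  simpa [pushT] using this

theorem pushN_fst_lb (hε : 0 < ε) (hε2 : ε ≤ 1 / 2) (p : Ahat × A') :
    2 * ε * ‖(p.1 : 𝕏)‖ ≤ pushN ε u p := by
  refine le_pushN hε _ fun a => ?_
  have h2 : ‖(p.1 : 𝕏)‖ ≤ ‖(p.1 : 𝕏) - (a : 𝕏)‖ + ‖(a : 𝕏)‖ := by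
    simpa using norm_add_le ((p.1 : 𝕏) - a) a
  have h0 := norm_nonneg ((a : 𝕏))
  have h3 := norm_nonneg ((p.1 : 𝕏) - (a : 𝕏))
  have h4 := norm_nonneg (u a + (p.2 : 𝕏))
  simp only [pushT]
  nlinarith

theorem pushN_snd_lb (hε : 0 < ε) (hε2 : ε ≤ 1 / 2) (hu : EmbB ε u) (p : Ahat × A') :
    ε * ‖(p.2 : 𝕏)‖ ≤ pushN ε u p := by
  refine le_pushN hε _ fun a => ?_
  have h1 := (hu a).2
  have h2 : ‖(p.2 : 𝕏)‖ ≤ ‖u a‖ + ‖u a + (p.2 : 𝕏)‖ := by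
    simpa using norm_add_le (-(u a)) (u a + p.2)
  have h0 := norm_nonneg ((a : 𝕏))
  have h3 := norm_nonneg ((p.1 : 𝕏) - (a : 𝕏))
  have h4 := norm_nonneg (u a + (p.2 : 𝕏))
  have h5 := norm_nonneg (u a)
  have hA : ε * ‖u a‖ ≤ 2 * ε * ‖(a : 𝕏)‖ := by
    nlinarith [mul_le_mul_of_nonneg_left h1 hε.le,
      mul_nonneg (mul_nonneg hε.le h0) (by linarith : (0:ℝ) ≤ 1 - ε)]
  simp only [pushT]
  rcases le_total ‖u a‖ ‖(p.2 : 𝕏)‖ with h | h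
  · have hB : (1 - ε) * ‖u a‖ ≤ (1 - ε) * ‖(p.2 : 𝕏)‖ :=
      mul_le_mul_of_nonneg_left h (by linarith)
    linarith
  · have hC : ε * ‖(p.2 : 𝕏)‖ ≤ ε * ‖u a‖ := mul_le_mul_of_nonneg_left h hε.le
    linarith

theorem pushN_isNorm (hε : 0 < ε) (hε2 : ε ≤ 1 / 2) (hu : EmbB ε u) :
    IsNorm (pushN (Ahat := Ahat) (A' := A') ε u) := by
  haveI : Nonempty A := ⟨0⟩
  constructor
  · -- zero
    apply le_antisymm
    · have := pushN_le (u := u) (Ahat := Ahat) (A' := A') hε 0 0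
      simpa [pushT] using this
    · exact pushN_nonneg hε 0
  · -- add_le
    intro p q
    refine le_of_forall_pos_le_add fun η hη => ?_
    obtain ⟨a, ha⟩ := exists_pushT_lt (u := u) hε p
      (lt_add_of_pos_right (pushN ε u p) (half_pos hη))
    obtain ⟨b, hb⟩ := exists_pushT_lt (u := u) hε q
      (lt_add_of_pos_right (pushN ε u q) (half_pos hη))
    have key : pushT ε u (p + q) (a + b) ≤ pushT ε u p a + pushT ε u q b := by
      simp only [pushT, Prod.fst_add, Prod.snd_add, Submodule.coe_add, map_add]
      have e1 : ((p.1 : 𝕏) + q.1) - ((a : 𝕏) + b) = ((p.1 : 𝕏) - a) + ((q.1 : 𝕏) - b) := by abel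
      have e2 : (u a + u b) + ((p.2 : 𝕏) + q.2) = (u a + (p.2 : 𝕏)) + (u b + (q.2 : 𝕏)) := by abel
      rw [e1, e2]
      have t1 := norm_add_le ((p.1 : 𝕏) - a) ((q.1 : 𝕏) - b)
      have t2 := norm_add_le (u a + (p.2 : 𝕏)) (u b + (q.2 : 𝕏))
      have t3 := norm_add_le ((a : 𝕏)) ((b : 𝕏))
      nlinarith
    have := (pushN_le hε (p + q) (a + b)).trans key
    linarith
  · -- smul
    have key : ∀ (c : ℝ), c ≠ 0 → ∀ p : Ahat × A', pushN ε u (c • p) ≤ |c| * pushN ε u p := by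
      intro c hc p
      have habs : 0 < |c| := abs_pos.mpr hc
      refine le_of_forall_pos_le_add fun η hη => ?_
      obtain ⟨a, ha⟩ := exists_pushT_lt (u := u) hε p
        (lt_add_of_pos_right (pushN ε u p) (div_pos hη habs))
      have key2 : pushT ε u (c • p) (c • a) = |c| * pushT ε u p a := by
        simp only [pushT, Prod.smul_fst, Prod.smul_snd, Submodule.coe_smul, map_smul]
        rw [← smul_sub, ← smul_add, norm_smul, norm_smul, norm_smul, Real.norm_eq_abs]
        ring
      have := (pushN_le hε (c • p) (c • a)).trans key2.le
      calc pushN ε u (c • p) ≤ |c| * pushT ε u p a := this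
        _ ≤ |c| * (pushN ε u p + η / |c|) := by
            apply mul_le_mul_of_nonneg_left ha.le (abs_nonneg c)
        _ = |c| * pushN ε u p + η := by field_simp
    intro c p
    rcases eq_or_ne c 0 with rfl | hc
    · simp only [zero_smul, abs_zero, zero_mul]
      apply le_antisymm
      · have := pushN_le (u := u) (Ahat := Ahat) (A' := A') hε 0 0
        simpa [pushT] using this
      · exact pushN_nonneg hε 0
    · apply le_antisymm (key c hc p)
      have := key c⁻¹ (inv_ne_zero hc) (c • p)
      rw [inv_smul_smul₀ hc, abs_inv] at this
      have habs : 0 < |c| := abs_pos.mpr hc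
      calc |c| * pushN ε u p ≤ |c| * (|c|⁻¹ * pushN ε u (c • p)) := by
            apply mul_le_mul_of_nonneg_left this (abs_nonneg c)
        _ = pushN ε u (c • p) := by rw [← mul_assoc, mul_inv_cancel₀ habs.ne', one_mul]
  · -- eq_zero
    intro p hp
    have h1 := pushN_fst_lb (u := u) hε hε2 p
    have h2 := pushN_snd_lb hε hε2 hu p
    rw [hp] at h1 h2
    have e1 : ‖(p.1 : 𝕏)‖ = 0 := by nlinarith [norm_nonneg ((p.1 : 𝕏))]
    have e2 : ‖(p.2 : 𝕏)‖ = 0 := by nlinarith [norm_nonneg ((p.2 : 𝕏))]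
    have : p.1 = 0 := Subtype.ext (norm_eq_zero.mp e1)
    have : p.2 = 0 := Subtype.ext (norm_eq_zero.mp e2)
    exact Prod.ext ‹p.1 = 0› ‹p.2 = 0›
  · -- nonneg
    exact fun p => pushN_nonneg hε p

end Push


/-! ### Part C: inversion and the engine lemma -/

theorem exists_inverse {A : Submodule ℝ 𝕏} (u : A →ₗ[ℝ] 𝕏) {ε : ℝ} (hε : 0 < ε)
    (hε2 : ε ≤ 1/2) (hu : EmbB ε u) :
    ∃ p : (LinearMap.range u) →ₗ[ℝ] 𝕏, EmbB (2*ε) p ∧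
      (∀ a : A, p ⟨u a, LinearMap.mem_range_self u a⟩ = (a : 𝕏)) ∧
      (∀ y : LinearMap.range u, ∃ a : A, (a : 𝕏) = p y ∧ u a = (y : 𝕏)) := by
  have hinj : Function.Injective u := hu.injective (by linarith)
  let e : A ≃ₗ[ℝ] LinearMap.range u := LinearEquiv.ofInjective u hinj
  let p : (LinearMap.range u) →ₗ[ℝ] 𝕏 := A.subtype ∘ₗ (e.symm : LinearMap.range u →ₗ[ℝ] A)
  have he : ∀ a : A, (e a : 𝕏) = u a := fun a => rfl
  have hp : ∀ y : LinearMap.range u, u (e.symm y) = (y : 𝕏) := fun y => by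
    rw [← he (e.symm y), e.apply_symm_apply]
  have papp : ∀ y, p y = ((e.symm y : A) : 𝕏) := fun y => rfl
  refine ⟨p, ?_, ?_, fun y => ⟨e.symm y, (papp y).symm, hp y⟩⟩
  · intro y
    have h1 := (hu (e.symm y)).1
    have h2 := (hu (e.symm y)).2
    rw [hp y] at h1 h2
    rw [papp]
    have n0 := norm_nonneg (((e.symm y : A)) : 𝕏)
    have n1 := norm_nonneg ((y : 𝕏))
    constructor
    · nlinarith [mul_le_mul_of_nonneg_left h2 (by linarith : (0:ℝ) ≤ 1 - 2*ε),
        mul_nonneg (mul_nonneg hε.le hε.le) n0, mul_nonneg hε.le n0]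
    · nlinarith [mul_le_mul_of_nonneg_left h1 (by linarith : (0:ℝ) ≤ 1 + 2*ε),
        mul_nonneg (mul_nonneg hε.le hε.le) n0, mul_nonneg hε.le n0]
  · intro a
    have hEA : e a = ⟨u a, LinearMap.mem_range_self u a⟩ := Subtype.ext (he a)
    rw [papp, ← hEA, e.symm_apply_apply]

theorem engine {S W : 𝕏 →L[ℝ] 𝕏} (hS : ‖S‖ ≤ 1) (hW : IsGurariiOp W)
    {ε δ : ℝ} (hε : 0 < ε) (hε2 : ε ≤ 1/2) (hδ : 0 < δ) (hδ2 : δ ≤ 1/2)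
    {A Ahat B Bhat : Submodule ℝ 𝕏} [FiniteDimensional ℝ Ahat] [FiniteDimensional ℝ Bhat]
    (hAA : A ≤ Ahat) (hBB : B ≤ Bhat)
    (hSAhat : ∀ x ∈ Ahat, S x ∈ Bhat) (hSA : ∀ x ∈ A, S x ∈ B)
    {u : A →ₗ[ℝ] 𝕏} {v : B →ₗ[ℝ] 𝕏} (hu : EmbB ε u) (hv : EmbB ε v)
    (hW1 : ∀ a : A, W (u a) = v ⟨S a, hSA a a.2⟩) :
    ∃ (uh : Ahat →ₗ[ℝ] 𝕏) (vh : Bhat →ₗ[ℝ] 𝕏), EmbB δ uh ∧ EmbB δ vh ∧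
      (∀ a : A, ‖uh ⟨a, hAA a.2⟩ - u a‖ ≤ 3 * ε * ‖(a : 𝕏)‖) ∧
      (∀ b : B, ‖vh ⟨b, hBB b.2⟩ - v b‖ ≤ 3 * ε * ‖(b : 𝕏)‖) ∧
      (∀ x : Ahat, W (uh x) = vh ⟨S x, hSAhat x x.2⟩) := by
  classical
  haveI : FiniteDimensional ℝ A := Submodule.finiteDimensional_of_le hAA
  haveI : FiniteDimensional ℝ B := Submodule.finiteDimensional_of_le hBB
  set A' : Submodule ℝ 𝕏 := LinearMap.range u with hA'def
  set B' : Submodule ℝ 𝕏 := LinearMap.range v ⊔ Submodule.map (W : 𝕏 →ₗ[ℝ] 𝕏) A' with hB'def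
  haveI : FiniteDimensional ℝ A' := inferInstance
  haveI : FiniteDimensional ℝ B' := inferInstance
  have huA' : ∀ a : A, u a ∈ A' := fun a => LinearMap.mem_range_self u a
  have hvB' : ∀ b : B, v b ∈ B' := fun b =>
    Submodule.mem_sup_left (LinearMap.mem_range_self v b)
  have hWA' : ∀ x ∈ A', W x ∈ B' := fun x hx =>
    Submodule.mem_sup_right (Submodule.mem_map.mpr ⟨x, hx, rfl⟩)
  have hN₁ := pushN_isNorm (Ahat := Ahat) (A' := A') hε hε2 hu
  have hN₂ := pushN_isNorm (Ahat := Bhat) (A' := B') hε hε2 hv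
  have hSAhat' : ∀ x ∈ Ahat, (S : 𝕏 →ₗ[ℝ] 𝕏) x ∈ Bhat := hSAhat
  have hWA'' : ∀ x ∈ A', (W : 𝕏 →ₗ[ℝ] 𝕏) x ∈ B' := hWA'
  let Sr : Ahat →ₗ[ℝ] Bhat := (S : 𝕏 →ₗ[ℝ] 𝕏).restrict hSAhat'
  let Wr : A' →ₗ[ℝ] B' := (W : 𝕏 →ₗ[ℝ] 𝕏).restrict hWA''
  let T : (Ahat × A') →ₗ[ℝ] (Bhat × B') := Sr.prodMap Wr
  have hSr : ∀ x : Ahat, (Sr x : 𝕏) = S x := fun x => rfl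
  have hWr : ∀ x : A', (Wr x : 𝕏) = W x := fun x => rfl
  have hTfst : ∀ p : Ahat × A', ((T p).1 : 𝕏) = S p.1 := fun p => rfl
  have hTsnd : ∀ p : Ahat × A', ((T p).2 : 𝕏) = W p.2 := fun p => rfl
  have hT : ∀ p : Ahat × A', pushN ε v (T p) ≤ pushN ε u p := by
    intro p
    refine le_pushN hε _ fun a => ?_
    refine (pushN_le hε (T p) ⟨S a, hSA a a.2⟩).trans ?_
    show ‖((T p).1 : 𝕏) - S a‖ + ‖v ⟨S a, hSA a a.2⟩ + ((T p).2 : 𝕏)‖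
        + 2 * ε * ‖(S (a : 𝕏))‖ ≤ pushT ε u p a
    rw [hTfst, hTsnd, ← hW1 a]
    have e1 : ‖S (p.1 : 𝕏) - S (a : 𝕏)‖ ≤ ‖(p.1 : 𝕏) - (a : 𝕏)‖ := by
      rw [← map_sub]
      calc ‖S ((p.1 : 𝕏) - a)‖ ≤ ‖S‖ * ‖(p.1 : 𝕏) - a‖ := S.le_opNorm _
        _ ≤ 1 * ‖(p.1 : 𝕏) - a‖ := by
            apply mul_le_mul_of_nonneg_right hS (norm_nonneg _)
        _ = ‖(p.1 : 𝕏) - a‖ := one_mul _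
    have e2 : ‖W (u a) + W (p.2 : 𝕏)‖ ≤ ‖u a + (p.2 : 𝕏)‖ := by
      rw [← map_add]
      calc ‖W (u a + (p.2 : 𝕏))‖ ≤ ‖W‖ * ‖u a + (p.2 : 𝕏)‖ := W.le_opNorm _
        _ ≤ 1 * ‖u a + (p.2 : 𝕏)‖ := by
            apply mul_le_mul_of_nonneg_right hW.1 (norm_nonneg _)
        _ = ‖u a + (p.2 : 𝕏)‖ := one_mul _
    have e3 : ‖S ((a : 𝕏))‖ ≤ ‖(a : 𝕏)‖ := by
      calc ‖S ((a : 𝕏))‖ ≤ ‖S‖ * ‖(a : 𝕏)‖ := S.le_opNorm _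
        _ ≤ 1 * ‖(a : 𝕏)‖ := by
            apply mul_le_mul_of_nonneg_right hS (norm_nonneg _)
        _ = ‖(a : 𝕏)‖ := one_mul _
    have : 2 * ε * ‖S ((a : 𝕏))‖ ≤ 2 * ε * ‖(a : 𝕏)‖ := by
      apply mul_le_mul_of_nonneg_left e3 (by linarith)
    simp only [pushT]
    linarith
  let A₀ : Submodule ℝ (Ahat × A') := (⊥ : Submodule ℝ Ahat).prod ⊤
  let B₀ : Submodule ℝ (Bhat × B') := (⊥ : Submodule ℝ Bhat).prod ⊤
  let i₀ : A₀ →ₗ[ℝ] 𝕏 := A'.subtype ∘ₗ (LinearMap.snd ℝ Ahat A') ∘ₗ A₀.subtype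
  let j₀ : B₀ →ₗ[ℝ] 𝕏 := B'.subtype ∘ₗ (LinearMap.snd ℝ Bhat B') ∘ₗ B₀.subtype
  have hi₀app : ∀ q : A₀, i₀ q = (((q : Ahat × A').2 : 𝕏)) := fun q => rfl
  have hj₀app : ∀ q : B₀, j₀ q = (((q : Bhat × B').2 : 𝕏)) := fun q => rfl
  have hfstA : ∀ q : A₀, (q : Ahat × A').1 = 0 := fun q => by
    have := q.2
    rw [Submodule.mem_prod] at this
    simpa using this.1
  have hfstB : ∀ q : B₀, (q : Bhat × B').1 = 0 := fun q => by
    have := q.2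
    rw [Submodule.mem_prod] at this
    simpa using this.1
  have hi₀ : ∀ q : A₀, ‖i₀ q‖ = pushN ε u (q : Ahat × A') := by
    intro q
    have hq : (q : Ahat × A') = (0, (q : Ahat × A').2) := Prod.ext (hfstA q) rfl
    rw [hi₀app, hq]
    exact (pushN_snd hε hε2 hu _).symm
  have hj₀ : ∀ q : B₀, ‖j₀ q‖ = pushN ε v (q : Bhat × B') := by
    intro q
    have hq : (q : Bhat × B') = (0, (q : Bhat × B').2) := Prod.ext (hfstB q) rfl
    rw [hj₀app, hq]
    exact (pushN_snd hε hε2 hv _).symm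
  have hT₀ : ∀ p ∈ A₀, T p ∈ B₀ := by
    intro p hp
    rw [Submodule.mem_prod] at hp ⊢
    refine ⟨?_, trivial⟩
    have h1 : p.1 = 0 := by simpa using hp.1
    show Sr p.1 ∈ (⊥ : Submodule ℝ Bhat)
    rw [h1, map_zero]
    exact Submodule.zero_mem _
  have hcommBase : ∀ q : A₀, W (i₀ q) = j₀ ⟨T (q : Ahat × A'), hT₀ q q.2⟩ := fun q => rfl
  obtain ⟨i, j, hib, hjb, hiext, hjext, hijcomm⟩ :=
    gurarii_op_apply hW hN₁ hN₂ T hT A₀ B₀ hT₀ i₀ hi₀ j₀ hj₀ hcommBase hδ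
  refine ⟨i ∘ₗ LinearMap.inl ℝ Ahat A', j ∘ₗ LinearMap.inl ℝ Bhat B', ?_, ?_, ?_, ?_, ?_⟩
  · intro x
    have := hib (x, 0)
    rw [pushN_fst hε hε2 hu x] at this
    exact this
  · intro x
    have := hjb (x, 0)
    rw [pushN_fst hε hε2 hv x] at this
    exact this
  · intro a
    have hmem : ((0 : Ahat), (⟨u a, huA' a⟩ : A')) ∈ A₀ := by
      rw [Submodule.mem_prod]
      exact ⟨Submodule.zero_mem _, trivial⟩
    have h0 : i ((0 : Ahat), (⟨u a, huA' a⟩ : A')) = u a := by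
      have := hiext ⟨((0 : Ahat), (⟨u a, huA' a⟩ : A')), hmem⟩
      rw [this, hi₀app]
    show ‖i ((⟨(a : 𝕏), hAA a.2⟩ : Ahat), (0 : A')) - u a‖ ≤ 3 * ε * ‖(a : 𝕏)‖
    rw [← h0, ← map_sub]
    have hpair : (((⟨(a : 𝕏), hAA a.2⟩ : Ahat), (0 : A'))
        - ((0 : Ahat), (⟨u a, huA' a⟩ : A')))
        = ((⟨(a : 𝕏), hAA a.2⟩ : Ahat), -(⟨u a, huA' a⟩ : A')) := by
      simp [Prod.ext_iff]
    rw [hpair]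
    have hb := (hib ((⟨(a : 𝕏), hAA a.2⟩ : Ahat), -(⟨u a, huA' a⟩ : A'))).2
    have hg := pushN_glue (A' := A') hε hAA huA' a
    have hN1nn := hN₁.nonneg ((⟨(a : 𝕏), hAA a.2⟩ : Ahat), -(⟨u a, huA' a⟩ : A'))
    have hnn := norm_nonneg ((a : 𝕏))
    calc ‖i ((⟨(a : 𝕏), hAA a.2⟩ : Ahat), -(⟨u a, huA' a⟩ : A'))‖
        ≤ (1 + δ) * pushN ε u ((⟨(a : 𝕏), hAA a.2⟩ : Ahat), -(⟨u a, huA' a⟩ : A')) := hb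
      _ ≤ 3 * ε * ‖(a : 𝕏)‖ := by nlinarith
  · intro b
    have hmem : ((0 : Bhat), (⟨v b, hvB' b⟩ : B')) ∈ B₀ := by
      rw [Submodule.mem_prod]
      exact ⟨Submodule.zero_mem _, trivial⟩
    have h0 : j ((0 : Bhat), (⟨v b, hvB' b⟩ : B')) = v b := by
      have := hjext ⟨((0 : Bhat), (⟨v b, hvB' b⟩ : B')), hmem⟩
      rw [this, hj₀app]
    show ‖j ((⟨(b : 𝕏), hBB b.2⟩ : Bhat), (0 : B')) - v b‖ ≤ 3 * ε * ‖(b : 𝕏)‖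
    rw [← h0, ← map_sub]
    have hpair : (((⟨(b : 𝕏), hBB b.2⟩ : Bhat), (0 : B'))
        - ((0 : Bhat), (⟨v b, hvB' b⟩ : B')))
        = ((⟨(b : 𝕏), hBB b.2⟩ : Bhat), -(⟨v b, hvB' b⟩ : B')) := by
      simp [Prod.ext_iff]
    rw [hpair]
    have hb' := (hjb ((⟨(b : 𝕏), hBB b.2⟩ : Bhat), -(⟨v b, hvB' b⟩ : B'))).2
    have hg := pushN_glue (A' := B') hε hBB hvB' b
    have hN2nn := hN₂.nonneg ((⟨(b : 𝕏), hBB b.2⟩ : Bhat), -(⟨v b, hvB' b⟩ : B'))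
    have hnn := norm_nonneg ((b : 𝕏))
    calc ‖j ((⟨(b : 𝕏), hBB b.2⟩ : Bhat), -(⟨v b, hvB' b⟩ : B'))‖
        ≤ (1 + δ) * pushN ε v ((⟨(b : 𝕏), hBB b.2⟩ : Bhat), -(⟨v b, hvB' b⟩ : B')) := hb'
      _ ≤ 3 * ε * ‖(b : 𝕏)‖ := by nlinarith
  · intro x
    show W (i (x, 0)) = j ((⟨S x, hSAhat x x.2⟩ : Bhat), (0 : B'))
    rw [hijcomm (x, (0 : A'))]
    congr 1
    show (Sr x, Wr 0) = ((⟨S x, hSAhat x x.2⟩ : Bhat), (0 : B'))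
    rw [map_zero]
    rfl

/-! ### Part D: the back-and-forth step -/

variable (G Om : 𝕏 →L[ℝ] 𝕏)

/-- The state of the back-and-forth construction. -/
structure BF (ε : ℝ) where
  A : Submodule ℝ 𝕏
  B : Submodule ℝ 𝕏
  finA : FiniteDimensional ℝ A
  finB : FiniteDimensional ℝ B
  u : A →ₗ[ℝ] 𝕏
  v : B →ₗ[ℝ] 𝕏
  hu : EmbB ε u
  hv : EmbB ε v
  hGAB : ∀ x ∈ A, G x ∈ B
  hcomm : ∀ a : A, Om (u a) = v ⟨G a, hGAB a a.2⟩

theorem arith1 {ε δ ny nx : ℝ} (hε2 : ε ≤ 1/8) (hδ : 0 < δ) (hδε : δ ≤ ε)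
    (hnn : 0 ≤ nx) (hny : 0 ≤ ny) (hyn : ny ≤ (1 + δ/4) * nx) :
    3*(δ/2)*ny ≤ 8*ε*nx := by
  have hδ8 : δ ≤ 1/8 := le_trans hδε hε2
  have t1 : δ*nx ≤ ε*nx := mul_le_mul_of_nonneg_right hδε hnn
  have t2 : δ*(δ*nx) ≤ (1/8)*(ε*nx) :=
    mul_le_mul hδ8 t1 (mul_nonneg hδ.le hnn) (by norm_num)
  nlinarith [mul_le_mul_of_nonneg_left hyn (by linarith : (0:ℝ) ≤ 3*(δ/2))]

set_option maxHeartbeats 1000000 in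
theorem step (hG : IsGurariiOp G) (hOm : IsGurariiOp Om) {ε δ : ℝ}
    (hε : 0 < ε) (hε2 : ε ≤ 1/8) (hδ : 0 < δ) (hδε : δ ≤ ε)
    (St : BF G Om ε) (d₁ d₂ c₁ c₂ : 𝕏) :
    ∃ St' : BF G Om δ,
      (∀ x : St.A, ∃ x' : St'.A, ‖(x' : 𝕏) - (x : 𝕏)‖ ≤ 8*ε*‖(x : 𝕏)‖ ∧
        ‖St'.u x' - St.u x‖ ≤ 8*ε*‖(x : 𝕏)‖) ∧
      (∀ y : St.B, ∃ y' : St'.B, ‖(y' : 𝕏) - (y : 𝕏)‖ ≤ 8*ε*‖(y : 𝕏)‖ ∧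
        ‖St'.v y' - St.v y‖ ≤ 8*ε*‖(y : 𝕏)‖) ∧
      (∃ x' : St'.A, ‖(x' : 𝕏) - d₁‖ ≤ 8*ε*‖d₁‖) ∧
      (∃ y' : St'.B, ‖(y' : 𝕏) - d₂‖ ≤ 8*ε*‖d₂‖) ∧
      (∃ x' : St'.A, St'.u x' = c₁) ∧ (∃ y' : St'.B, St'.v y' = c₂) := by
  classical
  haveI := St.finA
  haveI := St.finB
  -- ### forward step
  set Ahat : Submodule ℝ 𝕏 := St.A ⊔ Submodule.span ℝ {d₁} with hAhat
  haveI : FiniteDimensional ℝ Ahat := by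
    apply Submodule.finiteDimensional_sup
  set Bhat : Submodule ℝ 𝕏 := (St.B ⊔ Submodule.map (G : 𝕏 →ₗ[ℝ] 𝕏) Ahat)
      ⊔ Submodule.span ℝ {d₂} with hBhat
  haveI : FiniteDimensional ℝ Bhat := by
    apply Submodule.finiteDimensional_sup
  have hAA : St.A ≤ Ahat := le_sup_left
  have hBB : St.B ≤ Bhat := le_trans le_sup_left le_sup_left
  have hGAhat : ∀ x ∈ Ahat, G x ∈ Bhat := fun x hx =>
    Submodule.mem_sup_left (Submodule.mem_sup_right ⟨x, hx, rfl⟩)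
  have hd₁ : d₁ ∈ Ahat := Submodule.mem_sup_right (Submodule.mem_span_singleton_self d₁)
  have hd₂ : d₂ ∈ Bhat := Submodule.mem_sup_right (Submodule.mem_span_singleton_self d₂)
  have hδ4 : (0:ℝ) < δ/4 := by linarith
  have hδ4' : δ/4 ≤ 1/2 := by linarith
  obtain ⟨u₁, v₁, hu₁, hv₁, hu₁cl, hv₁cl, hcomm₁⟩ :=
    engine hG.1 hOm hε (by linarith : ε ≤ 1/2) hδ4 hδ4' hAA hBB hGAhat St.hGAB
      St.hu St.hv St.hcomm
  -- ### invert
  have hδhalf : (0:ℝ) < δ/2 := by linarith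
  have hδhalf' : δ/2 ≤ 1/2 := by linarith
  obtain ⟨p, hp, pinv₁, pinv₂⟩ := exists_inverse u₁ hδ4 hδ4' hu₁
  obtain ⟨q, hq, qinv₁, qinv₂⟩ := exists_inverse v₁ hδ4 hδ4' hv₁
  have hp' : EmbB (δ/2) p := by
    have : 2*(δ/4) = δ/2 := by ring
    rwa [this] at hp
  have hq' : EmbB (δ/2) q := by
    have : 2*(δ/4) = δ/2 := by ring
    rwa [this] at hq
  have hOmA₁ : ∀ y ∈ (LinearMap.range u₁), Om y ∈ (LinearMap.range v₁) := by
    rintro y ⟨x, rfl⟩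
    rw [hcomm₁ x]
    exact LinearMap.mem_range_self v₁ _
  have hcommInv : ∀ y : (LinearMap.range u₁), G (p y) = q ⟨Om y, hOmA₁ y y.2⟩ := by
    intro y
    obtain ⟨a, hap, hau⟩ := pinv₂ y
    have hOmy : Om (y : 𝕏) = v₁ ⟨G a, hGAhat a a.2⟩ := by rw [← hau]; exact hcomm₁ a
    have hmem : Om (y : 𝕏) ∈ (LinearMap.range v₁) := hOmA₁ y y.2
    have : (⟨Om (y : 𝕏), hmem⟩ : (LinearMap.range v₁))
        = ⟨v₁ ⟨G a, hGAhat a a.2⟩, LinearMap.mem_range_self v₁ _⟩ := Subtype.ext hOmy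
    rw [this, qinv₁, ← hap]
  -- ### backward step
  set Ahat₁ : Submodule ℝ 𝕏 := (LinearMap.range u₁) ⊔ Submodule.span ℝ {c₁} with hAhat₁
  haveI : FiniteDimensional ℝ (LinearMap.range u₁) := inferInstance
  haveI : FiniteDimensional ℝ (LinearMap.range v₁) := inferInstance
  haveI : FiniteDimensional ℝ Ahat₁ := by
    apply Submodule.finiteDimensional_sup
  set Bhat₁ : Submodule ℝ 𝕏 := ((LinearMap.range v₁) ⊔ Submodule.map (Om : 𝕏 →ₗ[ℝ] 𝕏) Ahat₁)
      ⊔ Submodule.span ℝ {c₂} with hBhat₁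
  haveI : FiniteDimensional ℝ Bhat₁ := by
    apply Submodule.finiteDimensional_sup
  have hA₁A : (LinearMap.range u₁) ≤ Ahat₁ := le_sup_left
  have hB₁B : (LinearMap.range v₁) ≤ Bhat₁ := le_trans le_sup_left le_sup_left
  have hOmAhat₁ : ∀ x ∈ Ahat₁, Om x ∈ Bhat₁ := fun x hx =>
    Submodule.mem_sup_left (Submodule.mem_sup_right ⟨x, hx, rfl⟩)
  have hc₁ : c₁ ∈ Ahat₁ := Submodule.mem_sup_right (Submodule.mem_span_singleton_self c₁)
  have hc₂ : c₂ ∈ Bhat₁ := Submodule.mem_sup_right (Submodule.mem_span_singleton_self c₂)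
  obtain ⟨ph, qh, hph, hqh, hphcl, hqhcl, hcomm₂⟩ :=
    engine hOm.1 hG hδhalf hδhalf' hδhalf hδhalf' hA₁A hB₁B hOmAhat₁ hOmA₁ hp' hq' hcommInv
  -- ### invert back
  obtain ⟨u', hu', u'inv₁, u'inv₂⟩ := exists_inverse ph hδhalf hδhalf' hph
  obtain ⟨v', hv', v'inv₁, v'inv₂⟩ := exists_inverse qh hδhalf hδhalf' hqh
  have hu'' : EmbB δ u' := by
    have : 2*(δ/2) = δ := by ring
    rwa [this] at hu'
  have hv'' : EmbB δ v' := by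
    have : 2*(δ/2) = δ := by ring
    rwa [this] at hv'
  have hGr : ∀ z ∈ LinearMap.range ph, G z ∈ LinearMap.range qh := by
    rintro z ⟨x, rfl⟩
    rw [hcomm₂ x]
    exact LinearMap.mem_range_self qh _
  have hcomm' : ∀ z : LinearMap.range ph,
      Om (u' z) = v' ⟨G z, hGr z z.2⟩ := by
    intro z
    obtain ⟨x, hx1, hx2⟩ := u'inv₂ z
    have hGz : G (z : 𝕏) = qh ⟨Om x, hOmAhat₁ x x.2⟩ := by rw [← hx2]; exact hcomm₂ x
    have hmem : G (z : 𝕏) ∈ LinearMap.range qh := hGr z z.2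
    have : (⟨G (z : 𝕏), hmem⟩ : LinearMap.range qh)
        = ⟨qh ⟨Om x, hOmAhat₁ x x.2⟩, LinearMap.mem_range_self qh _⟩ := Subtype.ext hGz
    rw [this, v'inv₁, ← hx1]
  refine ⟨⟨LinearMap.range ph, LinearMap.range qh, inferInstance, inferInstance,
    u', v', hu'', hv'', hGr, hcomm'⟩, ?_, ?_, ?_, ?_, ?_, ?_⟩
  · -- link for A
    intro x
    set xh : Ahat := ⟨x, hAA x.2⟩ with hxh
    set y : (LinearMap.range u₁) := ⟨u₁ xh, LinearMap.mem_range_self u₁ xh⟩ with hy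
    set yh : Ahat₁ := ⟨(y : 𝕏), hA₁A y.2⟩ with hyh
    refine ⟨⟨ph yh, LinearMap.mem_range_self ph yh⟩, ?_, ?_⟩
    · have hcl := hphcl y
      have hpy : p y = (x : 𝕏) := pinv₁ xh
      have hyn : ‖(y : 𝕏)‖ ≤ (1 + δ/4) * ‖(x : 𝕏)‖ := (hu₁ xh).2
      rw [hpy] at hcl
      have hnn := norm_nonneg ((x : 𝕏))
      calc ‖((⟨ph yh, LinearMap.mem_range_self ph yh⟩ : LinearMap.range ph) : 𝕏) - (x : 𝕏)‖
          = ‖ph yh - (x : 𝕏)‖ := rfl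
        _ ≤ 3 * (δ/2) * ‖(y : 𝕏)‖ := hcl
        _ ≤ 8*ε*‖(x : 𝕏)‖ := arith1 hε2 hδ hδε hnn (norm_nonneg _) hyn
    · have : u' ⟨ph yh, LinearMap.mem_range_self ph yh⟩ = (yh : 𝕏) := u'inv₁ yh
      rw [this]
      show ‖u₁ xh - St.u x‖ ≤ 8*ε*‖(x : 𝕏)‖
      have hcl := hu₁cl x
      have hnn := norm_nonneg ((x : 𝕏))
      calc ‖u₁ xh - St.u x‖ = ‖u₁ ⟨x, hAA x.2⟩ - St.u x‖ := rfl
        _ ≤ 3 * ε * ‖(x : 𝕏)‖ := hcl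
        _ ≤ 8*ε*‖(x : 𝕏)‖ := by nlinarith [mul_nonneg hε.le hnn]
  · -- link for B
    intro x
    set xh : Bhat := ⟨x, hBB x.2⟩ with hxh
    set y : (LinearMap.range v₁) := ⟨v₁ xh, LinearMap.mem_range_self v₁ xh⟩ with hy
    set yh : Bhat₁ := ⟨(y : 𝕏), hB₁B y.2⟩ with hyh
    refine ⟨⟨qh yh, LinearMap.mem_range_self qh yh⟩, ?_, ?_⟩
    · have hcl := hqhcl y
      have hpy : q y = (x : 𝕏) := qinv₁ xh
      have hyn : ‖(y : 𝕏)‖ ≤ (1 + δ/4) * ‖(x : 𝕏)‖ := (hv₁ xh).2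
      rw [hpy] at hcl
      have hnn := norm_nonneg ((x : 𝕏))
      calc ‖((⟨qh yh, LinearMap.mem_range_self qh yh⟩ : LinearMap.range qh) : 𝕏) - (x : 𝕏)‖
          = ‖qh yh - (x : 𝕏)‖ := rfl
        _ ≤ 3 * (δ/2) * ‖(y : 𝕏)‖ := hcl
        _ ≤ 8*ε*‖(x : 𝕏)‖ := arith1 hε2 hδ hδε hnn (norm_nonneg _) hyn
    · have : v' ⟨qh yh, LinearMap.mem_range_self qh yh⟩ = (yh : 𝕏) := v'inv₁ yh
      rw [this]
      show ‖v₁ xh - St.v x‖ ≤ 8*ε*‖(x : 𝕏)‖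
      have hcl := hv₁cl x
      have hnn := norm_nonneg ((x : 𝕏))
      calc ‖v₁ xh - St.v x‖ = ‖v₁ ⟨x, hBB x.2⟩ - St.v x‖ := rfl
        _ ≤ 3 * ε * ‖(x : 𝕏)‖ := hcl
        _ ≤ 8*ε*‖(x : 𝕏)‖ := by nlinarith [mul_nonneg hε.le hnn]
  · -- density d₁
    set xh : Ahat := ⟨d₁, hd₁⟩ with hxh
    set y : (LinearMap.range u₁) := ⟨u₁ xh, LinearMap.mem_range_self u₁ xh⟩ with hy
    set yh : Ahat₁ := ⟨(y : 𝕏), hA₁A y.2⟩ with hyh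
    refine ⟨⟨ph yh, LinearMap.mem_range_self ph yh⟩, ?_⟩
    have hcl := hphcl y
    have hpy : p y = d₁ := pinv₁ xh
    have hyn : ‖(y : 𝕏)‖ ≤ (1 + δ/4) * ‖d₁‖ := (hu₁ xh).2
    rw [hpy] at hcl
    have hnn := norm_nonneg d₁
    calc ‖((⟨ph yh, LinearMap.mem_range_self ph yh⟩ : LinearMap.range ph) : 𝕏) - d₁‖
        = ‖ph yh - d₁‖ := rfl
      _ ≤ 3 * (δ/2) * ‖(y : 𝕏)‖ := hcl
      _ ≤ 8*ε*‖d₁‖ := arith1 hε2 hδ hδε hnn (norm_nonneg _) hyn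
  · -- density d₂
    set xh : Bhat := ⟨d₂, hd₂⟩ with hxh
    set y : (LinearMap.range v₁) := ⟨v₁ xh, LinearMap.mem_range_self v₁ xh⟩ with hy
    set yh : Bhat₁ := ⟨(y : 𝕏), hB₁B y.2⟩ with hyh
    refine ⟨⟨qh yh, LinearMap.mem_range_self qh yh⟩, ?_⟩
    have hcl := hqhcl y
    have hpy : q y = d₂ := qinv₁ xh
    have hyn : ‖(y : 𝕏)‖ ≤ (1 + δ/4) * ‖d₂‖ := (hv₁ xh).2
    rw [hpy] at hcl
    have hnn := norm_nonneg d₂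
    calc ‖((⟨qh yh, LinearMap.mem_range_self qh yh⟩ : LinearMap.range qh) : 𝕏) - d₂‖
        = ‖qh yh - d₂‖ := rfl
      _ ≤ 3 * (δ/2) * ‖(y : 𝕏)‖ := hcl
      _ ≤ 8*ε*‖d₂‖ := arith1 hε2 hδ hδε hnn (norm_nonneg _) hyn
  · -- range c₁
    refine ⟨⟨ph ⟨c₁, hc₁⟩, LinearMap.mem_range_self ph _⟩, ?_⟩
    exact u'inv₁ ⟨c₁, hc₁⟩
  · -- range c₂
    refine ⟨⟨qh ⟨c₂, hc₂⟩, LinearMap.mem_range_self qh _⟩, ?_⟩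
    exact v'inv₁ ⟨c₂, hc₂⟩

/-! ### Part E: the limit construction -/

noncomputable def eps (n : ℕ) : ℝ := (1/2 : ℝ)^(n+8)

theorem eps_pos (n : ℕ) : 0 < eps n := by unfold eps; positivity

theorem eps_le (n : ℕ) : eps n ≤ 1/8 := by
  have : ((1:ℝ)/2)^(n+8) ≤ (1/2)^8 :=
    pow_le_pow_of_le_one (by norm_num) (by norm_num) (by omega)
  unfold eps
  norm_num at this ⊢
  linarith

theorem eps_anti {m n : ℕ} (h : m ≤ n) : eps n ≤ eps m :=
  pow_le_pow_of_le_one (by norm_num) (by norm_num) (by omega)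

theorem eps_tendsto : Filter.Tendsto eps Filter.atTop (nhds 0) := by
  have h : Filter.Tendsto (fun n : ℕ => ((1:ℝ)/2)^n) Filter.atTop (nhds 0) :=
    tendsto_pow_atTop_nhds_zero_of_lt_one (by norm_num) (by norm_num)
  exact (Filter.tendsto_add_atTop_iff_nat 8).mpr h

section Limits

variable {A : ℕ → Submodule ℝ 𝕏} {u : ∀ n, (A n) →ₗ[ℝ] 𝕏}

/-- Transport along an index equality. -/
def castMem {A : ℕ → Submodule ℝ 𝕏} {n m : ℕ} (h : n = m) (x : A n) : A m :=
  ⟨(x : 𝕏), h ▸ x.2⟩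

@[simp] theorem castMem_coe {A : ℕ → Submodule ℝ 𝕏} {n m : ℕ} (h : n = m) (x : A n) :
    ((castMem h x : A m) : 𝕏) = (x : 𝕏) := rfl

noncomputable def trace
    (h2 : ∀ n (x : A n), ∃ x' : A (n+1), ‖(x' : 𝕏) - (x : 𝕏)‖ ≤ 8 * eps n * ‖(x : 𝕏)‖ ∧
      ‖u (n+1) x' - u n x‖ ≤ 8 * eps n * ‖(x : 𝕏)‖)
    (n₀ : ℕ) (x₀ : A n₀) : ∀ m, A m := fun m =>
  Nat.rec (motive := fun m => A m)
    (if h : 0 = n₀ then castMem h.symm x₀ else 0)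
    (fun m ih => if h : m + 1 = n₀ then castMem h.symm x₀
      else (h2 m ih).choose) m

variable (h2 : ∀ n (x : A n), ∃ x' : A (n+1), ‖(x' : 𝕏) - (x : 𝕏)‖ ≤ 8 * eps n * ‖(x : 𝕏)‖ ∧
      ‖u (n+1) x' - u n x‖ ≤ 8 * eps n * ‖(x : 𝕏)‖)

theorem trace_zero (n₀ : ℕ) (x₀ : A n₀) :
    trace h2 n₀ x₀ 0 = if h : 0 = n₀ then castMem h.symm x₀ else 0 := rfl

theorem trace_succ_def (n₀ : ℕ) (x₀ : A n₀) (m : ℕ) :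
    trace h2 n₀ x₀ (m+1) = if h : m + 1 = n₀ then castMem h.symm x₀
      else (h2 m (trace h2 n₀ x₀ m)).choose := rfl

theorem trace_lt (n₀ : ℕ) (x₀ : A n₀) : ∀ m, m < n₀ → ((trace h2 n₀ x₀ m : 𝕏)) = 0 := by
  intro m
  induction m with
  | zero =>
    intro hm
    rw [trace_zero, dif_neg (by omega)]
    rfl
  | succ m ih =>
    intro hm
    rw [trace_succ_def, dif_neg (by omega)]
    have hprev : ((trace h2 n₀ x₀ m : 𝕏)) = 0 := ih (by omega)
    have hspec := (h2 m (trace h2 n₀ x₀ m)).choose_spec.1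
    have h8 : (8:ℝ) * eps m * ‖((trace h2 n₀ x₀ m : 𝕏))‖ = 0 := by
      simp only [hprev]; simp
    have h9 : ‖(((h2 m (trace h2 n₀ x₀ m)).choose : 𝕏)) - ((trace h2 n₀ x₀ m : 𝕏))‖
        = ‖(((h2 m (trace h2 n₀ x₀ m)).choose : 𝕏))‖ := by
      simp only [hprev, sub_zero]
    rw [h9] at hspec
    have hc : ‖(((h2 m (trace h2 n₀ x₀ m)).choose : 𝕏))‖ ≤ 0 := by
      linarith [hspec, h8.le]
    exact norm_le_zero_iff.mp hc

theorem trace_self (n₀ : ℕ) (x₀ : A n₀) : ((trace h2 n₀ x₀ n₀ : 𝕏)) = (x₀ : 𝕏) := by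
  cases n₀ with
  | zero => rw [trace_zero, dif_pos rfl]; rfl
  | succ k => rw [trace_succ_def, dif_pos rfl]; rfl

theorem trace_step (n₀ : ℕ) (x₀ : A n₀) (m : ℕ) (hm : n₀ ≤ m) :
    ‖((trace h2 n₀ x₀ (m+1) : 𝕏)) - ((trace h2 n₀ x₀ m : 𝕏))‖
      ≤ 8 * eps m * ‖((trace h2 n₀ x₀ m : 𝕏))‖ ∧
    ‖u (m+1) (trace h2 n₀ x₀ (m+1)) - u m (trace h2 n₀ x₀ m)‖
      ≤ 8 * eps m * ‖((trace h2 n₀ x₀ m : 𝕏))‖ := by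
  rw [trace_succ_def, dif_neg (by omega)]
  exact (h2 m (trace h2 n₀ x₀ m)).choose_spec

theorem trace_norm (n₀ : ℕ) (x₀ : A n₀) : ∀ m, n₀ ≤ m →
    ‖((trace h2 n₀ x₀ m : 𝕏))‖ ≤ (2 - (1/2:ℝ)^(m - n₀)) * ‖(x₀ : 𝕏)‖ := by
  intro m
  induction m with
  | zero =>
    intro hm
    have : n₀ = 0 := by omega
    subst this
    rw [trace_self]
    norm_num
  | succ m ih =>
    intro hm
    rcases Nat.lt_or_ge n₀ (m+1) with hlt | hge
    · have hm' : n₀ ≤ m := by omega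
      have hIH := ih hm'
      have hstep := (trace_step h2 n₀ x₀ m hm').1
      set s : ℝ := (1/2:ℝ)^(m - n₀) with hs
      have hsub : m + 1 - n₀ = (m - n₀) + 1 := by omega
      have hs1 : s ≤ 1 := pow_le_one₀ (by norm_num) (by norm_num)
      have hs0 : 0 < s := by positivity
      have hepsle : 8 * eps m ≤ s / 4 := by
        have h1 : (8:ℝ) * eps m = (1/2:ℝ)^(m+5) := by
          unfold eps
          rw [show m + 8 = (m+5) + 3 by omega, pow_add]
          norm_num
          ring
        have h2' : ((1:ℝ)/2)^(m+5) ≤ (1/2:ℝ)^((m - n₀) + 2) :=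
          pow_le_pow_of_le_one (by norm_num) (by norm_num) (by omega)
        have h3 : ((1:ℝ)/2)^((m - n₀) + 2) = s / 4 := by
          rw [pow_add, hs]
          norm_num
          ring
        rw [h1]
        rw [h3] at h2'
        exact h2'
      have htri : ‖((trace h2 n₀ x₀ (m+1) : 𝕏))‖
          ≤ ‖((trace h2 n₀ x₀ m : 𝕏))‖ + 8 * eps m * ‖((trace h2 n₀ x₀ m : 𝕏))‖ := by
        have := norm_add_le (((trace h2 n₀ x₀ (m+1) : 𝕏)) - ((trace h2 n₀ x₀ m : 𝕏)))
          ((trace h2 n₀ x₀ m : 𝕏))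
        simp only [sub_add_cancel] at this
        linarith
      rw [hsub, pow_succ]
      have hepos := eps_pos m
      have hnn := norm_nonneg ((x₀ : 𝕏))
      have hnn2 := norm_nonneg ((trace h2 n₀ x₀ m : 𝕏))
      nlinarith [mul_le_mul_of_nonneg_left hIH (by linarith : (0:ℝ) ≤ 1 + 8 * eps m),
        mul_le_mul_of_nonneg_right hepsle hnn2,
        mul_le_mul_of_nonneg_left hIH (by linarith : (0:ℝ) ≤ s/4),
        mul_nonneg (mul_nonneg hs0.le hs0.le) hnn, mul_nonneg hs0.le hnn,
        mul_nonneg hepos.le hnn2]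
    · -- n₀ = m + 1
      have : n₀ = m + 1 := by omega
      subst this
      rw [trace_self]
      simp only [Nat.sub_self, pow_zero]
      have := norm_nonneg ((x₀ : 𝕏))
      linarith

theorem trace_norm2 (n₀ : ℕ) (x₀ : A n₀) (m : ℕ) :
    ‖((trace h2 n₀ x₀ m : 𝕏))‖ ≤ 2 * ‖(x₀ : 𝕏)‖ := by
  rcases Nat.lt_or_ge m n₀ with h | h
  · rw [trace_lt h2 n₀ x₀ m h]
    simp only [norm_zero]
    positivity
  · have := trace_norm h2 n₀ x₀ m h
    have hs0 : (0:ℝ) < (1/2:ℝ)^(m - n₀) := by positivity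
    have hnn := norm_nonneg ((x₀ : 𝕏))
    nlinarith

theorem trace_limits [CompleteSpace 𝕏] (n₀ : ℕ) (x₀ : A n₀) :
    ∃ z y : 𝕏, Filter.Tendsto (fun m => ((trace h2 n₀ x₀ m : 𝕏))) Filter.atTop (nhds z) ∧
      Filter.Tendsto (fun m => u m (trace h2 n₀ x₀ m)) Filter.atTop (nhds y) ∧
      ‖z - (x₀ : 𝕏)‖ ≤ 32 * eps n₀ * ‖(x₀ : 𝕏)‖ ∧
      ‖y - u n₀ x₀‖ ≤ 32 * eps n₀ * ‖(x₀ : 𝕏)‖ := by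
  have hC : ∀ k, eps (k + n₀) = eps n₀ * (1/2:ℝ)^k := by
    intro k
    unfold eps
    rw [show k + n₀ + 8 = (n₀ + 8) + k by omega, pow_add]
  set C : ℝ := 16 * eps n₀ * ‖(x₀ : 𝕏)‖ with hCdef
  have hgb : ∀ k, dist ((trace h2 n₀ x₀ (k + n₀) : 𝕏)) ((trace h2 n₀ x₀ (k + 1 + n₀) : 𝕏))
      ≤ C * (1/2:ℝ)^k := by
    intro k
    have hstep := (trace_step h2 n₀ x₀ (k + n₀) (by omega)).1
    have hnb := trace_norm2 h2 n₀ x₀ (k + n₀)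
    rw [dist_eq_norm, norm_sub_rev]
    have : k + 1 + n₀ = (k + n₀) + 1 := by omega
    rw [this]
    calc ‖((trace h2 n₀ x₀ ((k + n₀) + 1) : 𝕏)) - ((trace h2 n₀ x₀ (k + n₀) : 𝕏))‖
        ≤ 8 * eps (k + n₀) * ‖((trace h2 n₀ x₀ (k + n₀) : 𝕏))‖ := hstep
      _ ≤ C * (1/2:ℝ)^k := by
          rw [hC k, hCdef]
          have hepos := eps_pos n₀
          have h12 : (0:ℝ) < (1/2:ℝ)^k := by positivity
          have hnn := norm_nonneg ((x₀ : 𝕏))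
          nlinarith [mul_le_mul_of_nonneg_left hnb
            (by positivity : (0:ℝ) ≤ 8 * (eps n₀ * (1/2:ℝ)^k))]
  have hub : ∀ k, dist (u (k + n₀) (trace h2 n₀ x₀ (k + n₀)))
      (u (k + 1 + n₀) (trace h2 n₀ x₀ (k + 1 + n₀))) ≤ C * (1/2:ℝ)^k := by
    intro k
    have hstep := (trace_step h2 n₀ x₀ (k + n₀) (by omega)).2
    have hnb := trace_norm2 h2 n₀ x₀ (k + n₀)
    rw [dist_eq_norm, norm_sub_rev]
    have : k + 1 + n₀ = (k + n₀) + 1 := by omega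
    rw [this]
    calc ‖u ((k + n₀)+1) (trace h2 n₀ x₀ ((k + n₀)+1)) - u (k + n₀) (trace h2 n₀ x₀ (k + n₀))‖
        ≤ 8 * eps (k + n₀) * ‖((trace h2 n₀ x₀ (k + n₀) : 𝕏))‖ := hstep
      _ ≤ C * (1/2:ℝ)^k := by
          rw [hC k, hCdef]
          have hepos := eps_pos n₀
          have h12 : (0:ℝ) < (1/2:ℝ)^k := by positivity
          have hnn := norm_nonneg ((x₀ : 𝕏))
          nlinarith [mul_le_mul_of_nonneg_left hnb
            (by positivity : (0:ℝ) ≤ 8 * (eps n₀ * (1/2:ℝ)^k))]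
  have hcz : CauchySeq (fun k => ((trace h2 n₀ x₀ (k + n₀) : 𝕏))) :=
    cauchySeq_of_le_geometric (1/2) C (by norm_num) hgb
  have hcy : CauchySeq (fun k => u (k + n₀) (trace h2 n₀ x₀ (k + n₀))) :=
    cauchySeq_of_le_geometric (1/2) C (by norm_num) hub
  obtain ⟨z, hz⟩ := cauchySeq_tendsto_of_complete hcz
  obtain ⟨y, hy⟩ := cauchySeq_tendsto_of_complete hcy
  have hz0 : dist ((trace h2 n₀ x₀ (0 + n₀) : 𝕏)) z ≤ C / (1 - 1/2) :=
    dist_le_of_le_geometric_of_tendsto₀ (1/2) C (by norm_num) hgb hz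
  have hy0 : dist (u (0 + n₀) (trace h2 n₀ x₀ (0 + n₀))) y ≤ C / (1 - 1/2) :=
    dist_le_of_le_geometric_of_tendsto₀ (1/2) C (by norm_num) hub hy
  have h0n : (0 + n₀ : ℕ) = n₀ := Nat.zero_add n₀
  have htr : ((trace h2 n₀ x₀ (0 + n₀) : 𝕏)) = (x₀ : 𝕏) := by
    rw [h0n]
    exact trace_self h2 n₀ x₀
  have htr2 : u (0 + n₀) (trace h2 n₀ x₀ (0 + n₀)) = u n₀ x₀ := by
    rw [h0n]
    have hx : trace h2 n₀ x₀ n₀ = x₀ := Subtype.ext (trace_self h2 n₀ x₀)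
    rw [hx]
  have hCval : C / (1 - 1/2) = 32 * eps n₀ * ‖(x₀ : 𝕏)‖ := by
    rw [hCdef]; ring
  refine ⟨z, y, ?_, ?_, ?_, ?_⟩
  · exact (Filter.tendsto_add_atTop_iff_nat n₀).mp hz
  · exact (Filter.tendsto_add_atTop_iff_nat n₀).mp hy
  · rw [← hCval]
    rw [htr] at hz0
    rw [norm_sub_rev, ← dist_eq_norm]
    exact hz0
  · rw [← hCval]
    rw [htr2] at hy0
    rw [norm_sub_rev, ← dist_eq_norm]
    exact hy0

/-- The approximation relation describing the limit map. -/
def Approx (A : ℕ → Submodule ℝ 𝕏) (u : ∀ n, (A n) →ₗ[ℝ] 𝕏) (z y : 𝕏) : Prop :=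
  ∃ xs : ∀ m, A m, Filter.Tendsto (fun m => ((xs m : 𝕏))) Filter.atTop (nhds z) ∧
    Filter.Tendsto (fun m => u m (xs m)) Filter.atTop (nhds y)

theorem approx_unique (h1 : ∀ n, EmbB (eps n) (u n)) {z y y' : 𝕏}
    (ha : Approx A u z y) (hb : Approx A u z y') : y = y' := by
  obtain ⟨xs, hxz, hxy⟩ := ha
  obtain ⟨xs', hx'z, hx'y⟩ := hb
  have hdiff : Filter.Tendsto (fun m => u m (xs m) - u m (xs' m)) Filter.atTop
      (nhds (y - y')) := hxy.sub hx'y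
  have hnorm : ∀ m, ‖u m (xs m) - u m (xs' m)‖ ≤ 2 * ‖((xs m : 𝕏)) - ((xs' m : 𝕏))‖ := by
    intro m
    have hrw : u m (xs m) - u m (xs' m) = u m (xs m - xs' m) := (map_sub _ _ _).symm
    rw [hrw]
    have hb' := (h1 m (xs m - xs' m)).2
    have he := eps_le m
    have hcoe : ((xs m - xs' m : A m) : 𝕏) = ((xs m : 𝕏)) - ((xs' m : 𝕏)) := rfl
    rw [hcoe] at hb'
    have hnn := norm_nonneg (((xs m : 𝕏)) - ((xs' m : 𝕏)))
    nlinarith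
  have hzz : Filter.Tendsto (fun m => ((xs m : 𝕏)) - ((xs' m : 𝕏))) Filter.atTop (nhds 0) := by
    have := hxz.sub hx'z
    simpa using this
  have hzn : Filter.Tendsto (fun m => 2 * ‖((xs m : 𝕏)) - ((xs' m : 𝕏))‖)
      Filter.atTop (nhds 0) := by
    have := (tendsto_zero_iff_norm_tendsto_zero.mp hzz).const_mul (2:ℝ)
    simpa using this
  have h0 : Filter.Tendsto (fun m => u m (xs m) - u m (xs' m)) Filter.atTop (nhds 0) :=
    squeeze_zero_norm hnorm hzn
  have := tendsto_nhds_unique hdiff h0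
  have := sub_eq_zero.mp this
  exact this

theorem approx_add {z z' y y' : 𝕏} (ha : Approx A u z y) (hb : Approx A u z' y') :
    Approx A u (z + z') (y + y') := by
  obtain ⟨xs, hxz, hxy⟩ := ha
  obtain ⟨xs', hx'z, hx'y⟩ := hb
  exact ⟨fun m => xs m + xs' m, by simpa using hxz.add hx'z,
    by simp only [map_add]; exact hxy.add hx'y⟩

theorem approx_smul (c : ℝ) {z y : 𝕏} (ha : Approx A u z y) : Approx A u (c • z) (c • y) := by
  obtain ⟨xs, hxz, hxy⟩ := ha
  exact ⟨fun m => c • xs m, by simpa using hxz.const_smul c,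
    by simp only [map_smul]; exact hxy.const_smul c⟩

theorem approx_zero : Approx A u 0 0 :=
  ⟨fun _ => 0, by simpa using tendsto_const_nhds, by simpa using tendsto_const_nhds⟩

set_option maxHeartbeats 1000000 in
theorem limit_iso [CompleteSpace 𝕏]
    (h1 : ∀ n, EmbB (eps n) (u n))
    (h2 : ∀ n (x : A n), ∃ x' : A (n+1), ‖(x' : 𝕏) - (x : 𝕏)‖ ≤ 8 * eps n * ‖(x : 𝕏)‖ ∧
      ‖u (n+1) x' - u n x‖ ≤ 8 * eps n * ‖(x : 𝕏)‖)
    (dse : ℕ → 𝕏) (hdse : DenseRange dse)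
    (h3 : ∀ n, ∃ x' : A (n+1),
      ‖(x' : 𝕏) - dse (Nat.unpair n).1‖ ≤ 8 * eps n * ‖dse (Nat.unpair n).1‖)
    (h4 : ∀ n, ∃ x' : A (n+1), u (n+1) x' = dse (Nat.unpair n).1) :
    ∃ U : 𝕏 ≃ₗᵢ[ℝ] 𝕏, (∀ z y, Approx A u z y → U z = y) ∧
      Dense {z : 𝕏 | ∃ y, Approx A u z y} := by
  classical
  have trace_pack : ∀ (n₀ : ℕ) (x₀ : A n₀), ∃ z y, Approx A u z y ∧
      ‖z - (x₀ : 𝕏)‖ ≤ 32 * eps n₀ * ‖(x₀ : 𝕏)‖ ∧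
      ‖y - u n₀ x₀‖ ≤ 32 * eps n₀ * ‖(x₀ : 𝕏)‖ := by
    intro n₀ x₀
    obtain ⟨z, y, hz, hy, hz1, hy1⟩ := trace_limits h2 n₀ x₀
    exact ⟨z, y, ⟨trace h2 n₀ x₀, hz, hy⟩, hz1, hy1⟩
  let D : Submodule ℝ 𝕏 :=
    { carrier := {z | ∃ y, Approx A u z y}
      add_mem' := by
        rintro a b ⟨y1, hy1⟩ ⟨y2, hy2⟩
        exact ⟨y1 + y2, approx_add hy1 hy2⟩
      zero_mem' := ⟨0, approx_zero⟩
      smul_mem' := by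
        rintro c a ⟨y, hy⟩
        exact ⟨c • y, approx_smul c hy⟩ }
  have memD : ∀ z : 𝕏, z ∈ D ↔ ∃ y, Approx A u z y := fun z => Iff.rfl
  let f : D → 𝕏 := fun z => ((memD z).mp z.2).choose
  have hsel : ∀ z : D, Approx A u (z : 𝕏) (f z) := fun z => Exists.choose_spec ((memD z).mp z.2)
  have hf : ∀ (z : D) (y : 𝕏), Approx A u (z : 𝕏) y → f z = y :=
    fun z y hy => approx_unique h1 (hsel z) hy
  let L : D →ₗ[ℝ] 𝕏 :=
    { toFun := f
      map_add' := fun a b => by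
        apply hf
        have := approx_add (hsel a) (hsel b)
        simpa using this
      map_smul' := fun c a => by
        apply hf
        have := approx_smul c (hsel a)
        simpa using this }
  have hLapp : ∀ z : D, L z = f z := fun z => rfl
  have hLiso : ∀ z : D, ‖L z‖ = ‖(z : 𝕏)‖ := by
    intro z
    obtain ⟨xs, hxz, hxy⟩ := hsel z
    have hn1 : Filter.Tendsto (fun m => ‖u m (xs m)‖) Filter.atTop (nhds ‖f z‖) := hxy.norm
    have hxn : Filter.Tendsto (fun m => ‖((xs m : 𝕏))‖) Filter.atTop (nhds ‖(z : 𝕏)‖) :=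
      hxz.norm
    have hlow : Filter.Tendsto (fun m => (1 - eps m) * ‖((xs m : 𝕏))‖)
        Filter.atTop (nhds ‖(z : 𝕏)‖) := by
      have := (((tendsto_const_nhds : Filter.Tendsto (fun _ : ℕ => (1:ℝ)) Filter.atTop (nhds 1))).sub eps_tendsto).mul hxn
      simpa using this
    have hhigh : Filter.Tendsto (fun m => (1 + eps m) * ‖((xs m : 𝕏))‖)
        Filter.atTop (nhds ‖(z : 𝕏)‖) := by
      have := (((tendsto_const_nhds : Filter.Tendsto (fun _ : ℕ => (1:ℝ)) Filter.atTop (nhds 1))).add eps_tendsto).mul hxn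
      simpa using this
    have hle1 : ‖(z : 𝕏)‖ ≤ ‖f z‖ :=
      le_of_tendsto_of_tendsto' hlow hn1 (fun m => (h1 m (xs m)).1)
    have hle2 : ‖f z‖ ≤ ‖(z : 𝕏)‖ :=
      le_of_tendsto_of_tendsto' hn1 hhigh (fun m => (h1 m (xs m)).2)
    rw [hLapp]
    linarith
  let Lc : D →L[ℝ] 𝕏 := LinearMap.mkContinuous L 1 (fun z => by rw [hLiso]; simp)
  have hLcapp : ∀ z : D, Lc z = f z := fun z => rfl
  have hDdense : Dense (D : Set 𝕏) := by
    rw [Metric.dense_iff]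
    intro w r hr
    obtain ⟨k, hk⟩ := hdse.exists_dist_lt w (half_pos hr)
    set d := dse k with hd
    have htend : Filter.Tendsto (fun j => eps j * (72 * (‖d‖ + 1)))
        Filter.atTop (nhds 0) := by
      simpa using eps_tendsto.mul_const (72 * (‖d‖ + 1))
    obtain ⟨j, hj⟩ := (htend.eventually (gt_mem_nhds (half_pos hr))).exists
    set n := Nat.pair k j with hn
    have hnj : eps n ≤ eps j := eps_anti (Nat.right_le_pair k j)
    obtain ⟨x', hx'⟩ := h3 n
    have hx'2 : ‖(x' : 𝕏) - d‖ ≤ 8 * eps n * ‖d‖ := by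
      have : (Nat.unpair n).1 = k := by rw [hn, Nat.unpair_pair]
      rwa [this] at hx'
    obtain ⟨z, y, hzy, hza, _⟩ := trace_pack (n+1) x'
    refine ⟨z, ?_, ⟨y, hzy⟩⟩
    rw [Metric.mem_ball]
    have hd0 := norm_nonneg d
    have he0 := eps_pos n
    have he1 : 8 * eps n ≤ 1 := by
      have := eps_le n
      linarith
    have hx'n : ‖(x' : 𝕏)‖ ≤ 2 * ‖d‖ := by
      have := norm_add_le ((x' : 𝕏) - d) d
      simp only [sub_add_cancel] at this
      nlinarith
    have hza2 : ‖z - (x' : 𝕏)‖ ≤ 64 * eps n * ‖d‖ := by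
      have h32 : 32 * eps (n+1) * ‖(x' : 𝕏)‖ ≤ 64 * eps n * ‖d‖ := by
        have := eps_anti (Nat.le_succ n)
        nlinarith [eps_pos (n+1), norm_nonneg ((x' : 𝕏))]
      linarith [hza]
    have hzd : ‖z - d‖ ≤ 72 * eps n * ‖d‖ := by
      have := norm_add_le (z - (x' : 𝕏)) ((x' : 𝕏) - d)
      simp only [sub_add_sub_cancel] at this
      linarith
    have hzd2 : ‖z - d‖ < r/2 := by
      have hh : 72 * eps n * ‖d‖ ≤ eps j * (72 * (‖d‖ + 1)) := by
        nlinarith [eps_pos j, eps_pos n]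
      linarith
    have : dist z w ≤ dist z d + dist d w := dist_triangle z d w
    rw [dist_eq_norm] at this ⊢
    rw [dist_eq_norm] at this
    have hdw : ‖d - w‖ < r/2 := by
      rw [← dist_eq_norm, dist_comm]
      exact hk
    calc ‖z - w‖ ≤ ‖z - d‖ + ‖d - w‖ := by
          have := norm_add_le (z - d) (d - w)
          simp only [sub_add_sub_cancel] at this
          linarith
      _ < r := by linarith
  have hsub_iso : Isometry ((↑) : D → 𝕏) := isometry_subtype_coe
  have hdr : DenseRange (D.subtypeL : D →L[ℝ] 𝕏) := hDdense.denseRange_val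
  let ext : 𝕏 →L[ℝ] 𝕏 := Lc.extend D.subtypeL
  have hext_eq : ∀ z : D, ext (z : 𝕏) = Lc z := fun z =>
    ContinuousLinearMap.extend_eq Lc (e := D.subtypeL) hdr hsub_iso.isUniformInducing z
  have hext_iso : ∀ x : 𝕏, ‖ext x‖ = ‖x‖ := by
    have hclosed : IsClosed {x : 𝕏 | ‖ext x‖ = ‖x‖} :=
      isClosed_eq (continuous_norm.comp ext.continuous) continuous_norm
    have hsubset : (D : Set 𝕏) ⊆ {x : 𝕏 | ‖ext x‖ = ‖x‖} := by
      intro x hx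
      have h := hext_eq ⟨x, hx⟩
      show ‖ext x‖ = ‖x‖
      rw [h, hLcapp, ← hLapp, hLiso]
    intro x
    have hcl : closure (D : Set 𝕏) ⊆ {x : 𝕏 | ‖ext x‖ = ‖x‖} :=
      closure_minimal hsubset hclosed
    have hx : x ∈ closure (D : Set 𝕏) := by
      rw [hDdense.closure_eq]
      trivial
    exact hcl hx
  let ULI : 𝕏 →ₗᵢ[ℝ] 𝕏 := { toLinearMap := (ext : 𝕏 →ₗ[ℝ] 𝕏), norm_map' := hext_iso }
  have hULI : ∀ x : 𝕏, ULI x = ext x := fun x => rfl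
  have hUval : ∀ (z : 𝕏) (hz : z ∈ D), ULI z = f ⟨z, hz⟩ := by
    intro z hz
    rw [hULI, hext_eq ⟨z, hz⟩, hLcapp]
  have hRdense : Dense (Set.range (⇑ULI)) := by
    rw [Metric.dense_iff]
    intro w r hr
    obtain ⟨k, hk⟩ := hdse.exists_dist_lt w (half_pos hr)
    set d := dse k with hd
    have htend : Filter.Tendsto (fun j => eps j * (64 * (‖d‖ + 1)))
        Filter.atTop (nhds 0) := by
      simpa using eps_tendsto.mul_const (64 * (‖d‖ + 1))
    obtain ⟨j, hj⟩ := (htend.eventually (gt_mem_nhds (half_pos hr))).exists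
    set n := Nat.pair k j with hn
    have hnj : eps n ≤ eps j := eps_anti (Nat.right_le_pair k j)
    obtain ⟨x', hx'⟩ := h4 n
    have hx'2 : u (n+1) x' = d := by
      have : (Nat.unpair n).1 = k := by rw [hn, Nat.unpair_pair]
      rwa [this] at hx'
    obtain ⟨z, y, hzy, _, hya⟩ := trace_pack (n+1) x'
    have hd0 := norm_nonneg d
    have he0 := eps_pos (n+1)
    have he1 : eps (n+1) ≤ 1/8 := eps_le (n+1)
    have hx'n : ‖(x' : 𝕏)‖ ≤ 2 * ‖d‖ := by
      have hlow := (h1 (n+1) x').1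
      rw [hx'2] at hlow
      nlinarith [norm_nonneg ((x' : 𝕏))]
    have hyd : ‖y - d‖ ≤ 64 * eps n * ‖d‖ := by
      have hrw : y - d = y - u (n+1) x' := by rw [hx'2]
      rw [hrw]
      have h32 : 32 * eps (n+1) * ‖(x' : 𝕏)‖ ≤ 64 * eps n * ‖d‖ := by
        have := eps_anti (Nat.le_succ n)
        nlinarith [eps_pos (n+1), norm_nonneg ((x' : 𝕏))]
      linarith [hya]
    have hyw : ‖y - w‖ < r := by
      have hh : 64 * eps n * ‖d‖ ≤ eps j * (64 * (‖d‖ + 1)) := by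
        nlinarith [eps_pos j, eps_pos n]
      have hdw : ‖d - w‖ < r/2 := by
        rw [← dist_eq_norm, dist_comm]
        exact hk
      calc ‖y - w‖ ≤ ‖y - d‖ + ‖d - w‖ := by
            have := norm_add_le (y - d) (d - w)
            simp only [sub_add_sub_cancel] at this
            linarith
        _ < r := by linarith
    have hzD : z ∈ D := ⟨y, hzy⟩
    have hUy : ULI z = y := by
      rw [hUval z hzD]
      exact hf ⟨z, hzD⟩ y hzy
    exact ⟨y, by rw [Metric.mem_ball, dist_eq_norm]; exact hyw, ⟨z, hUy⟩⟩
  have hRclosed : IsClosed (Set.range (⇑ULI)) :=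
    (ULI.isometry.isClosedEmbedding).isClosed_range
  have hsurj : Function.Surjective ULI := by
    intro w
    have hw : w ∈ closure (Set.range (⇑ULI)) := by
      rw [hRdense.closure_eq]
      trivial
    rw [hRclosed.closure_eq] at hw
    exact hw
  refine ⟨LinearIsometryEquiv.ofSurjective ULI hsurj, ?_, ?_⟩
  · intro z y hzy
    have hzD : z ∈ D := ⟨y, hzy⟩
    show ULI z = y
    rw [hUval z hzD]
    exact hf ⟨z, hzD⟩ y hzy
  · exact hDdense

end Limits

/-! ### Part F: assembly -/

section Assembly

variable (G Om : 𝕏 →L[ℝ] 𝕏)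

noncomputable def initBF : BF G Om (eps 0) where
  A := ⊥
  B := ⊥
  finA := inferInstance
  finB := inferInstance
  u := 0
  v := 0
  hu := by
    intro a
    have ha : (a : 𝕏) = 0 := (Submodule.mem_bot ℝ).mp a.2
    simp [ha]
  hv := by
    intro a
    have ha : (a : 𝕏) = 0 := (Submodule.mem_bot ℝ).mp a.2
    simp [ha]
  hGAB := by
    intro x hx
    have hx0 : x = 0 := (Submodule.mem_bot ℝ).mp hx
    simp [hx0]
  hcomm := by intro a; simp

noncomputable def chain (hG : IsGurariiOp G) (hOm : IsGurariiOp Om) (dse : ℕ → 𝕏) :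
    ∀ n : ℕ, BF G Om (eps n) := fun n =>
  Nat.rec (initBF G Om)
    (fun n ih => (step G Om hG hOm (eps_pos n) (eps_le n) (eps_pos (n+1))
      (eps_anti (Nat.le_succ n)) ih (dse (Nat.unpair n).1) (dse (Nat.unpair n).1)
      (dse (Nat.unpair n).1) (dse (Nat.unpair n).1)).choose) n

theorem chain_spec (hG : IsGurariiOp G) (hOm : IsGurariiOp Om) (dse : ℕ → 𝕏) (n : ℕ) :
    (∀ x : (chain G Om hG hOm dse n).A, ∃ x' : (chain G Om hG hOm dse (n+1)).A,
        ‖(x' : 𝕏) - (x : 𝕏)‖ ≤ 8*(eps n)*‖(x : 𝕏)‖ ∧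
        ‖(chain G Om hG hOm dse (n+1)).u x' - (chain G Om hG hOm dse n).u x‖
          ≤ 8*(eps n)*‖(x : 𝕏)‖) ∧
    (∀ y : (chain G Om hG hOm dse n).B, ∃ y' : (chain G Om hG hOm dse (n+1)).B,
        ‖(y' : 𝕏) - (y : 𝕏)‖ ≤ 8*(eps n)*‖(y : 𝕏)‖ ∧
        ‖(chain G Om hG hOm dse (n+1)).v y' - (chain G Om hG hOm dse n).v y‖
          ≤ 8*(eps n)*‖(y : 𝕏)‖) ∧
    (∃ x' : (chain G Om hG hOm dse (n+1)).A,
        ‖(x' : 𝕏) - dse (Nat.unpair n).1‖ ≤ 8*(eps n)*‖dse (Nat.unpair n).1‖) ∧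
    (∃ y' : (chain G Om hG hOm dse (n+1)).B,
        ‖(y' : 𝕏) - dse (Nat.unpair n).1‖ ≤ 8*(eps n)*‖dse (Nat.unpair n).1‖) ∧
    (∃ x' : (chain G Om hG hOm dse (n+1)).A,
        (chain G Om hG hOm dse (n+1)).u x' = dse (Nat.unpair n).1) ∧
    (∃ y' : (chain G Om hG hOm dse (n+1)).B,
        (chain G Om hG hOm dse (n+1)).v y' = dse (Nat.unpair n).1) :=
  (step G Om hG hOm (eps_pos n) (eps_le n) (eps_pos (n+1))
      (eps_anti (Nat.le_succ n)) (chain G Om hG hOm dse n) (dse (Nat.unpair n).1)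
      (dse (Nat.unpair n).1) (dse (Nat.unpair n).1) (dse (Nat.unpair n).1)).choose_spec

set_option maxHeartbeats 1000000 in
theorem hard_direction [CompleteSpace 𝕏] [TopologicalSpace.SeparableSpace 𝕏]
    (hG : IsGurariiOp G) (hOm : IsGurariiOp Om) :
    ∃ I J : 𝕏 ≃ₗᵢ[ℝ] 𝕏, ∀ x : 𝕏, G x = I (Om (J x)) := by
  classical
  haveI : Nonempty 𝕏 := ⟨0⟩
  set dse : ℕ → 𝕏 := TopologicalSpace.denseSeq 𝕏 with hdsedef
  have hdse : DenseRange dse := TopologicalSpace.denseRange_denseSeq 𝕏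
  set C : ∀ n : ℕ, BF G Om (eps n) := chain G Om hG hOm dse with hC
  obtain ⟨U, hU, hUD⟩ := limit_iso (A := fun n => (C n).A) (u := fun n => (C n).u)
    (fun n => (C n).hu) (fun n => (chain_spec G Om hG hOm dse n).1) dse hdse
    (fun n => (chain_spec G Om hG hOm dse n).2.2.1)
    (fun n => (chain_spec G Om hG hOm dse n).2.2.2.2.1)
  obtain ⟨V, hV, _⟩ := limit_iso (A := fun n => (C n).B) (u := fun n => (C n).v)
    (fun n => (C n).hv) (fun n => (chain_spec G Om hG hOm dse n).2.1) dse hdse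
    (fun n => (chain_spec G Om hG hOm dse n).2.2.2.1)
    (fun n => (chain_spec G Om hG hOm dse n).2.2.2.2.2)
  have hIT : ∀ z : 𝕏, Om (U z) = V (G z) := by
    have hsub : {z : 𝕏 | ∃ y, Approx (fun n => (C n).A) (fun n => (C n).u) z y}
        ⊆ {z : 𝕏 | Om (U z) = V (G z)} := by
      rintro z ⟨y, hzy⟩
      obtain ⟨xs, hxz, hxy⟩ := hzy
      have hU' : U z = y := hU z y ⟨xs, hxz, hxy⟩
      have happ : Approx (fun n => (C n).B) (fun n => (C n).v) (G z) (Om y) := by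
        refine ⟨fun m => ⟨G ((xs m : 𝕏)), (C m).hGAB _ (xs m).2⟩, ?_, ?_⟩
        · exact (G.continuous.tendsto z).comp hxz
        · have hfun : (fun m => (C m).v ⟨G ((xs m : 𝕏)), (C m).hGAB _ (xs m).2⟩)
              = (fun m => Om ((C m).u (xs m))) :=
            funext (fun m => ((C m).hcomm (xs m)).symm)
          rw [hfun]
          exact (Om.continuous.tendsto y).comp hxy
      have hV' : V (G z) = Om y := hV _ _ happ
      show Om (U z) = V (G z)
      rw [hU', hV']
    have hclosed : IsClosed {z : 𝕏 | Om (U z) = V (G z)} := by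
      apply isClosed_eq
      · exact Om.continuous.comp U.continuous
      · exact V.continuous.comp G.continuous
    intro z
    have hz : z ∈ closure {z : 𝕏 | ∃ y, Approx (fun n => (C n).A) (fun n => (C n).u) z y} := by
      rw [hUD.closure_eq]
      trivial
    exact closure_minimal hsub hclosed hz
  refine ⟨V.symm, U, ?_⟩
  intro x
  calc G x = V.symm (V (G x)) := (V.symm_apply_apply _).symm
    _ = V.symm (Om (U x)) := by rw [hIT x]

theorem easy_direction (hOm : IsGurariiOp Om) (I J : 𝕏 ≃ₗᵢ[ℝ] 𝕏) (G : 𝕏 →L[ℝ] 𝕏)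
    (hG : ∀ x : 𝕏, G x = I (Om (J x))) : IsGurariiOp G := by
  constructor
  · apply ContinuousLinearMap.opNorm_le_bound _ zero_le_one
    intro x
    rw [hG x, one_mul]
    calc ‖I (Om (J x))‖ = ‖Om (J x)‖ := I.norm_map _
      _ ≤ ‖Om‖ * ‖J x‖ := Om.le_opNorm _
      _ ≤ 1 * ‖J x‖ := mul_le_mul_of_nonneg_right hOm.1 (norm_nonneg _)
      _ = ‖x‖ := by rw [one_mul, J.norm_map]
  · intro ε hε Aa Bb _ _ _ _ _ _ T hT A₀ B₀ hT₀ i₀ j₀ hcomm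
    let i₀' : A₀ →ₗᵢ[ℝ] 𝕏 := J.toLinearIsometry.comp i₀
    let j₀' : B₀ →ₗᵢ[ℝ] 𝕏 := I.symm.toLinearIsometry.comp j₀
    have hcomm' : ∀ a : A₀, Om (i₀' a) = j₀' ⟨T a, hT₀ a a.2⟩ := by
      intro a
      show Om (J (i₀ a)) = I.symm (j₀ ⟨T a, hT₀ a a.2⟩)
      have h1 : G (i₀ a) = I (Om (J (i₀ a))) := hG _
      have h2 := hcomm a
      have h3 : I (Om (J (i₀ a))) = j₀ ⟨T a, hT₀ a a.2⟩ := by rw [← h1, h2]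
      rw [← h3, I.symm_apply_apply]
    obtain ⟨i', j', hi', hj', hi'ext, hj'ext, hcomm2⟩ :=
      hOm.2 ε hε Aa Bb T hT A₀ B₀ hT₀ i₀' j₀' hcomm'
    refine ⟨J.symm.toLinearIsometry.toContinuousLinearMap.comp i',
      I.toLinearIsometry.toContinuousLinearMap.comp j', ?_, ?_, ?_, ?_, ?_⟩
    · constructor
      · intro a b hab
        simp only [ContinuousLinearMap.coe_comp', Function.comp_apply,
          LinearIsometry.coe_toContinuousLinearMap] at hab
        exact hi'.1 (J.symm.toLinearIsometry.injective hab)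
      · intro x hx
        have := hi'.2 x hx
        simpa [J.symm.toLinearIsometry.norm_map] using this
    · constructor
      · intro a b hab
        simp only [ContinuousLinearMap.coe_comp', Function.comp_apply,
          LinearIsometry.coe_toContinuousLinearMap] at hab
        exact hj'.1 (I.toLinearIsometry.injective hab)
      · intro x hx
        have := hj'.2 x hx
        simpa [I.toLinearIsometry.norm_map] using this
    · intro a
      show J.symm (i' a) = i₀ a
      rw [hi'ext a]
      show J.symm (J (i₀ a)) = i₀ a
      exact J.symm_apply_apply _
    · intro b
      show I (j' b) = j₀ b
      rw [hj'ext b]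
      show I (I.symm (j₀ b)) = j₀ b
      exact I.apply_symm_apply _
    · intro a
      show G (J.symm (i' a)) = I (j' (T a))
      rw [hG (J.symm (i' a)), J.apply_symm_apply, hcomm2 a]

end Assembly

end GurariiProof

/-- If `Ω` is a Gurarii operator on a Gurarii space `𝕏`, then the Gurarii operators on
`𝕏` are exactly the operators of the form `I ∘ Ω ∘ J` with `I, J` bijective linear
isometries of `𝕏`. -/
theorem gurarii_ops_eq_orbit (𝕏 : Type*) [NormedAddCommGroup 𝕏] [NormedSpace ℝ 𝕏]
    (h𝕏 : IsGurariiSpace 𝕏) (Ω : 𝕏 →L[ℝ] 𝕏) (hΩ : IsGurariiOp Ω) :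
    {G : 𝕏 →L[ℝ] 𝕏 | IsGurariiOp G} =
      {G : 𝕏 →L[ℝ] 𝕏 | ∃ I J : 𝕏 ≃ₗᵢ[ℝ] 𝕏, ∀ x : 𝕏, G x = I (Ω (J x))} := by
  haveI := h𝕏.1
  haveI := h𝕏.2.1
  ext G
  simp only [Set.mem_setOf_eq]
  constructor
  · intro hG
    exact GurariiProof.hard_direction G Ω hG hΩ
  · rintro ⟨I, J, hIJ⟩
    exact GurariiProof.easy_direction Ω hΩ I J G hIJ
end
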